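/- arXiv:1810.11987 — 5 statements merged into one kernel-verified Lean document; each statement's English description precedes it below -/
import Mathlib

section
/- Assume V is a finite-dimensional normed vector space, φ is an almost flow, and T is small enough that the uniform control theorem holds with constants K_T, L_T. Let r ∈ [0,T] and a ∈ V, and let (π_n)_{n∈ℕ} be an increasing (nested) sequence of partitions of [0,T] with |π_n| → 0 and ∪_n π_n dense in [0,T]. Then the family of paths {t ∈ [r,T] ↦ φ^{π_n}_{t,r}(a)}_{n∈ℕ} is uniformly bounded and uniformly equicontinuous; consequently it admits a subsequence converging uniformly on [r,T], so the set S_φ(r,a) of such limits is non-empty. -/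
open Set

noncomputable section

/-- Composition of a two-parameter family of maps along a list of intermediate times:
`compAlong φ s [u₁,…,u_k] t = φ_{t,u_k} ∘ ⋯ ∘ φ_{u₂,u₁} ∘ φ_{u₁,s}`. -/
def compAlong {V : Type*} (φ : ℝ → ℝ → V → V) : ℝ → List ℝ → ℝ → V → V
  | s, [], t => φ t s
  | s, u :: us, t => compAlong φ u us t ∘ φ u s

/-- The iterated (almost) flow `φ^π_{t,s}`: the composition of `φ` along the
points of the partition `π` lying strictly between `s` and `t`. -/
def iterFlow {V : Type*} (φ : ℝ → ℝ → V → V) (π : List ℝ) (t s : ℝ) : V → V :=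
  compAlong φ s (π.filter fun u => decide (s < u) && decide (u < t)) t

/-- A partition of `[0,T]`, as a strictly increasing list of points containing `0` and `T`. -/
structure ListPartition (T : ℝ) where
  points : List ℝ
  sorted : points.Pairwise (· < ·)
  zero_mem : 0 ∈ points
  top_mem : T ∈ points
  mem_Icc : ∀ u ∈ points, u ∈ Set.Icc 0 T

/-- The mesh of a partition: the largest gap between successive points. -/
def ListPartition.mesh {T : ℝ} (π : ListPartition T) : ℝ :=
  ((π.points.zip π.points.tail).map fun p => p.2 - p.1).foldr max 0

/-- A control: a super-additive family `ω` vanishing on the diagonal and small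
near the diagonal. -/
structure IsControl (T : ℝ) (ω : ℝ → ℝ → ℝ) : Prop where
  nonneg : ∀ ⦃s t : ℝ⦄, 0 ≤ s → s ≤ t → t ≤ T → 0 ≤ ω s t
  superadd : ∀ ⦃r s t : ℝ⦄, 0 ≤ r → r ≤ s → s ≤ t → t ≤ T → ω r s + ω s t ≤ ω r t
  diag : ∀ ⦃s : ℝ⦄, 0 ≤ s → s ≤ T → ω s s = 0
  small : ∀ ε > (0:ℝ), ∃ h > (0:ℝ), ∀ ⦃s t : ℝ⦄, 0 ≤ s → s ≤ t → t ≤ T → t - s ≤ h → ω s t < ε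

/-- A remainder: a continuous increasing function `ϖ` with `2ϖ(x/2) ≤ κϖ(x)`. -/
structure IsRemainder (κ : ℝ) (ϖ : ℝ → ℝ) : Prop where
  contOn : ContinuousOn ϖ (Set.Ici 0)
  strictMonoOn : StrictMonoOn ϖ (Set.Ici 0)
  nonneg : ∀ x, 0 ≤ x → 0 ≤ ϖ x
  doubling : ∀ x, 0 < x → 2 * ϖ (x / 2) ≤ κ * ϖ x

/-- An almost flow on `[0,T]` with data `(ω, ϖ, N, γ, δT, η)`. -/
structure IsAlmostFlow {V : Type*} [MetricSpace V] (T : ℝ) (ω : ℝ → ℝ → ℝ)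
    (ϖ : ℝ → ℝ) (N : V → ℝ) (γ δT : ℝ) (η : ℝ → ℝ) (φ : ℝ → ℝ → V → V) : Prop where
  cont : ∀ a : V, ContinuousOn (fun p : ℝ × ℝ => φ p.2 p.1 a)
    {p : ℝ × ℝ | 0 ≤ p.1 ∧ p.1 ≤ p.2 ∧ p.2 ≤ T}
  flow_id : ∀ ⦃t : ℝ⦄, 0 ≤ t → t ≤ T → ∀ a, φ t t a = a
  close : ∀ ⦃s t : ℝ⦄, 0 ≤ s → s ≤ t → t ≤ T → ∀ a, dist (φ t s a) a ≤ δT * N a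
  lip : ∀ ⦃s t : ℝ⦄, 0 ≤ s → s ≤ t → t ≤ T → ∀ a b,
    dist (φ t s a) (φ t s b) ≤ (1 + δT) * dist a b + η (ω s t) * dist a b ^ γ
  almost : ∀ ⦃r s t : ℝ⦄, 0 ≤ r → r ≤ s → s ≤ t → t ≤ T → ∀ a,
    dist (φ t s (φ s r a)) (φ t r a) ≤ N a * ϖ (ω r t)


namespace SF3

lemma compAlong_append {V : Type*} (φ : ℝ → ℝ → V → V) (A : List ℝ) :
    ∀ (s : ℝ) (u t : ℝ) (B : List ℝ),
      compAlong φ s (A ++ u :: B) t = compAlong φ u B t ∘ compAlong φ s A u := by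
  induction A with
  | nil => intro s u t B; rfl
  | cons x xs ih =>
    intro s u t B
    show compAlong φ x (xs ++ u :: B) t ∘ φ x s = _
    rw [ih x u t B]; rfl

lemma compAlong_concat {V : Type*} (φ : ℝ → ℝ → V → V) (A : List ℝ) (s w t : ℝ) :
    compAlong φ s (A ++ [w]) t = φ t w ∘ compAlong φ s A w :=
  compAlong_append φ A s w t []

lemma bool_pred_eq {r t r' t' : ℝ} (x : ℝ) (h : (r < x ∧ x < t) ↔ (r' < x ∧ x < t')) :
    (decide (r < x) && decide (x < t)) = (decide (r' < x) && decide (x < t')) := by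
  rcases Classical.em (r < x) with h1 | h1 <;> rcases Classical.em (x < t) with h2 | h2 <;>
    rcases Classical.em (r' < x) with h3 | h3 <;> rcases Classical.em (x < t') with h4 | h4 <;>
      simp only [h1, h2, h3, h4, decide_true, decide_false, Bool.and_self, Bool.and_false,
        Bool.false_and, Bool.and_true, Bool.true_and] <;> tauto

lemma filter_split (l : List ℝ) (hl : l.Pairwise (· < ·)) {u r t : ℝ} (hu : u ∈ l)
    (hru : r < u) (hut : u < t) :
    (l.filter fun p => decide (r < p) && decide (p < t)) =
      (l.filter fun p => decide (r < p) && decide (p < u)) ++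
        u :: (l.filter fun p => decide (u < p) && decide (p < t)) := by
  induction l with
  | nil => simp at hu
  | cons x xs ih =>
    rw [List.pairwise_cons] at hl
    obtain ⟨hx, hxs⟩ := hl
    rcases List.mem_cons.mp hu with rfl | hu
    · have h1 : (xs.filter fun p => decide (r < p) && decide (p < u)) = [] :=
        List.filter_eq_nil_iff.mpr fun y hy => by
          simp [not_lt.mpr (le_of_lt (hx y hy))]
      have h2 : (xs.filter fun p => decide (r < p) && decide (p < t)) =
          xs.filter fun p => decide (u < p) && decide (p < t) :=
        List.filter_congr fun y hy => bool_pred_eq y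
          ⟨fun hc => ⟨hx y hy, hc.2⟩, fun hc => ⟨hru.trans (hx y hy), hc.2⟩⟩
      rw [List.filter_cons_of_pos (by simp [hru, hut]),
        List.filter_cons_of_neg (by simp [lt_irrefl]),
        List.filter_cons_of_neg (by simp [lt_irrefl]), h1, h2]
      simp
    · have hxu : x < u := hx u hu
      by_cases hrx : r < x
      · rw [List.filter_cons_of_pos (by simp [hrx, hxu.trans hut]),
          List.filter_cons_of_pos (by simp [hrx, hxu]),
          List.filter_cons_of_neg (by simp [not_lt.mpr hxu.le]), ih hxs hu]
        simp
      · rw [List.filter_cons_of_neg (by simp [hrx]),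
          List.filter_cons_of_neg (by simp [hrx]),
          List.filter_cons_of_neg (by simp [not_lt.mpr hxu.le]), ih hxs hu]

lemma filter_congr_gap (l : List ℝ) {r s x : ℝ}
    (h : ∀ p ∈ l, r < p → (p < s ↔ p < x)) :
    (l.filter fun p => decide (r < p) && decide (p < s)) =
      l.filter fun p => decide (r < p) && decide (p < x) :=
  List.filter_congr fun p hp => bool_pred_eq p
    ⟨fun hc => ⟨hc.1, (h p hp hc.1).mp hc.2⟩, fun hc => ⟨hc.1, (h p hp hc.1).mpr hc.2⟩⟩

lemma filter_last (l : List ℝ) (hl : l.Pairwise (· < ·)) {r s w : ℝ} {A' : List ℝ}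
    (hA : (l.filter fun p => decide (r < p) && decide (p < s)) = A' ++ [w]) :
    (l.filter fun p => decide (r < p) && decide (p < w)) = A' := by
  have hw : w ∈ l.filter fun p => decide (r < p) && decide (p < s) := by
    rw [hA]; simp
  have hws : w < s := by
    have := (List.mem_filter.mp hw).2
    simp only [Bool.and_eq_true, decide_eq_true_eq] at this
    exact this.2
  have hsorted : (l.filter fun p => decide (r < p) && decide (p < s)).Pairwise (· < ·) :=
    List.Pairwise.sublist List.filter_sublist hl
  rw [hA] at hsorted
  have hA'w : ∀ y ∈ A', y < w := fun y hy =>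
    (List.pairwise_append.mp hsorted).2.2 y hy w (by simp)
  have : (l.filter fun p => decide (r < p) && decide (p < w)) =
      (l.filter fun p => decide (r < p) && decide (p < s)).filter fun p => decide (p < w) := by
    rw [List.filter_filter]
    refine List.filter_congr fun p hp => ?_
    have h3 : p < w → p < s := fun h => h.trans hws
    rcases Classical.em (r < p) with h1 | h1 <;> rcases Classical.em (p < w) with h2 | h2 <;>
      simp [h1, h2, h3]
  rw [this, hA, List.filter_append]
  rw [List.filter_eq_self.mpr fun y hy => by simp [hA'w y hy]]
  simp [lt_irrefl]

lemma iterFlow_split {V : Type*} (φ : ℝ → ℝ → V → V) (l : List ℝ) (hl : l.Pairwise (· < ·))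
    {u r t : ℝ} (hu : u ∈ l) (hru : r < u) (hut : u < t) (a : V) :
    iterFlow φ l t r a = iterFlow φ l t u (iterFlow φ l u r a) := by
  unfold iterFlow
  rw [filter_split l hl hu hru hut, compAlong_append]
  rfl

lemma exists_min_list {l : List ℝ} {Q : ℝ → Prop} (h : ∃ p ∈ l, Q p) :
    ∃ v ∈ l, Q v ∧ ∀ p ∈ l, Q p → v ≤ p := by
  obtain ⟨p, hp, hQ⟩ := h
  have hfin : {x | x ∈ l ∧ Q x}.Finite := l.finite_toSet.subset fun x hx => hx.1
  obtain ⟨v, hv, hmin⟩ := Set.exists_min_image _ id hfin ⟨p, hp, hQ⟩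
  exact ⟨v, hv.1, hv.2, fun q hq hQq => hmin q ⟨hq, hQq⟩⟩

end SF3

/-- Proposition 1: `S_φ(r,a) ≠ ∅`.
Assume `V` is finite-dimensional, `φ` is an almost flow, and the uniform control theorem
holds with constants `K, L`. For `r ∈ [0,T]`, `a ∈ V` and a nested sequence of partitions
`π_n` with mesh tending to `0` and dense union, the family of paths
`t ↦ φ^{π_n}_{t,r}(a)` on `[r,T]` is uniformly bounded and uniformly equicontinuous,
and some subsequence converges uniformly on `[r,T]`: the set `S_φ(r,a)` of such limits
is non-empty. -/
theorem statement3 {V : Type*} [NormedAddCommGroup V] [NormedSpace ℝ V]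
    [FiniteDimensional ℝ V]
    (T : ℝ) (hT : 0 < T)
    (ω : ℝ → ℝ → ℝ) (hω : IsControl T ω)
    (κ : ℝ) (hκ : κ ∈ Set.Ioo (0:ℝ) 1)
    (ϖ : ℝ → ℝ) (hϖ : IsRemainder κ ϖ)
    (γ : ℝ) (hγ : γ ∈ Set.Ioc (0:ℝ) 1)
    (N : V → ℝ) (hN1 : ∀ a, 1 ≤ N a)
    (CN : ℝ) (hNHolder : ∀ a b, |N a - N b| ≤ CN * dist a b ^ γ)
    (δT : ℝ) (hδT : 0 ≤ δT)
    (η : ℝ → ℝ) (hηmono : MonotoneOn η (Set.Ici 0)) (hηnonneg : ∀ x, 0 ≤ x → 0 ≤ η x)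
    (hη : ∀ ⦃s t : ℝ⦄, 0 ≤ s → s ≤ t → t ≤ T →
      η (ω s t) * ϖ (ω s t) ^ γ ≤ δT * ϖ (ω s t))
    (φ : ℝ → ℝ → V → V) (hφ : IsAlmostFlow T ω ϖ N γ δT η φ)
    (K L : ℝ) (hK1 : 1 ≤ K) (hL1 : 1 ≤ L)
    (hUC : ∀ π : ListPartition T, ∀ ⦃s t : ℝ⦄, 0 ≤ s → s ≤ t → t ≤ T → ∀ a : V,
      dist (iterFlow φ π.points t s a) (φ t s a) ≤ L * N a * ϖ (ω s t) ∧
      N (iterFlow φ π.points t s a) ≤ K * N a)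
    (r : ℝ) (hr : r ∈ Set.Icc 0 T) (a : V)
    (π : ℕ → ListPartition T)
    (hnested : ∀ n, (π n).points ⊆ (π (n + 1)).points)
    (hmesh : Filter.Tendsto (fun n => (π n).mesh) Filter.atTop (nhds 0))
    (hdense : ∀ x ∈ Set.Icc (0:ℝ) T, x ∈ closure (⋃ n, {u : ℝ | u ∈ (π n).points})) :
    (∃ M : ℝ, ∀ n : ℕ, ∀ t ∈ Set.Icc r T, ‖iterFlow φ (π n).points t r a‖ ≤ M) ∧
    (∀ ε > (0:ℝ), ∃ h > (0:ℝ), ∀ n : ℕ, ∀ ⦃s t : ℝ⦄, r ≤ s → s ≤ t → t ≤ T → t - s ≤ h →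
      ‖iterFlow φ (π n).points t r a - iterFlow φ (π n).points s r a‖ ≤ ε) ∧
    (∃ ns : ℕ → ℕ, StrictMono ns ∧ ∃ y : ℝ → V,
      TendstoUniformlyOn (fun k (t : ℝ) => iterFlow φ (π (ns k)).points t r a) y
        Filter.atTop (Set.Icc r T)) := by
  obtain ⟨hr0, hrT⟩ := hr
  obtain ⟨hγ0, hγ1⟩ := hγ
  have hNa : (0:ℝ) < N a := lt_of_lt_of_le one_pos (hN1 a)
  -- the uniform sequence of paths
  set F : ℕ → ℝ → V := fun n t => iterFlow φ (π n).points t r a with hF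
  -- ω is bounded by ω 0 T
  have hωle : ∀ ⦃s t : ℝ⦄, 0 ≤ s → s ≤ t → t ≤ T → ω s t ≤ ω 0 T := by
    intro s t h0 h1 h2
    have i1 := hω.superadd (le_refl 0) h0 h1 h2
    have i2 := hω.superadd (le_refl 0) (h0.trans h1) h2 (le_refl T)
    have i3 := hω.nonneg (le_refl 0) h0 (h1.trans h2)
    have i4 := hω.nonneg (h0.trans h1) h2 (le_refl T)
    linarith
  have hωTnn : 0 ≤ ω 0 T := hω.nonneg le_rfl hT.le le_rfl
  -- ϖ (0) = 0
  have hϖ0 : ϖ 0 = 0 := by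
    have hcw : Filter.Tendsto ϖ (nhdsWithin 0 (Set.Ici 0)) (nhds (ϖ 0)) :=
      hϖ.contOn 0 Set.self_mem_Ici
    have hhalf : Filter.Tendsto (fun x : ℝ => x / 2) (nhdsWithin 0 (Set.Ioi 0))
        (nhdsWithin 0 (Set.Ici 0)) := by
      have hbase : Filter.Tendsto (fun x : ℝ => x / 2) (nhdsWithin 0 (Set.Ioi 0)) (nhds 0) := by
        have h' : Filter.Tendsto (fun x : ℝ => x / 2) (nhds 0) (nhds (0 / 2)) :=
          Filter.Tendsto.div_const Filter.tendsto_id 2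
        have := h'.mono_left (nhdsWithin_le_nhds (s := Set.Ioi (0:ℝ)) (a := (0:ℝ)))
        simpa using this
      rw [tendsto_nhdsWithin_iff]
      refine ⟨hbase, ?_⟩
      filter_upwards [self_mem_nhdsWithin] with x hx
      exact Set.mem_Ici.mpr (by have := Set.mem_Ioi.mp hx; linarith)
    have hA : Filter.Tendsto (fun x : ℝ => 2 * ϖ (x / 2)) (nhdsWithin 0 (Set.Ioi 0))
        (nhds (2 * ϖ 0)) := (hcw.comp hhalf).const_mul 2
    have hB : Filter.Tendsto (fun x : ℝ => κ * ϖ x) (nhdsWithin 0 (Set.Ioi 0))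
        (nhds (κ * ϖ 0)) :=
      (hcw.mono_left (nhdsWithin_mono 0 Set.Ioi_subset_Ici_self)).const_mul κ
    have hle : 2 * ϖ 0 ≤ κ * ϖ 0 := by
      refine le_of_tendsto_of_tendsto hA hB ?_
      filter_upwards [self_mem_nhdsWithin] with x hx
      exact hϖ.doubling x hx
    have hnn : 0 ≤ ϖ 0 := hϖ.nonneg 0 le_rfl
    nlinarith [hκ.1, hκ.2]
  -- uniform bound
  set M : ℝ := ‖a‖ + δT * N a + L * N a * ϖ (ω 0 T) with hM
  have haM : ‖a‖ ≤ M := by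
    have h0 := hϖ.nonneg _ hωTnn
    have h1 : 0 ≤ δT * N a := mul_nonneg hδT hNa.le
    have h2 : 0 ≤ L * N a * ϖ (ω 0 T) :=
      mul_nonneg (mul_nonneg (by linarith) hNa.le) h0
    simp only [hM]; linarith
  have hboundF : ∀ (n : ℕ) ⦃t : ℝ⦄, r ≤ t → t ≤ T → ‖F n t‖ ≤ M := by
    intro n t h1 h2
    have h0t : 0 ≤ t := hr0.trans h1
    obtain ⟨hd, -⟩ := hUC (π n) hr0 h1 h2 a
    have hcl := hφ.close hr0 h1 h2 a
    have hϖle : ϖ (ω r t) ≤ ϖ (ω 0 T) := by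
      rcases eq_or_lt_of_le (hωle hr0 h1 h2) with he | hlt
      · rw [he]
      · exact le_of_lt (hϖ.strictMonoOn (hω.nonneg hr0 h1 h2) hωTnn hlt)
    have h3 : dist (F n t) a ≤ δT * N a + L * N a * ϖ (ω 0 T) := by
      have := dist_triangle (F n t) (φ t r a) a
      have hLN : 0 ≤ L * N a := mul_nonneg (by linarith) hNa.le
      have := mul_le_mul_of_nonneg_left hϖle hLN
      simp only [hF] at *
      linarith
    have h5 : ‖F n t‖ ≤ ‖F n t - a‖ + ‖a‖ := by
      have h4 := norm_add_le (F n t - a) a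
      simpa using h4
    rw [← dist_eq_norm] at h5
    simp only [hM]
    linarith
  -- uniform continuity of φ on the compact set
  have hΔ : ∀ ε > (0:ℝ), ∃ h > (0:ℝ), ∀ (w s' t' : ℝ) (b : V), 0 ≤ w → w ≤ s' → w ≤ t' →
      s' ≤ T → t' ≤ T → |s' - t'| ≤ h → ‖b‖ ≤ M → dist (φ s' w b) (φ t' w b) ≤ ε := by
    set Φ : (ℝ × ℝ) × V → V := fun q => φ q.1.2 q.1.1 q.2 with hΦdef
    set S : Set (ℝ × ℝ) := {p : ℝ × ℝ | 0 ≤ p.1 ∧ p.1 ≤ p.2 ∧ p.2 ≤ T} with hSdef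
    set C : Set ((ℝ × ℝ) × V) := S ×ˢ Metric.closedBall (0 : V) M with hCdef
    have hScomp : IsCompact S := by
      have hclosed : IsClosed S := by
        have h1 : IsClosed {p : ℝ × ℝ | 0 ≤ p.1} := isClosed_le continuous_const continuous_fst
        have h2 : IsClosed {p : ℝ × ℝ | p.1 ≤ p.2} := isClosed_le continuous_fst continuous_snd
        have h3 : IsClosed {p : ℝ × ℝ | p.2 ≤ T} := isClosed_le continuous_snd continuous_const
        exact (h1.inter (h2.inter h3)).mono (by rfl)
      refine IsCompact.of_isClosed_subset (IsCompact.prod isCompact_Icc isCompact_Icc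
        (s := Set.Icc (0:ℝ) T) (t := Set.Icc (0:ℝ) T)) hclosed ?_
      rintro ⟨x, y⟩ ⟨hp1, hp2, hp3⟩
      exact ⟨⟨hp1, hp2.trans hp3⟩, ⟨hp1.trans hp2, hp3⟩⟩
    have hCcomp : IsCompact C := hScomp.prod (isCompact_closedBall 0 M)
    -- pointwise modulus in the space variable
    set c : ℝ := 1 + δT + η (ω 0 T) with hc
    have hc1 : 1 ≤ c := by
      have := hηnonneg (ω 0 T) hωTnn
      simp only [hc]; linarith
    have hlipC : ∀ (w x : ℝ), 0 ≤ w → w ≤ x → x ≤ T → ∀ b b' : V,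
        dist (φ x w b) (φ x w b') ≤ c * max (dist b b') (dist b b' ^ γ) := by
      intro w x h0 h1 h2 b b'
      have hη' : η (ω w x) ≤ η (ω 0 T) :=
        hηmono (hω.nonneg h0 h1 h2) hωTnn (hωle h0 h1 h2)
      have hηnn := hηnonneg (ω w x) (hω.nonneg h0 h1 h2)
      have hd : (0:ℝ) ≤ dist b b' := dist_nonneg
      have hdγ : (0:ℝ) ≤ dist b b' ^ γ := Real.rpow_nonneg hd γ
      have h3 := hφ.lip h0 h1 h2 b b'
      have hm1 : dist b b' ≤ max (dist b b') (dist b b' ^ γ) := le_max_left _ _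
      have hm2 : dist b b' ^ γ ≤ max (dist b b') (dist b b' ^ γ) := le_max_right _ _
      calc dist (φ x w b) (φ x w b') ≤ (1 + δT) * dist b b' + η (ω w x) * dist b b' ^ γ := h3
      _ ≤ (1 + δT) * max (dist b b') (dist b b' ^ γ)
          + η (ω 0 T) * max (dist b b') (dist b b' ^ γ) := by
          gcongr <;> linarith
      _ = c * max (dist b b') (dist b b' ^ γ) := by ring
    have hcont : ContinuousOn Φ C := by
      rw [Metric.continuousOn_iff]
      rintro ⟨⟨w₀, x₀⟩, b₀⟩ ⟨hqS, hqB⟩ ε hε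
      obtain ⟨δ₁, hδ₁, h1⟩ := (Metric.continuousWithinAt_iff).mp ((hφ.cont b₀) ⟨w₀, x₀⟩ hqS) (ε/2)
        (by linarith)
      set δ₂ : ℝ := min 1 ((ε / (2 * c)) ^ (1/γ)) with hδ₂def
      have hεc : 0 < ε / (2 * c) := by positivity
      have hδ₂ : 0 < δ₂ := lt_min one_pos (Real.rpow_pos_of_pos hεc _)
      have key : ∀ d : ℝ, 0 ≤ d → d < δ₂ → c * max d (d ^ γ) < ε / 2 := by
        intro d hd hdlt
        have hd1 : d ≤ 1 := le_of_lt (lt_of_lt_of_le hdlt (min_le_left _ _))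
        have hdγd : d ≤ d ^ γ := by
          rcases eq_or_lt_of_le hd with he | hpos
          · rw [← he, Real.zero_rpow (ne_of_gt hγ0)]
          · calc d = d ^ (1:ℝ) := (Real.rpow_one d).symm
            _ ≤ d ^ γ := Real.rpow_le_rpow_of_exponent_ge hpos hd1 hγ1
        have hmax : max d (d ^ γ) = d ^ γ := max_eq_right hdγd
        have hdγlt : d ^ γ < ε / (2 * c) := by
          have hlt2 : d < (ε / (2 * c)) ^ (1/γ) := lt_of_lt_of_le hdlt (min_le_right _ _)
          have h5 := Real.rpow_lt_rpow hd hlt2 hγ0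
          have h4 : ((ε / (2 * c)) ^ (1/γ)) ^ γ = ε / (2 * c) := by
            rw [← Real.rpow_mul hεc.le, one_div_mul_cancel (ne_of_gt hγ0), Real.rpow_one]
          rwa [h4] at h5
        rw [hmax]
        calc c * d ^ γ < c * (ε / (2 * c)) := by
              exact mul_lt_mul_of_pos_left hdγlt (by linarith)
        _ = ε / 2 := by field_simp
      refine ⟨min δ₁ δ₂, lt_min hδ₁ hδ₂, ?_⟩
      rintro ⟨⟨w', x'⟩, b'⟩ ⟨hq'S, hq'B⟩ hdist
      rw [Prod.dist_eq, Prod.dist_eq] at hdist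
      have hdp : dist (⟨w', x'⟩ : ℝ × ℝ) (⟨w₀, x₀⟩ : ℝ × ℝ) < δ₁ := by
        rw [Prod.dist_eq]
        exact lt_of_le_of_lt (le_max_left _ _) (lt_of_lt_of_le hdist (min_le_left _ _))
      have hdb : dist b' b₀ < δ₂ :=
        lt_of_le_of_lt (le_max_right _ _) (lt_of_lt_of_le hdist (min_le_right _ _))
      have e1 : dist (Φ (⟨w', x'⟩, b')) (Φ (⟨w', x'⟩, b₀)) < ε / 2 := by
        calc dist (Φ (⟨w', x'⟩, b')) (Φ (⟨w', x'⟩, b₀))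
            ≤ c * max (dist b' b₀) (dist b' b₀ ^ γ) :=
              hlipC w' x' hq'S.1 hq'S.2.1 hq'S.2.2 b' b₀
        _ < ε / 2 := key _ dist_nonneg hdb
      have e2 : dist (Φ (⟨w', x'⟩, b₀)) (Φ (⟨w₀, x₀⟩, b₀)) < ε / 2 := h1 hq'S hdp
      calc dist (Φ (⟨w', x'⟩, b')) (Φ (⟨w₀, x₀⟩, b₀))
          ≤ dist (Φ (⟨w', x'⟩, b')) (Φ (⟨w', x'⟩, b₀))
            + dist (Φ (⟨w', x'⟩, b₀)) (Φ (⟨w₀, x₀⟩, b₀)) := dist_triangle _ _ _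
      _ < ε := by linarith
    have huc := hCcomp.uniformContinuousOn_of_continuous hcont
    intro ε hε
    obtain ⟨δ, hδ, hδprop⟩ := Metric.uniformContinuousOn_iff.mp huc ε hε
    refine ⟨δ / 2, by linarith, ?_⟩
    intro w s' t' b hw hws' hwt' hs'T ht'T hst hbM
    have hmem1 : ((⟨w, s'⟩, b) : (ℝ × ℝ) × V) ∈ C :=
      ⟨⟨hw, hws', hs'T⟩, by simpa [Metric.mem_closedBall, dist_eq_norm] using hbM⟩
    have hmem2 : ((⟨w, t'⟩, b) : (ℝ × ℝ) × V) ∈ C :=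
      ⟨⟨hw, hwt', ht'T⟩, by simpa [Metric.mem_closedBall, dist_eq_norm] using hbM⟩
    have hdd : dist ((⟨w, s'⟩, b) : (ℝ × ℝ) × V) ((⟨w, t'⟩, b) : (ℝ × ℝ) × V) < δ := by
      rw [Prod.dist_eq, Prod.dist_eq]
      simp only [dist_self, Real.dist_eq]
      have habs := abs_nonneg (s' - t')
      have h9 : (0 ⊔ |s' - t'|) ⊔ 0 = |s' - t'| := by
        rw [max_eq_right habs, max_eq_left habs]
      rw [h9]
      linarith
    exact le_of_lt (hδprop _ hmem1 _ hmem2 hdd)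
  -- uniform equicontinuity
  have hequi : ∀ ε > (0:ℝ), ∃ h > (0:ℝ), ∀ (n : ℕ) ⦃s t : ℝ⦄, r ≤ s → s ≤ t → t ≤ T →
      t - s ≤ h → dist (F n t) (F n s) ≤ ε := by
    intro ε hε
    have hL0 : (0:ℝ) < L := lt_of_lt_of_le one_pos hL1
    have hK0 : (0:ℝ) < K := lt_of_lt_of_le one_pos hK1
    set B : ℝ := L * (K * N a) with hBdef
    have hB : 0 < B := by positivity
    set ε₁ : ℝ := ε / (3 * B) with hε₁def
    have hε₁ : 0 < ε₁ := by positivity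
    obtain ⟨θ, hθ, hθprop⟩ : ∃ θ > (0:ℝ), ∀ x : ℝ, 0 ≤ x → x < θ → ϖ x < ε₁ := by
      have hcw : ContinuousWithinAt ϖ (Set.Ici 0) 0 := hϖ.contOn 0 Set.self_mem_Ici
      obtain ⟨θ, hθ, hp⟩ := Metric.continuousWithinAt_iff.mp hcw ε₁ hε₁
      refine ⟨θ, hθ, fun x hx hxθ => ?_⟩
      have hdx : dist x 0 < θ := by rw [Real.dist_eq, sub_zero, abs_of_nonneg hx]; exact hxθ
      have := hp (Set.mem_Ici.mpr hx) hdx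
      rwa [hϖ0, Real.dist_eq, sub_zero, abs_of_nonneg (hϖ.nonneg x hx)] at this
    obtain ⟨h₂, hh₂, hsmall⟩ := hω.small θ hθ
    obtain ⟨h₃, hh₃, hΔ₃⟩ := hΔ (ε/3) (by linarith)
    refine ⟨min h₂ h₃, lt_min hh₂ hh₃, ?_⟩
    intro n s t hrs hst htT hts
    have hts₂ : t - s ≤ h₂ := le_trans hts (min_le_left _ _)
    have hts₃ : t - s ≤ h₃ := le_trans hts (min_le_right _ _)
    have h0s : 0 ≤ s := hr0.trans hrs
    have h0t : 0 ≤ t := h0s.trans hst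
    have hsT : s ≤ T := hst.trans htT
    rcases eq_or_lt_of_le hst with rfl | hst'
    · simp only [dist_self]; linarith
    have hsort := (π n).sorted
    -- products bound
    have hprod : ∀ b : V, N b ≤ K * N a → ∀ x : ℝ, 0 ≤ x → x < θ →
        L * N b * ϖ (ω x t) ≤ ε / 3 → True := fun _ _ _ _ _ _ => trivial
    have hmain : ∀ (b : V) (v : ℝ), N b ≤ K * N a → 0 ≤ v → v ≤ t → t - v ≤ h₂ →
        L * N b * ϖ (ω v t) ≤ ε / 3 := by
      intro b v hNb h1 h2 h3
      have hωnn := hω.nonneg h1 h2 htT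
      have hϖlt : ϖ (ω v t) < ε₁ := hθprop _ hωnn (hsmall h1 h2 htT h3)
      have hϖnn := hϖ.nonneg _ hωnn
      have hNb0 : 0 ≤ N b := le_trans (by linarith [hN1 b]) (le_refl (N b))
      have step : L * N b * ϖ (ω v t) ≤ B * ε₁ := by
        have e1 : L * N b * ϖ (ω v t) ≤ L * (K * N a) * ϖ (ω v t) := by
          have := mul_le_mul_of_nonneg_left hNb hL0.le
          exact mul_le_mul_of_nonneg_right this hϖnn
        have e2 : L * (K * N a) * ϖ (ω v t) ≤ L * (K * N a) * ε₁ :=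
          mul_le_mul_of_nonneg_left hϖlt.le (by positivity)
        rw [hBdef]; linarith
      have : B * ε₁ = ε / 3 := by
        rw [hε₁def]; field_simp
      linarith
    by_cases hcase1 : s ∈ (π n).points ∧ r < s
    · have hsplit := SF3.iterFlow_split φ (π n).points hsort hcase1.1 hcase1.2 hst' a
      obtain ⟨hd1, -⟩ := hUC (π n) h0s hst htT (F n s)
      obtain ⟨-, hNs⟩ := hUC (π n) hr0 hrs hsT a
      have hNs' : N (F n s) ≤ K * N a := hNs
      have hid : φ s s (F n s) = F n s := hφ.flow_id h0s hsT (F n s)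
      have hterm1 : dist (iterFlow φ (π n).points t s (F n s)) (φ t s (F n s)) ≤ ε / 3 :=
        le_trans hd1 (hmain (F n s) s hNs' h0s hst hts₂)
      have hterm2 : dist (φ t s (F n s)) (F n s) ≤ ε / 3 := by
        have := hΔ₃ s t s (F n s) h0s hst le_rfl htT hsT
          (by rw [abs_of_nonneg (by linarith : (0:ℝ) ≤ t - s)]; exact hts₃)
          (hboundF n hrs hsT)
        rwa [hid] at this
      calc dist (F n t) (F n s)
          = dist (iterFlow φ (π n).points t s (F n s)) (F n s) := by rw [hF]; rw [← hsplit]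
      _ ≤ dist (iterFlow φ (π n).points t s (F n s)) (φ t s (F n s))
            + dist (φ t s (F n s)) (F n s) := dist_triangle _ _ _
      _ ≤ ε / 3 + ε / 3 := add_le_add hterm1 hterm2
      _ ≤ ε := by linarith
    · obtain ⟨w, P, hw0, hrw, hws, hwT, hPM, hext⟩ : ∃ (w : ℝ) (P : V),
          0 ≤ w ∧ r ≤ w ∧ w ≤ s ∧ w ≤ T ∧ ‖P‖ ≤ M ∧
          ∀ x : ℝ, ((π n).points.filter fun p => decide (r < p) && decide (p < x)) =
              ((π n).points.filter fun p => decide (r < p) && decide (p < s)) →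
            iterFlow φ (π n).points x r a = φ x w P := by
        rcases List.eq_nil_or_concat ((π n).points.filter
            fun p => decide (r < p) && decide (p < s)) with hA | ⟨A', w, hA⟩
        · refine ⟨r, a, hr0, le_rfl, hrs, hrT, haM, fun x hx => ?_⟩
          unfold iterFlow
          rw [hx, hA]
          rfl
        · rw [List.concat_eq_append] at hA
          have hwA : w ∈ (π n).points.filter fun p => decide (r < p) && decide (p < s) := by
            rw [hA]; simp
          obtain ⟨hwl, hwb⟩ := List.mem_filter.mp hwA
          simp only [Bool.and_eq_true, decide_eq_true_eq] at hwb
          have hA' : ((π n).points.filter fun p => decide (r < p) && decide (p < w)) = A' :=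
            SF3.filter_last (π n).points hsort hA
          have hwIcc := (π n).mem_Icc w hwl
          refine ⟨w, iterFlow φ (π n).points w r a, hwIcc.1, hwb.1.le, hwb.2.le, hwIcc.2,
            hboundF n hwb.1.le hwIcc.2, ?_⟩
          intro x hx
          show compAlong φ r _ x a = _
          rw [hx, hA, SF3.compAlong_concat]
          unfold iterFlow
          rw [hA']
          rfl
      have hFs : F n s = φ s w P := hext s rfl
      by_cases hex : ∃ p ∈ (π n).points, s < p ∧ p ≤ t
      · obtain ⟨v, hvl, ⟨hsv, hvt⟩, hvmin⟩ := SF3.exists_min_list hex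
        have hgap : ∀ p ∈ (π n).points, r < p → (p < s ↔ p < v) := by
          intro p hp hrp
          constructor
          · exact fun h => h.trans hsv
          · intro hpv
            by_contra hps
            push_neg at hps
            rcases eq_or_lt_of_le hps with he | hlt
            · exact hcase1 ⟨he ▸ hp, he ▸ hrp⟩
            · exact absurd (hvmin p hp ⟨hlt, hpv.le.trans hvt⟩) (not_le.mpr hpv)
        have hAv : ((π n).points.filter fun p => decide (r < p) && decide (p < v)) =
            ((π n).points.filter fun p => decide (r < p) && decide (p < s)) :=
          (SF3.filter_congr_gap (π n).points hgap).symm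
        have h0v : 0 ≤ v := h0s.trans hsv.le
        have hvT : v ≤ T := hvt.trans htT
        have hrv : r < v := lt_of_le_of_lt hrs hsv
        rcases eq_or_lt_of_le hvt with rfl | hvt'
        · have hFt : F n v = φ v w P := hext v hAv
          have hdd := hΔ₃ w v s P hw0 (hws.trans hsv.le) hws hvT hsT
            (by rw [abs_of_nonneg (by linarith : (0:ℝ) ≤ v - s)]; linarith) hPM
          rw [hFt, hFs]
          linarith
        · have hH : iterFlow φ (π n).points v r a = φ v w P := hext v hAv
          have hsplit := SF3.iterFlow_split φ (π n).points hsort hvl hrv hvt' a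
          obtain ⟨hd1, -⟩ := hUC (π n) h0v hvt'.le htT (iterFlow φ (π n).points v r a)
          obtain ⟨-, hNH⟩ := hUC (π n) hr0 (hrs.trans hsv.le) hvT a
          have hterma : dist (iterFlow φ (π n).points t v (iterFlow φ (π n).points v r a))
              (φ t v (iterFlow φ (π n).points v r a)) ≤ ε / 3 :=
            le_trans hd1 (hmain _ v hNH h0v hvt'.le (by linarith))
          have hidv : φ v v (iterFlow φ (π n).points v r a) = iterFlow φ (π n).points v r a :=
            hφ.flow_id h0v hvT _
          have hHM : ‖iterFlow φ (π n).points v r a‖ ≤ M := hboundF n (hrs.trans hsv.le) hvT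
          have htermb : dist (φ t v (iterFlow φ (π n).points v r a))
              (iterFlow φ (π n).points v r a) ≤ ε / 3 := by
            have := hΔ₃ v t v (iterFlow φ (π n).points v r a) h0v hvt'.le le_rfl htT hvT
              (by rw [abs_of_nonneg (by linarith : (0:ℝ) ≤ t - v)]; linarith) hHM
            rwa [hidv] at this
          have htermc : dist (iterFlow φ (π n).points v r a) (F n s) ≤ ε / 3 := by
            rw [hH, hFs]
            exact hΔ₃ w v s P hw0 (hws.trans hsv.le) hws hvT hsT
              (by rw [abs_of_nonneg (by linarith : (0:ℝ) ≤ v - s)]; linarith) hPM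
          calc dist (F n t) (F n s)
              = dist (iterFlow φ (π n).points t v (iterFlow φ (π n).points v r a)) (F n s) := by
                rw [hF]; rw [← hsplit]
          _ ≤ dist (iterFlow φ (π n).points t v (iterFlow φ (π n).points v r a))
                (φ t v (iterFlow φ (π n).points v r a))
              + dist (φ t v (iterFlow φ (π n).points v r a))
                (iterFlow φ (π n).points v r a)
              + dist (iterFlow φ (π n).points v r a) (F n s) := dist_triangle4 _ _ _ _
          _ ≤ ε / 3 + ε / 3 + ε / 3 := by linarith
          _ ≤ ε := by linarith
      · push_neg at hex
        have hgap : ∀ p ∈ (π n).points, r < p → (p < s ↔ p < t) := by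
          intro p hp hrp
          constructor
          · exact fun h => h.trans hst'
          · intro hpt
            by_contra hps
            push_neg at hps
            rcases eq_or_lt_of_le hps with he | hlt
            · exact hcase1 ⟨he ▸ hp, he ▸ hrp⟩
            · exact absurd hpt.le (not_le.mpr (hex p hp hlt))
        have hFt : F n t = φ t w P :=
          hext t (SF3.filter_congr_gap (π n).points hgap).symm
        have hdd := hΔ₃ w t s P hw0 (hws.trans hst) hws htT hsT
          (by rw [abs_of_nonneg (by linarith : (0:ℝ) ≤ t - s)]; exact hts₃) hPM
        rw [hFt, hFs]
        linarith
  refine ⟨⟨M, fun n t ht => hboundF n ht.1 ht.2⟩, ?_, ?_⟩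
  · intro ε hε
    obtain ⟨h, hh, H⟩ := hequi ε hε
    exact ⟨h, hh, fun n s t h1 h2 h3 h4 => by
      rw [← dist_eq_norm]; exact H n h1 h2 h3 h4⟩
  · -- Arzelà–Ascoli
    have hrT' : r ≤ T := hrT
    haveI : Nonempty (Set.Icc r T) := ⟨⟨r, le_rfl, hrT⟩⟩
    -- each path is continuous on [r, T]
    have hcontF : ∀ n : ℕ, Continuous (fun x : Set.Icc r T => F n (x : ℝ)) := by
      intro n
      rw [Metric.continuous_iff]
      intro x₀ ε hε
      obtain ⟨h, hh, H⟩ := hequi (ε/2) (by linarith)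
      refine ⟨h, hh, fun x hx => ?_⟩
      have hd : |(x : ℝ) - (x₀ : ℝ)| < h := by
        rw [← Real.dist_eq]
        exact hx
      have key : dist (F n (x : ℝ)) (F n (x₀ : ℝ)) ≤ ε / 2 := by
        rcases le_total (x : ℝ) (x₀ : ℝ) with hle | hle
        · rw [dist_comm]
          refine H n x.2.1 hle x₀.2.2 ?_
          rw [abs_of_nonpos (by linarith)] at hd
          linarith
        · refine H n x₀.2.1 hle x.2.2 ?_
          rw [abs_of_nonneg (by linarith)] at hd
          linarith
      linarith [key]
    set G : ℕ → BoundedContinuousFunction (Set.Icc r T) V := fun n =>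
      BoundedContinuousFunction.mkOfCompact ⟨fun x => F n (x : ℝ), hcontF n⟩ with hGdef
    have hGval : ∀ (n : ℕ) (x : Set.Icc r T), G n x = F n (x : ℝ) := fun n x => rfl
    have hcomp : IsCompact (closure (Set.range G)) := by
      refine BoundedContinuousFunction.arzela_ascoli (Metric.closedBall (0 : V) M)
        (isCompact_closedBall 0 M) (Set.range G) ?_ ?_
      · rintro f x ⟨n, rfl⟩
        rw [Metric.mem_closedBall, dist_eq_norm, sub_zero]
        exact hboundF n x.2.1 x.2.2
      · intro x₀
        rw [Metric.equicontinuousAt_iff]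
        intro ε hε
        obtain ⟨h, hh, H⟩ := hequi (ε/2) (by linarith)
        refine ⟨h, hh, fun x hx i => ?_⟩
        have hd : |(x : ℝ) - (x₀ : ℝ)| < h := by rw [← Real.dist_eq]; exact hx
        obtain ⟨f, n, rfl⟩ := i
        have key : dist (F n (x₀ : ℝ)) (F n (x : ℝ)) ≤ ε / 2 := by
          rcases le_total (x : ℝ) (x₀ : ℝ) with hle | hle
          · refine H n x.2.1 hle x₀.2.2 ?_
            rw [abs_of_nonpos (by linarith)] at hd
            linarith
          · rw [dist_comm]
            refine H n x₀.2.1 hle x.2.2 ?_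
            rw [abs_of_nonneg (by linarith)] at hd
            linarith
        calc dist _ _ ≤ ε / 2 := key
        _ < ε := by linarith
    have hmem : ∀ k : ℕ, G k ∈ closure (Set.range G) :=
      fun k => subset_closure (Set.mem_range_self k)
    obtain ⟨g, -, ns, hns, hlim⟩ := hcomp.tendsto_subseq hmem
    refine ⟨ns, hns, fun t => if ht : t ∈ Set.Icc r T then g ⟨t, ht⟩ else 0, ?_⟩
    rw [Metric.tendstoUniformlyOn_iff]
    intro ε hε
    have hTU := (BoundedContinuousFunction.tendsto_iff_tendstoUniformly).mp hlim
    rw [Metric.tendstoUniformly_iff] at hTU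
    filter_upwards [hTU ε hε] with k hk
    intro t ht
    have h1 := hk ⟨t, ht⟩
    have h2 : (if h : t ∈ Set.Icc r T then g ⟨t, h⟩ else 0) = g ⟨t, ht⟩ := dif_pos ht
    rw [h2]
    exact h1


end
end

section
/- Let φ be an almost flow, with T small enough that the uniform control theorem holds with constants K_T, L_T, and let K ≥ K_T·L_T. Let r ∈ [0,T], a ∈ V, and suppose (π_k)_{k∈ℕ} is a sequence of partitions of [0,T] with mesh |π_k| → 0 such that the paths t ∈ [r,T] ↦ φ^{π_k}_{t,r}(a) converge uniformly to a path y. Then y_r = a and y is a D-solution: d(y_t, φ_{t,s}(y_s)) ≤ K·N_γ(a)·ϖ(ω_{s,t}) for all r ≤ s ≤ t ≤ T. -/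
open Set

noncomputable section

/-- A partition of `[0,T]`, as a strictly increasing list of points containing `0` and `T`. -/
structure TimePartition (T : ℝ) where
  points : List ℝ
  sorted : points.Pairwise (· < ·)
  zero_mem : 0 ∈ points
  top_mem : T ∈ points
  mem_Icc : ∀ u ∈ points, u ∈ Set.Icc 0 T

/-- The mesh of a partition: the largest gap between successive points. -/
def TimePartition.mesh {T : ℝ} (π : TimePartition T) : ℝ :=
  ((π.points.zip π.points.tail).map fun p => p.2 - p.1).foldr max 0

namespace Statement4Aux

open List

lemma exists_max_of_ne_nil (L : List ℝ) (h : L ≠ []) : ∃ m ∈ L, ∀ z ∈ L, z ≤ m := by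
  induction L with
  | nil => simp at h
  | cons a L ih =>
    rcases eq_or_ne L [] with rfl | hL
    · exact ⟨a, by simp, by simp⟩
    · obtain ⟨m, hm, hmax⟩ := ih hL
      rcases le_total a m with h' | h'
      · exact ⟨m, by simp [hm], by
          intro z hz
          rcases List.mem_cons.mp hz with rfl | hz
          · exact h'
          · exact hmax z hz⟩
      · exact ⟨a, by simp, by
          intro z hz
          rcases List.mem_cons.mp hz with rfl | hz
          · exact le_rfl
          · exact (hmax z hz).trans h'⟩

lemma exists_min_of_ne_nil (L : List ℝ) (h : L ≠ []) : ∃ m ∈ L, ∀ z ∈ L, m ≤ z := by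
  induction L with
  | nil => simp at h
  | cons a L ih =>
    rcases eq_or_ne L [] with rfl | hL
    · exact ⟨a, by simp, by simp⟩
    · obtain ⟨m, hm, hmin⟩ := ih hL
      rcases le_total m a with h' | h'
      · exact ⟨m, by simp [hm], by
          intro z hz
          rcases List.mem_cons.mp hz with rfl | hz
          · exact h'
          · exact hmin z hz⟩
      · exact ⟨a, by simp, by
          intro z hz
          rcases List.mem_cons.mp hz with rfl | hz
          · exact le_rfl
          · exact h'.trans (hmin z hz)⟩

lemma compAlong_append {V : Type*} (φ : ℝ → ℝ → V → V) (s v t : ℝ)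
    (L₁ L₂ : List ℝ) (x : V) :
    compAlong φ s (L₁ ++ v :: L₂) t x = compAlong φ v L₂ t (compAlong φ s L₁ v x) := by
  induction L₁ generalizing s x with
  | nil => rfl
  | cons u L₁ ih =>
    show compAlong φ u (L₁ ++ v :: L₂) t (φ u s x) = _
    rw [ih u (φ u s x)]
    rfl

lemma filter_cons_pred (s t a : ℝ) (P : List ℝ) :
    (a :: P).filter (fun u => decide (s < u) && decide (u < t)) =
      if s < a ∧ a < t then a :: P.filter (fun u => decide (s < u) && decide (u < t))
      else P.filter (fun u => decide (s < u) && decide (u < t)) := by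
  rw [List.filter_cons]
  by_cases h : s < a ∧ a < t
  · rw [if_pos h, if_pos (by simp only [Bool.and_eq_true, decide_eq_true_eq]; exact h)]
  · rw [if_neg h, if_neg (by simpa using h)]

lemma filter_split (P : List ℝ) (hP : P.Pairwise (· < ·)) (v : ℝ) (hv : v ∈ P)
    (s t : ℝ) (hsv : s < v) (hvt : v < t) :
    P.filter (fun u => decide (s < u) && decide (u < t)) =
      P.filter (fun u => decide (s < u) && decide (u < v)) ++
        v :: P.filter (fun u => decide (v < u) && decide (u < t)) := by
  induction P with
  | nil => simp at hv
  | cons a P ih =>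
    have hlt : ∀ z ∈ P, a < z := fun z hz => List.rel_of_pairwise_cons hP hz
    have hP' : P.Pairwise (· < ·) := hP.of_cons
    rcases List.mem_cons.mp hv with rfl | hv'
    · have h1 : P.filter (fun u => decide (s < u) && decide (u < v)) = [] := by
        rw [List.filter_eq_nil_iff]
        intro z hz
        simp only [Bool.and_eq_true, decide_eq_true_eq, not_and]
        intro _
        exact lt_asymm (hlt z hz)
      have h2 : P.filter (fun u => decide (s < u) && decide (u < t)) =
          P.filter (fun u => decide (v < u) && decide (u < t)) := by
        apply List.filter_congr
        intro z hz
        have hvz := hlt z hz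
        simp [hvz, hsv.trans hvz]
      rw [filter_cons_pred s t v P, filter_cons_pred s v v P, filter_cons_pred v t v P,
        if_pos ⟨hsv, hvt⟩, if_neg (fun hc => lt_irrefl v hc.2), if_neg (fun hc => lt_irrefl v hc.1),
        h1, h2]
      simp
    · have hav : a < v := hlt v hv'
      have step := ih hP' hv'
      have hneg3 : ¬ (v < a ∧ a < t) := fun hc => lt_asymm hc.1 hav
      by_cases h : s < a ∧ a < t
      · rw [filter_cons_pred s t a P, filter_cons_pred s v a P, filter_cons_pred v t a P,
          if_pos h, if_pos ⟨h.1, hav⟩, if_neg hneg3, step]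
        simp
      · have h2 : ¬ (s < a ∧ a < v) := fun hc => h ⟨hc.1, hc.2.trans hvt⟩
        rw [filter_cons_pred s t a P, filter_cons_pred s v a P, filter_cons_pred v t a P,
          if_neg h, if_neg h2, if_neg hneg3, step]

lemma iterFlow_split {V : Type*} (φ : ℝ → ℝ → V → V) (P : List ℝ)
    (hP : P.Pairwise (· < ·)) (v : ℝ) (hv : v ∈ P) (s t : ℝ)
    (hsv : s < v) (hvt : v < t) (x : V) :
    iterFlow φ P t s x = iterFlow φ P t v (iterFlow φ P v s x) := by
  unfold iterFlow
  rw [filter_split P hP v hv s t hsv hvt, compAlong_append]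

lemma iterFlow_eq_of_gap {V : Type*} (φ : ℝ → ℝ → V → V) (P : List ℝ) (s t : ℝ)
    (h : ∀ z ∈ P, ¬(s < z ∧ z < t)) (x : V) :
    iterFlow φ P t s x = φ t s x := by
  unfold iterFlow
  rw [List.filter_eq_nil_iff.mpr ?_]
  · rfl
  · intro z hz
    simpa using h z hz

def meshOf (P : List ℝ) : ℝ := ((P.zip P.tail).map fun p => p.2 - p.1).foldr max 0

lemma meshOf_eq {T : ℝ} (π : TimePartition T) : π.mesh = meshOf π.points := rfl

lemma foldr_max_nonneg (l : List ℝ) : 0 ≤ l.foldr max 0 := by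
  induction l with
  | nil => exact le_rfl
  | cons a l ih => exact ih.trans (le_max_right _ _)

lemma meshOf_nonneg (P : List ℝ) : 0 ≤ meshOf P := foldr_max_nonneg _

lemma gap_le_meshOf (P : List ℝ) (hP : P.Pairwise (· < ·)) :
    ∀ x ∈ P, ∀ y ∈ P, x < y → (∀ z ∈ P, ¬(x < z ∧ z < y)) → y - x ≤ meshOf P := by
  induction P with
  | nil => simp
  | cons a P ih =>
    intro x hx y hy hxy hgap
    have hlt : ∀ z ∈ P, a < z := fun z hz => List.rel_of_pairwise_cons hP hz
    have hP' : P.Pairwise (· < ·) := hP.of_cons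
    cases P with
    | nil =>
      rcases List.mem_cons.mp hx with rfl | hx'
      · rcases List.mem_cons.mp hy with rfl | hy'
        · exact absurd hxy (lt_irrefl _)
        · simp at hy'
      · simp at hx'
    | cons b P' =>
      rcases List.mem_cons.mp hx with rfl | hx'
      · have hmesh : meshOf (x :: b :: P') = max (b - x) (meshOf (b :: P')) := by
          simp [meshOf]
        have hyP : y ∈ b :: P' := by
          rcases List.mem_cons.mp hy with rfl | hy'
          · exact absurd hxy (lt_irrefl _)
          · exact hy'
        have hyb : y = b := by
          rcases List.mem_cons.mp hyP with rfl | hy'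
          · rfl
          · have hby : b < y := List.rel_of_pairwise_cons hP' hy'
            have hab : x < b := hlt b (by simp)
            exact absurd ⟨hab, hby⟩ (hgap b (by simp))
        subst hyb
        rw [hmesh]
        exact le_max_left _ _
      · have hmesh : meshOf (a :: b :: P') = max (b - a) (meshOf (b :: P')) := by
          simp [meshOf]
        have hxa : a < x := hlt x hx'
        have hyP : y ∈ b :: P' := by
          rcases List.mem_cons.mp hy with rfl | hy'
          · exact absurd (hxa.trans hxy) (lt_irrefl _)
          · exact hy'
        have := ih hP' x hx' y hyP hxy (fun z hz => hgap z (List.mem_cons_of_mem _ hz))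
        rw [hmesh]
        exact this.trans (le_max_right _ _)

lemma sub_le_mesh {T : ℝ} (π : TimePartition T) {x y : ℝ} (hx : x ∈ Set.Icc 0 T)
    (hy : y ∈ Set.Icc 0 T) (hxy : x ≤ y)
    (hgap : ∀ z ∈ π.points, ¬(x < z ∧ z < y)) : y - x ≤ π.mesh := by
  obtain ⟨q, hqmem, hqle, hqmax⟩ :
      ∃ q, q ∈ π.points ∧ q ≤ x ∧ ∀ z ∈ π.points, z ≤ x → z ≤ q := by
    obtain ⟨m, hm, hmax⟩ := exists_max_of_ne_nil (π.points.filter fun z => decide (z ≤ x))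
      (by
        intro hnil
        have : (0:ℝ) ∈ π.points.filter fun z => decide (z ≤ x) := by
          rw [List.mem_filter]
          exact ⟨π.zero_mem, by simpa using hx.1⟩
        rw [hnil] at this
        simp at this)
    rw [List.mem_filter] at hm
    exact ⟨m, hm.1, by simpa using hm.2, fun z hz hzx =>
      hmax z (by rw [List.mem_filter]; exact ⟨hz, by simpa using hzx⟩)⟩
  obtain ⟨w, hwmem, hwge, hwmin⟩ :
      ∃ w, w ∈ π.points ∧ y ≤ w ∧ ∀ z ∈ π.points, y ≤ z → w ≤ z := by
    obtain ⟨m, hm, hmin⟩ := exists_min_of_ne_nil (π.points.filter fun z => decide (y ≤ z))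
      (by
        intro hnil
        have : T ∈ π.points.filter fun z => decide (y ≤ z) := by
          rw [List.mem_filter]
          exact ⟨π.top_mem, by simpa using hy.2⟩
        rw [hnil] at this
        simp at this)
    rw [List.mem_filter] at hm
    exact ⟨m, hm.1, by simpa using hm.2, fun z hz hzy =>
      hmin z (by rw [List.mem_filter]; exact ⟨hz, by simpa using hzy⟩)⟩
  rcases lt_or_ge q w with hqw | hwq
  · have : w - q ≤ π.mesh := by
      rw [meshOf_eq]
      apply gap_le_meshOf π.points π.sorted q hqmem w hwmem hqw
      intro z hz ⟨h1, h2⟩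
      rcases le_or_gt z x with hzx | hzx
      · exact absurd (hqmax z hz hzx) (not_le.mpr h1)
      rcases lt_or_ge z y with hzy | hzy
      · exact hgap z hz ⟨hzx, hzy⟩
      · exact absurd (hwmin z hz hzy) (not_le.mpr h2)
    linarith
  · have h0 : y - x ≤ 0 := by linarith
    exact h0.trans (by rw [meshOf_eq]; exact meshOf_nonneg _)

lemma remainder_zero {κ : ℝ} (hκ : κ ∈ Set.Ioo (0:ℝ) 1) {ϖ : ℝ → ℝ}
    (hϖ : IsRemainder κ ϖ) : ϖ 0 = 0 := by
  have h0 : 0 ≤ ϖ 0 := hϖ.nonneg 0 le_rfl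
  have hbase : Filter.Tendsto ϖ (nhdsWithin 0 (Set.Ici 0)) (nhds (ϖ 0)) :=
    hϖ.contOn 0 Set.self_mem_Ici
  have hdiv : Filter.Tendsto (fun x : ℝ => x / 2) (nhdsWithin 0 (Set.Ioi 0))
      (nhdsWithin 0 (Set.Ici 0)) := by
    rw [tendsto_nhdsWithin_iff]
    constructor
    · have : Filter.Tendsto (fun x : ℝ => x / 2) (nhds 0) (nhds 0) := by
        simpa using (continuous_id.div_const (2:ℝ)).tendsto 0
      exact this.mono_left nhdsWithin_le_nhds
    · filter_upwards [self_mem_nhdsWithin] with x hx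
      exact (le_of_lt (half_pos (show (0:ℝ) < x from hx)))
  have hhalf : Filter.Tendsto (fun x : ℝ => 2 * ϖ (x / 2)) (nhdsWithin 0 (Set.Ioi 0))
      (nhds (2 * ϖ 0)) := ((hbase.comp hdiv).const_mul 2)
  have hfull : Filter.Tendsto (fun x : ℝ => κ * ϖ x) (nhdsWithin 0 (Set.Ioi 0))
      (nhds (κ * ϖ 0)) :=
    ((hbase.mono_left (nhdsWithin_mono 0 Set.Ioi_subset_Ici_self)).const_mul κ)
  have key : 2 * ϖ 0 ≤ κ * ϖ 0 := by
    refine le_of_tendsto_of_tendsto hhalf hfull ?_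
    filter_upwards [self_mem_nhdsWithin] with x hx
    exact hϖ.doubling x hx
  nlinarith [hκ.2, hκ.1]

lemma omega_mono {T : ℝ} {ω : ℝ → ℝ → ℝ} (hω : IsControl T ω)
    {s' s t t' : ℝ} (h0 : 0 ≤ s') (h1 : s' ≤ s) (h2 : s ≤ t) (h3 : t ≤ t') (h4 : t' ≤ T) :
    ω s t ≤ ω s' t' := by
  have ha := hω.superadd h0 h1 h2 ((h3.trans h4))
  have hb := hω.superadd h0 (h1.trans h2) h3 h4
  have hc := hω.nonneg h0 h1 ((h2.trans h3).trans h4)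
  have hd := hω.nonneg ((h0.trans h1).trans h2) h3 h4
  linarith

end Statement4Aux

/-- Lemma: limits of iterated almost flows are D-solutions.
Let `φ` be an almost flow with the uniform control theorem holding with constants
`K_T, L_T`, and let `K ≥ K_T·L_T`. If the paths `t ↦ φ^{π_k}_{t,r}(a)` along a sequence
of partitions whose meshes tend to `0` converge uniformly on `[r,T]` to a path `y`,
then `y_r = a` and `y` is a D-solution:
`dist (y_t) (φ_{t,s}(y_s)) ≤ K·N(a)·ϖ(ω_{s,t})` for all `r ≤ s ≤ t ≤ T`. -/
theorem statement4 {V : Type*} [MetricSpace V]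
    (T : ℝ) (hT : 0 < T)
    (ω : ℝ → ℝ → ℝ) (hω : IsControl T ω)
    (κ : ℝ) (hκ : κ ∈ Set.Ioo (0:ℝ) 1)
    (ϖ : ℝ → ℝ) (hϖ : IsRemainder κ ϖ)
    (γ : ℝ) (hγ : γ ∈ Set.Ioc (0:ℝ) 1)
    (N : V → ℝ) (hN1 : ∀ a, 1 ≤ N a)
    (CN : ℝ) (hNHolder : ∀ a b, |N a - N b| ≤ CN * dist a b ^ γ)
    (δT : ℝ) (hδT : 0 ≤ δT)
    (η : ℝ → ℝ) (hηmono : MonotoneOn η (Set.Ici 0)) (hηnonneg : ∀ x, 0 ≤ x → 0 ≤ η x)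
    (hη : ∀ ⦃s t : ℝ⦄, 0 ≤ s → s ≤ t → t ≤ T →
      η (ω s t) * ϖ (ω s t) ^ γ ≤ δT * ϖ (ω s t))
    (φ : ℝ → ℝ → V → V) (hφ : IsAlmostFlow T ω ϖ N γ δT η φ)
    (KT LT : ℝ) (hKT1 : 1 ≤ KT) (hLT1 : 1 ≤ LT)
    (hUC : ∀ π : TimePartition T, ∀ ⦃s t : ℝ⦄, 0 ≤ s → s ≤ t → t ≤ T → ∀ a : V,
      dist (iterFlow φ π.points t s a) (φ t s a) ≤ LT * N a * ϖ (ω s t) ∧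
      N (iterFlow φ π.points t s a) ≤ KT * N a)
    (K : ℝ) (hK : KT * LT ≤ K)
    (r : ℝ) (hr : r ∈ Set.Icc 0 T) (a : V)
    (π : ℕ → TimePartition T)
    (hmesh : Filter.Tendsto (fun k => (π k).mesh) Filter.atTop (nhds 0))
    (y : ℝ → V)
    (hconv : TendstoUniformlyOn (fun k (t : ℝ) => iterFlow φ (π k).points t r a) y
      Filter.atTop (Set.Icc r T)) :
    y r = a ∧ ∀ ⦃s t : ℝ⦄, r ≤ s → s ≤ t → t ≤ T →
      dist (y t) (φ t s (y s)) ≤ K * N a * ϖ (ω s t) := by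
  open Statement4Aux in
  obtain ⟨hr0, hrT⟩ := hr
  have hfr : ∀ k, iterFlow φ (π k).points r r a = a := by
    intro k
    rw [iterFlow_eq_of_gap φ _ r r
      (fun z hz hc => absurd (hc.1.trans hc.2) (lt_irrefl _)) a]
    exact hφ.flow_id hr0 hrT a
  have hyr : y r = a := by
    have h1 : Filter.Tendsto (fun k => iterFlow φ (π k).points r r a)
        Filter.atTop (nhds (y r)) := hconv.tendsto_at ⟨le_rfl, hrT⟩
    have h2 : Filter.Tendsto (fun k => iterFlow φ (π k).points r r a)
        Filter.atTop (nhds a) := by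
      simp only [hfr]
      exact tendsto_const_nhds
    exact tendsto_nhds_unique h1 h2
  refine ⟨hyr, ?_⟩
  intro s t hrs hst htT
  have hs0 : 0 ≤ s := hr0.trans hrs
  have ht0 : 0 ≤ t := hs0.trans hst
  have hsT : s ≤ T := hst.trans htT
  have hrt : r ≤ t := hrs.trans hst
  have hNa : 1 ≤ N a := hN1 a
  have hNapos : 0 < N a := lt_of_lt_of_le one_pos hNa
  have hKTpos : 0 < KT := lt_of_lt_of_le one_pos hKT1
  have hLTpos : 0 < LT := lt_of_lt_of_le one_pos hLT1
  have hKTNa : 0 < KT * N a := mul_pos hKTpos hNapos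
  have hϖst : 0 ≤ ϖ (ω s t) := hϖ.nonneg _ (hω.nonneg hs0 hst htT)
  rcases eq_or_lt_of_le hst with rfl | hst'
  · rw [hφ.flow_id hs0 hsT (y s), dist_self, hω.diag hs0 hsT,
      remainder_zero hκ hϖ, mul_zero]
  -- main case : s < t
  apply le_of_forall_pos_le_add
  intro ε hε
  have hε4 : 0 < ε / 4 := by linarith
  -- constants
  set Cη := η (ω 0 T) with hCηdef
  have hω0T : 0 ≤ ω 0 T := hω.nonneg le_rfl hT.le le_rfl
  have hCη : 0 ≤ Cη := hηnonneg _ hω0T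
  have hηle : ∀ v w : ℝ, 0 ≤ v → v ≤ w → w ≤ T → η (ω v w) ≤ Cη := by
    intro v w h1 h2 h3
    exact hηmono (hω.nonneg h1 h2 h3) hω0T (omega_mono hω le_rfl h1 h2 h3 le_rfl)
  set ψ := fun x : ℝ => (1 + δT) * x + Cη * x ^ γ with hψdef
  have hψsmall : ∀ c : ℝ, 0 < c → ∃ θ > 0, ∀ x : ℝ, 0 ≤ x → x ≤ θ → ψ x < c := by
    intro c hc
    have hrpow : ContinuousAt (fun x : ℝ => x ^ γ) 0 :=
      Real.continuousAt_rpow_const 0 γ (Or.inr hγ.1.le)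
    have hψc : ContinuousAt ψ 0 :=
      ((continuousAt_const.mul continuousAt_id).add (continuousAt_const.mul hrpow))
    have hψ0 : ψ 0 = 0 := by
      simp [hψdef, Real.zero_rpow (ne_of_gt hγ.1)]
    have htend : Filter.Tendsto ψ (nhds 0) (nhds 0) := by
      simpa [hψ0] using hψc.tendsto
    have hev : ∀ᶠ x : ℝ in nhds 0, ψ x < c := htend.eventually_lt_const hc
    rw [Metric.eventually_nhds_iff] at hev
    obtain ⟨θ0, hθ0, hball⟩ := hev
    refine ⟨θ0 / 2, by linarith, fun x hx0 hxle => hball ?_⟩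
    rw [Real.dist_eq, sub_zero, abs_of_nonneg hx0]
    linarith
  have hϖsmall : ∀ c : ℝ, 0 < c → ∃ ρ > 0, ∀ x : ℝ, 0 ≤ x → x < ρ → ϖ x < c := by
    intro c hc
    have hbase : Filter.Tendsto ϖ (nhdsWithin 0 (Set.Ici 0)) (nhds 0) := by
      have := hϖ.contOn 0 Set.self_mem_Ici
      rwa [ContinuousWithinAt, remainder_zero hκ hϖ] at this
    have hev : ∀ᶠ x : ℝ in nhdsWithin 0 (Set.Ici 0), ϖ x < c :=
      hbase.eventually_lt_const hc
    obtain ⟨ρ, hρ0, hball⟩ := Metric.mem_nhdsWithin_iff.mp hev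
    refine ⟨ρ, hρ0, fun x hx0 hxlt => hball ⟨?_, hx0⟩⟩
    rw [Metric.mem_ball, Real.dist_eq, sub_zero, abs_of_nonneg hx0]
    exact hxlt
  obtain ⟨θ, hθpos, hθ⟩ := hψsmall (ε / 4) hε4
  have hθ3 : 0 < θ / 3 := by linarith
  obtain ⟨θ', hθ'pos, hθ'⟩ := hψsmall (θ / 3) hθ3
  obtain ⟨ρ, hρpos, hρ⟩ := hϖsmall (θ / (3 * (KT * N a)))
    (div_pos hθpos (by positivity))
  obtain ⟨h₃, h₃pos, hsmall₃⟩ := hω.small ρ hρpos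
  -- continuity of φ at (s,t) and (s,s) with base point y s
  have hc1 := (hφ.cont (y s)) (s, t) ⟨hs0, hst, htT⟩
  rw [Metric.continuousWithinAt_iff] at hc1
  obtain ⟨d₁c, hd₁cpos, hcont1⟩ := hc1 (ε / 4) hε4
  have hc2 := (hφ.cont (y s)) (s, s) ⟨hs0, le_rfl, hsT⟩
  rw [Metric.continuousWithinAt_iff] at hc2
  obtain ⟨d₂c, hd₂cpos, hcont2⟩ := hc2 (θ / 3) hθ3
  -- choose k
  have hεθ' : 0 < min (ε / 4) θ' := lt_min hε4 hθ'pos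
  have hconv' := (Metric.tendstoUniformlyOn_iff.mp hconv) (min (ε / 4) θ') hεθ'
  have hmeshsmall : ∀ᶠ k in Filter.atTop,
      (π k).mesh < min (min h₃ (t - s)) (min d₁c d₂c) :=
    hmesh.eventually_lt_const (lt_min (lt_min h₃pos (by linarith)) (lt_min hd₁cpos hd₂cpos))
  obtain ⟨k, hA, hB⟩ := (hconv'.and hmeshsmall).exists
  have hmesh_h₃ : (π k).mesh < h₃ := lt_of_lt_of_le hB (le_trans (min_le_left _ _) (min_le_left _ _))
  have hmesh_ts : (π k).mesh < t - s := lt_of_lt_of_le hB (le_trans (min_le_left _ _) (min_le_right _ _))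
  have hmesh_d₁ : (π k).mesh < d₁c := lt_of_lt_of_le hB (le_trans (min_le_right _ _) (min_le_left _ _))
  have hmesh_d₂ : (π k).mesh < d₂c := lt_of_lt_of_le hB (le_trans (min_le_right _ _) (min_le_right _ _))
  set P := (π k).points with hPdef
  -- the least partition point ≥ s
  obtain ⟨u, huP, hsu, humin⟩ :
      ∃ u ∈ P, s ≤ u ∧ ∀ z ∈ P, s ≤ z → u ≤ z := by
    obtain ⟨m, hm, hmin⟩ := exists_min_of_ne_nil (P.filter fun z => decide (s ≤ z))
      (by
        intro hnil
        have : T ∈ P.filter fun z => decide (s ≤ z) := by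
          rw [List.mem_filter]
          exact ⟨(π k).top_mem, by simpa using hsT⟩
        rw [hnil] at this
        simp at this)
    rw [List.mem_filter] at hm
    exact ⟨m, hm.1, by simpa using hm.2, fun z hz hsz =>
      hmin z (by rw [List.mem_filter]; exact ⟨hz, by simpa using hsz⟩)⟩
  have hu0 : 0 ≤ u := ((π k).mem_Icc u huP).1
  have huT : u ≤ T := ((π k).mem_Icc u huP).2
  have hru : r ≤ u := hrs.trans hsu
  have hus_mesh : u - s ≤ (π k).mesh :=
    sub_le_mesh (π k) ⟨hs0, hsT⟩ ⟨hu0, huT⟩ hsu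
      (fun z hz hc => absurd (humin z hz hc.1.le) (not_le.mpr hc.2))
  have hut : u < t := by linarith
  -- decomposition of iterFlow at the last partition point before s
  obtain ⟨p, hp0, hrp, hps, hpu_mesh, c, hNc, hfs, hfu⟩ :
      ∃ p, 0 ≤ p ∧ r ≤ p ∧ p ≤ s ∧ u - p ≤ (π k).mesh ∧
        ∃ c, N c ≤ KT * N a ∧ iterFlow φ P s r a = φ s p c ∧
          iterFlow φ P u r a = φ u p c := by
    by_cases hex : ∃ z ∈ P, r < z ∧ z < s
    · obtain ⟨z₀, hz₀⟩ := hex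
      obtain ⟨p, hpL, hpmax⟩ := exists_max_of_ne_nil
        (P.filter fun z => decide (r < z) && decide (z < s))
        (by
          intro hnil
          have : z₀ ∈ P.filter fun z => decide (r < z) && decide (z < s) := by
            rw [List.mem_filter]
            refine ⟨hz₀.1, by simp [hz₀.2.1, hz₀.2.2]⟩
          rw [hnil] at this
          simp at this)
      rw [List.mem_filter] at hpL
      obtain ⟨hpP, hpcond⟩ := hpL
      have hrp : r < p := by
        have := hpcond
        simp only [Bool.and_eq_true, decide_eq_true_eq] at this
        exact this.1
      have hps : p < s := by
        have := hpcond
        simp only [Bool.and_eq_true, decide_eq_true_eq] at this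
        exact this.2
      have hmax' : ∀ z ∈ P, r < z → z < s → z ≤ p := fun z hz h1 h2 =>
        hpmax z (by rw [List.mem_filter]; simp [hz, h1, h2])
      have hp0 : 0 ≤ p := ((π k).mem_Icc p hpP).1
      have hpT : p ≤ T := ((π k).mem_Icc p hpP).2
      have hpu : p ≤ u := (hps.le).trans hsu
      have hgap_ps : ∀ z ∈ P, ¬(p < z ∧ z < s) := fun z hz hc =>
        absurd (hmax' z hz (hrp.trans hc.1) hc.2) (not_le.mpr hc.1)
      have hgap_pu : ∀ z ∈ P, ¬(p < z ∧ z < u) := by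
        intro z hz hc
        rcases lt_or_ge z s with h | h
        · exact hgap_ps z hz ⟨hc.1, h⟩
        · exact absurd (humin z hz h) (not_le.mpr hc.2)
      refine ⟨p, hp0, hrp.le, hps.le, ?_, iterFlow φ P p r a,
        (hUC (π k) hr0 hrp.le hpT a).2, ?_, ?_⟩
      · exact sub_le_mesh (π k) ⟨hp0, hpT⟩ ⟨hu0, huT⟩ hpu hgap_pu
      · rw [iterFlow_split φ P (π k).sorted p hpP r s hrp hps a,
          iterFlow_eq_of_gap φ P p s hgap_ps]
      · rw [iterFlow_split φ P (π k).sorted p hpP r u hrp (hps.trans_le hsu) a,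
          iterFlow_eq_of_gap φ P p u hgap_pu]
    · push_neg at hex
      have hgap_rs : ∀ z ∈ P, ¬(r < z ∧ z < s) := fun z hz hc => (hex z hz hc.1).not_gt hc.2
      have hgap_ru : ∀ z ∈ P, ¬(r < z ∧ z < u) := by
        intro z hz hc
        rcases lt_or_ge z s with h | h
        · exact hgap_rs z hz ⟨hc.1, h⟩
        · exact absurd (humin z hz h) (not_le.mpr hc.2)
      refine ⟨r, hr0, le_rfl, hrs, ?_, a,
        le_mul_of_one_le_left hNapos.le hKT1, ?_, ?_⟩
      · exact sub_le_mesh (π k) ⟨hr0, hrT⟩ ⟨hu0, huT⟩ hru hgap_ru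
      · exact iterFlow_eq_of_gap φ P r s hgap_rs a
      · exact iterFlow_eq_of_gap φ P r u hgap_ru a
  have hpu : p ≤ u := hps.trans hsu
  have hpT : p ≤ T := hps.trans hsT
  -- bound B : the main term
  have hFt_split : iterFlow φ P t r a = iterFlow φ P t u (iterFlow φ P u r a) := by
    rcases eq_or_lt_of_le hru with heq | hru'
    · subst heq
      rw [hfr k]
    · exact iterFlow_split φ P (π k).sorted u huP r t hru' hut a
  have hNFu : N (iterFlow φ P u r a) ≤ KT * N a := (hUC (π k) hr0 hru huT a).2
  have hϖut : 0 ≤ ϖ (ω u t) := hϖ.nonneg _ (hω.nonneg hu0 hut.le htT)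
  have hϖmono : ϖ (ω u t) ≤ ϖ (ω s t) :=
    hϖ.strictMonoOn.monotoneOn (hω.nonneg hu0 hut.le htT) (hω.nonneg hs0 hst htT)
      (omega_mono hω hs0 hsu hut.le le_rfl htT)
  have hBbound : dist (iterFlow φ P t r a) (φ t u (iterFlow φ P u r a)) ≤
      K * N a * ϖ (ω s t) := by
    rw [hFt_split]
    have h1 := (hUC (π k) hu0 hut.le htT (iterFlow φ P u r a)).1
    have h2 : LT * N (iterFlow φ P u r a) * ϖ (ω u t) ≤ LT * (KT * N a) * ϖ (ω s t) := by
      apply mul_le_mul (mul_le_mul_of_nonneg_left hNFu hLTpos.le) hϖmono hϖut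
      positivity
    have h3 : LT * (KT * N a) * ϖ (ω s t) ≤ K * N a * ϖ (ω s t) := by
      apply mul_le_mul_of_nonneg_right _ hϖst
      have : LT * (KT * N a) = (KT * LT) * N a := by ring
      rw [this]
      exact mul_le_mul_of_nonneg_right hK hNapos.le
    exact h1.trans (h2.trans h3)
  -- bound d₁ : dist (F u) (y s) < θ
  have hωpu_nonneg : 0 ≤ ω p u := hω.nonneg hp0 hpu huT
  have hωpu : ω p u < ρ := hsmall₃ hp0 hpu huT (le_trans hpu_mesh hmesh_h₃.le)
  have hd1a : dist (iterFlow φ P u r a) (φ u s (iterFlow φ P s r a)) ≤ θ / 3 := by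
    rw [hfu, hfs, dist_comm]
    have halm := hφ.almost hp0 hps hsu huT c
    have hϖpu : ϖ (ω p u) ≤ θ / (3 * (KT * N a)) := (hρ _ hωpu_nonneg hωpu).le
    have hNcpos : 0 ≤ N c := le_trans (by norm_num) (hN1 c)
    calc dist (φ u s (φ s p c)) (φ u p c) ≤ N c * ϖ (ω p u) := halm
      _ ≤ (KT * N a) * (θ / (3 * (KT * N a))) := by
          apply mul_le_mul hNc hϖpu (hϖ.nonneg _ hωpu_nonneg) hKTNa.le
      _ = θ / 3 := by field_simp
  have hes : dist (iterFlow φ P s r a) (y s) < θ' := by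
    rw [dist_comm]
    exact lt_of_lt_of_le (hA s ⟨hrs, hsT⟩) (min_le_right _ _)
  have hd1b : dist (φ u s (iterFlow φ P s r a)) (φ u s (y s)) < θ / 3 := by
    set e := dist (iterFlow φ P s r a) (y s) with hedef
    have hlip := hφ.lip hs0 hsu huT (iterFlow φ P s r a) (y s)
    have hbd : (1 + δT) * e + η (ω s u) * e ^ γ ≤ ψ e := by
      apply add_le_add_right
      apply mul_le_mul_of_nonneg_right (hηle s u hs0 hsu huT)
      exact Real.rpow_nonneg dist_nonneg γ
    exact lt_of_le_of_lt (hlip.trans hbd) (hθ' e dist_nonneg hes.le)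
  have hd1c : dist (φ u s (y s)) (y s) < θ / 3 := by
    have hmem : ((s, u) : ℝ × ℝ) ∈ {p : ℝ × ℝ | 0 ≤ p.1 ∧ p.1 ≤ p.2 ∧ p.2 ≤ T} :=
      ⟨hs0, hsu, huT⟩
    have hdist : dist ((s, u) : ℝ × ℝ) ((s, s) : ℝ × ℝ) < d₂c := by
      rw [Prod.dist_eq]
      apply max_lt
      · rw [dist_self]; exact hd₂cpos
      · rw [Real.dist_eq, abs_of_nonneg (sub_nonneg.mpr hsu)]
        linarith
    have := hcont2 hmem hdist
    simpa [hφ.flow_id hs0 hsT (y s)] using this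
  have hd1 : dist (iterFlow φ P u r a) (y s) < θ := by
    have := dist_triangle4 (iterFlow φ P u r a) (φ u s (iterFlow φ P s r a))
      (φ u s (y s)) (y s)
    linarith
  -- bound C
  have hC : dist (φ t u (iterFlow φ P u r a)) (φ t u (y s)) < ε / 4 := by
    set e := dist (iterFlow φ P u r a) (y s) with hedef
    have hlip := hφ.lip hu0 hut.le htT (iterFlow φ P u r a) (y s)
    have hbd : (1 + δT) * e + η (ω u t) * e ^ γ ≤ ψ e := by
      apply add_le_add_right
      apply mul_le_mul_of_nonneg_right (hηle u t hu0 hut.le htT)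
      exact Real.rpow_nonneg dist_nonneg γ
    exact lt_of_le_of_lt (hlip.trans hbd) (hθ e dist_nonneg hd1.le)
  -- bound D
  have hD : dist (φ t u (y s)) (φ t s (y s)) < ε / 4 := by
    have hmem : ((u, t) : ℝ × ℝ) ∈ {p : ℝ × ℝ | 0 ≤ p.1 ∧ p.1 ≤ p.2 ∧ p.2 ≤ T} :=
      ⟨hu0, hut.le, htT⟩
    have hdist : dist ((u, t) : ℝ × ℝ) ((s, t) : ℝ × ℝ) < d₁c := by
      rw [Prod.dist_eq]
      apply max_lt
      · rw [Real.dist_eq, abs_of_nonneg (sub_nonneg.mpr hsu)]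
        linarith
      · rw [dist_self]; exact hd₁cpos
    exact hcont1 hmem hdist
  -- bound A
  have hAyt : dist (y t) (iterFlow φ P t r a) < ε / 4 :=
    lt_of_lt_of_le (hA t ⟨hrt, htT⟩) (min_le_left _ _)
  -- conclusion
  have htri : dist (y t) (φ t s (y s)) ≤
      dist (y t) (iterFlow φ P t r a) +
      (dist (iterFlow φ P t r a) (φ t u (iterFlow φ P u r a)) +
        dist (φ t u (iterFlow φ P u r a)) (φ t u (y s)) +
        dist (φ t u (y s)) (φ t s (y s))) :=
    le_trans (dist_triangle _ (iterFlow φ P t r a) _)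
      (by
        have := dist_triangle4 (iterFlow φ P t r a) (φ t u (iterFlow φ P u r a))
          (φ t u (y s)) (φ t s (y s))
        linarith)
  linarith

end
end

section
/- Under Hypothesis 1, for every r ≥ 0 and every a ∈ V, the set G^{L_T}_φ(r,a) of D-solutions started at (r,a) is a non-empty compact subset of the space of continuous paths C([r,r+T],V) equipped with the uniform norm. -/
open Set

noncomputable section

/-- A Lipschitz almost flow on `[0,∞)` (Hypothesis 1): the Lipschitz estimate holds with
`η = 0` and a Lipschitz function `N`. -/
structure IsLipAlmostFlow {V : Type*} [NormedAddCommGroup V] (ω : ℝ → ℝ → ℝ)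
    (ϖ : ℝ → ℝ) (N : V → ℝ) (δT : ℝ) (φ : ℝ → ℝ → V → V) : Prop where
  cont : ∀ a : V, ContinuousOn (fun p : ℝ × ℝ => φ p.2 p.1 a)
    {p : ℝ × ℝ | 0 ≤ p.1 ∧ p.1 ≤ p.2}
  flow_id : ∀ ⦃t : ℝ⦄, 0 ≤ t → ∀ a, φ t t a = a
  close : ∀ ⦃s t : ℝ⦄, 0 ≤ s → s ≤ t → ∀ a, ‖φ t s a - a‖ ≤ δT * N a
  lip : ∀ ⦃s t : ℝ⦄, 0 ≤ s → s ≤ t → ∀ a b, ‖φ t s a - φ t s b‖ ≤ (1 + δT) * ‖a - b‖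
  almost : ∀ ⦃r s t : ℝ⦄, 0 ≤ r → r ≤ s → s ≤ t → ∀ a,
    ‖φ t s (φ s r a) - φ t r a‖ ≤ N a * ϖ (ω r t)

/-- The set `G^{C}_φ(r,a)` of D-solutions on `[r, r+T]` started at `(r,a)`, with
constant `C` (in the paper, `C = L_T·‖N‖_∞`). -/
def Gpaths {V : Type*} [NormedAddCommGroup V] (φ : ℝ → ℝ → V → V) (ω : ℝ → ℝ → ℝ)
    (ϖ : ℝ → ℝ) (C T r : ℝ) (a : V) : Set (ℝ → V) :=
  {y | ContinuousOn y (Set.Icc r (r + T)) ∧ y r = a ∧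
    ∀ ⦃s t : ℝ⦄, r ≤ s → s ≤ t → t ≤ r + T → ‖y t - φ t s (y s)‖ ≤ C * ϖ (ω s t)}

namespace Statement5Aux

def pt (r τ : ℝ) (k : ℕ) : ℝ := r + k * τ

lemma pt_zero (r τ : ℝ) : pt r τ 0 = r := by simp [pt]

lemma pt_succ (r τ : ℝ) (k : ℕ) : pt r τ (k + 1) = pt r τ k + τ := by
  unfold pt; push_cast; ring

lemma pt_mono {τ : ℝ} (hτ : 0 ≤ τ) (r : ℝ) {k l : ℕ} (h : k ≤ l) :
    pt r τ k ≤ pt r τ l := by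
  unfold pt
  have hkl : (k : ℝ) ≤ (l : ℝ) := Nat.cast_le.mpr h
  nlinarith

def sch {V : Type*} (φ : ℝ → ℝ → V → V) (r τ : ℝ) (a : V) : ℕ → V
  | 0 => a
  | k + 1 => φ (pt r τ (k + 1)) (pt r τ k) (sch φ r τ a k)

def lint {V : Type*} [AddCommGroup V] [Module ℝ V] (r τ : ℝ) (b : ℕ → V) (m : ℕ)
    (u : ℝ) : V :=
  b 0 + ∑ k ∈ Finset.range m, (max 0 (min 1 ((u - pt r τ k) / τ))) • (b (k + 1) - b k)

lemma lint_continuous {V : Type*} [NormedAddCommGroup V] [NormedSpace ℝ V] (r τ : ℝ)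
    (b : ℕ → V) (m : ℕ) : Continuous (lint r τ b m) := by
  unfold lint
  refine continuous_const.add (continuous_finset_sum _ fun k _ => ?_)
  exact (continuous_const.max (continuous_const.min
    ((continuous_id.sub continuous_const).div_const τ))).smul continuous_const

lemma lint_eval {V : Type*} [AddCommGroup V] [Module ℝ V] {r τ : ℝ} (hτ : 0 < τ)
    (b : ℕ → V) {m j : ℕ} (hj : j < m) {u : ℝ} (h1 : pt r τ j ≤ u)
    (h2 : u ≤ pt r τ (j + 1)) :
    lint r τ b m u = b j + ((u - pt r τ j) / τ) • (b (j + 1) - b j) := by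
  unfold lint
  rw [← Finset.sum_range_add_sum_Ico _ (Nat.succ_le_of_lt hj)]
  have hz : ∑ k ∈ Finset.Ico (j + 1) m,
      (max 0 (min 1 ((u - pt r τ k) / τ))) • (b (k + 1) - b k) = 0 := by
    refine Finset.sum_eq_zero fun k hk => ?_
    have hk1 : j + 1 ≤ k := (Finset.mem_Ico.mp hk).1
    have hle : u ≤ pt r τ k := h2.trans (pt_mono hτ.le r hk1)
    have : (u - pt r τ k) / τ ≤ 0 := div_nonpos_of_nonpos_of_nonneg (by linarith) hτ.le
    have hmin : min 1 ((u - pt r τ k) / τ) ≤ 0 := le_trans (min_le_right _ _) this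
    rw [max_eq_left hmin, zero_smul]
  rw [hz, add_zero, Finset.sum_range_succ]
  have hcoef : max 0 (min 1 ((u - pt r τ j) / τ)) = (u - pt r τ j) / τ := by
    have h0 : 0 ≤ (u - pt r τ j) / τ := div_nonneg (by linarith) hτ.le
    have h1' : (u - pt r τ j) / τ ≤ 1 := by
      rw [div_le_one hτ]
      have := pt_succ r τ j
      linarith
    rw [min_eq_right h1', max_eq_right h0]
  rw [hcoef]
  have hones : ∀ k ∈ Finset.range j,
      (max 0 (min 1 ((u - pt r τ k) / τ))) • (b (k + 1) - b k) = b (k + 1) - b k := by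
    intro k hk
    have hk1 : k + 1 ≤ j := Nat.succ_le_of_lt (Finset.mem_range.mp hk)
    have hle : pt r τ (k + 1) ≤ u := (pt_mono hτ.le r hk1).trans h1
    have h1' : (1 : ℝ) ≤ (u - pt r τ k) / τ := by
      rw [le_div_iff₀ hτ]
      have := pt_succ r τ k
      linarith
    rw [min_eq_left h1', max_eq_right zero_le_one, one_smul]
  rw [Finset.sum_congr rfl hones, Finset.sum_range_sub]
  abel

lemma lint_pt {V : Type*} [AddCommGroup V] [Module ℝ V] {r τ : ℝ} (hτ : 0 < τ)
    (b : ℕ → V) {m k : ℕ} (hk : k ≤ m) : lint r τ b m (pt r τ k) = b k := by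
  rcases lt_or_eq_of_le hk with hlt | rfl
  · rw [lint_eval hτ b hlt le_rfl (pt_mono hτ.le r (Nat.le_succ k))]
    simp
  · rcases Nat.eq_zero_or_pos k with rfl | hpos
    · simp [lint]
    · obtain ⟨j, rfl⟩ := Nat.exists_eq_add_of_lt hpos
      rw [zero_add] at *
      rw [lint_eval hτ b (Nat.lt_succ_self j) (pt_mono hτ.le r (Nat.le_succ j)) le_rfl]
      have : (pt r τ (j + 1) - pt r τ j) / τ = 1 := by
        rw [pt_succ]; field_simp; ring
      rw [this, one_smul]
      abel

end Statement5Aux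

open Statement5Aux
set_option maxHeartbeats 2000000 in
/-- Lemma: existence and compactness of the set of D-solutions.
Under Hypothesis 1, for every `r ≥ 0` and every `a ∈ V`, the set `G^{L_T}_φ(r,a)` of
D-solutions started at `(r,a)` is non-empty, and (viewed inside `C([r,r+T],V)` with the
uniform norm, via restriction) it is compact. -/
theorem statement5 {V : Type*} [NormedAddCommGroup V] [NormedSpace ℝ V]
    [FiniteDimensional ℝ V]
    (T : ℝ)
    (ω : ℝ → ℝ → ℝ) (hω : ∀ S > (0:ℝ), IsControl S ω)
    (κ : ℝ) (hκ : κ ∈ Set.Ioo (0:ℝ) 1)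
    (ϖ : ℝ → ℝ) (hϖ : IsRemainder κ ϖ)
    (δ : ℝ → ℝ) (hδ0 : ∀ S, 0 ≤ δ S) (hδmono : Monotone δ)
    (hδlim : Filter.Tendsto δ (nhdsWithin 0 (Set.Ioi 0)) (nhds 0))
    (N : V → ℝ) (hN1 : ∀ a, 1 ≤ N a)
    (CN : NNReal) (hNlip : LipschitzWith CN N)
    (hNbdd : BddAbove (Set.range N))
    (φ : ℝ → ℝ → V → V) (hφ : IsLipAlmostFlow ω ϖ N (δ T) φ)
    (hT : 0 < T) (hsmall : κ * (1 + δ T) < 1)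
    (LT : ℝ) (hLT : LT = 2 / (1 - κ * (1 + δ T)))
    (Nsup : ℝ) (hNsup : Nsup = sSup (Set.range N))
    (r : ℝ) (hr : 0 ≤ r) (a : V) :
    (Gpaths φ ω ϖ (LT * Nsup) T r a).Nonempty ∧
    IsCompact {g : C(Set.Icc r (r + T), V) |
      ∃ y ∈ Gpaths φ ω ϖ (LT * Nsup) T r a, ∀ t : Set.Icc r (r + T), g t = y t} := by
  classical
  obtain ⟨hκ0, hκ1⟩ := hκ
  have hd0 : 0 ≤ δ T := hδ0 T
  have hE : 0 < 1 - κ * (1 + δ T) := by linarith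
  have hE1 : 1 - κ * (1 + δ T) ≤ 1 := by nlinarith
  have hLT0 : 0 < LT := by rw [hLT]; positivity
  have hLT2 : 2 ≤ LT := by
    rw [hLT, le_div_iff₀ hE]; nlinarith
  have hNle : ∀ b : V, N b ≤ Nsup := fun b => hNsup ▸ le_csSup hNbdd ⟨b, rfl⟩
  have hNsup1 : (1 : ℝ) ≤ Nsup := (hN1 a).trans (hNle a)
  have hN0 : ∀ b : V, 0 ≤ N b := fun b => zero_le_one.trans (hN1 b)
  have hC0 : 0 < LT * Nsup := by nlinarith
  have hrT : r ≤ r + T := by linarith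
  have hrmem : r ∈ Icc r (r + T) := ⟨le_rfl, hrT⟩
  have hc : IsControl (r + T) ω := hω (r + T) (by linarith)
  -- basic ω facts
  have hω0 : ∀ s t, r ≤ s → s ≤ t → t ≤ r + T → 0 ≤ ω s t :=
    fun s t h1 h2 h3 => hc.nonneg (hr.trans h1) h2 h3
  have hωmono : ∀ s s' t' t, r ≤ s → s ≤ s' → s' ≤ t' → t' ≤ t → t ≤ r + T →
      ω s' t' ≤ ω s t := by
    intro s s' t' t h1 h2 h3 h4 h5
    have hs0 : 0 ≤ s := hr.trans h1
    have A := hc.superadd hs0 h2 h3 (by linarith)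
    have B := hc.superadd hs0 (h2.trans h3) h4 h5
    have C1 := hc.nonneg hs0 h2 (by linarith)
    have C2 := hc.nonneg (by linarith : (0:ℝ) ≤ t') h4 h5
    linarith
  -- basic ϖ facts
  have hϖnn : ∀ x, 0 ≤ x → 0 ≤ ϖ x := hϖ.nonneg
  have hϖmono : ∀ x y, 0 ≤ x → x ≤ y → ϖ x ≤ ϖ y := fun x y hx hxy =>
    hϖ.strictMonoOn.monotoneOn hx (hx.trans hxy) hxy
  have hϖ0 : ϖ 0 = 0 := by
    have hc0 : Filter.Tendsto ϖ (nhdsWithin 0 (Ici 0)) (nhds (ϖ 0)) :=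
      hϖ.contOn 0 Set.self_mem_Ici
    have hx : Filter.Tendsto (fun n : ℕ => (1:ℝ)/(n+1)) Filter.atTop
        (nhdsWithin 0 (Ici 0)) := by
      rw [tendsto_nhdsWithin_iff]
      exact ⟨tendsto_one_div_add_atTop_nhds_zero_nat,
        Filter.Eventually.of_forall fun n => Set.mem_Ici.mpr (by positivity)⟩
    have hx2 : Filter.Tendsto (fun n : ℕ => (1:ℝ)/(n+1)/2) Filter.atTop
        (nhdsWithin 0 (Ici 0)) := by
      rw [tendsto_nhdsWithin_iff]
      constructor
      · simpa using tendsto_one_div_add_atTop_nhds_zero_nat.div_const (2:ℝ)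
      · exact Filter.Eventually.of_forall fun n => Set.mem_Ici.mpr (by positivity)
    have l1 : Filter.Tendsto (fun n : ℕ => 2 * ϖ ((1:ℝ)/(n+1)/2)) Filter.atTop
        (nhds (2 * ϖ 0)) := (hc0.comp hx2).const_mul 2
    have l2 : Filter.Tendsto (fun n : ℕ => κ * ϖ ((1:ℝ)/(n+1))) Filter.atTop
        (nhds (κ * ϖ 0)) := (hc0.comp hx).const_mul κ
    have hle : 2 * ϖ 0 ≤ κ * ϖ 0 :=
      le_of_tendsto_of_tendsto' l1 l2 fun n => hϖ.doubling _ (by positivity)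
    have h0 := hϖ.nonneg 0 le_rfl
    nlinarith
  have hϖhalf : ∀ x, 0 ≤ x → ϖ (x/2) ≤ κ/2 * ϖ x := by
    intro x hx
    rcases eq_or_lt_of_le hx with h | h
    · rw [← h]; norm_num [hϖ0]
    · have := hϖ.doubling x h; linarith
  -- continuity of the flow maps
  have contφ : ∀ s t : ℝ, 0 ≤ s → s ≤ t → Continuous (φ t s) := by
    intro s t h1 h2
    have : LipschitzWith (⟨1 + δ T, by linarith⟩ : NNReal) (φ t s) := by
      apply LipschitzWith.of_dist_le_mul
      intro x y
      rw [dist_eq_norm, dist_eq_norm]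
      exact hφ.lip h1 h2 x y
    exact this.continuous
  -- mesh facts
  have hτ0 : ∀ n : ℕ, 0 < T / 2 ^ n := fun n => by positivity
  have hτT : ∀ n : ℕ, (2:ℝ) ^ n * (T / 2 ^ n) = T := fun n => by field_simp
  have pt_mem : ∀ (n : ℕ) (k : ℕ), k ≤ 2 ^ n → pt r (T / 2 ^ n) k ∈ Icc r (r + T) := by
    intro n k hk
    constructor
    · unfold pt; have : (0:ℝ) ≤ (k : ℝ) * (T / 2 ^ n) := by positivity
      linarith
    · unfold pt
      have hcast : (k : ℝ) ≤ (2:ℝ) ^ n := by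
        have h' : ((k:ℕ):ℝ) ≤ ((2^n : ℕ):ℝ) := Nat.cast_le.mpr hk
        push_cast at h'; exact h'
      have : (k : ℝ) * (T / 2 ^ n) ≤ (2:ℝ) ^ n * (T / 2 ^ n) :=
        mul_le_mul_of_nonneg_right hcast (hτ0 n).le
      rw [hτT n] at this; linarith
  have pt0le : ∀ (n : ℕ) (k : ℕ), k ≤ 2 ^ n → 0 ≤ pt r (T / 2 ^ n) k :=
    fun n k hk => hr.trans (pt_mem n k hk).1
  -- the key coefficient inequality
  have hcoef : LT * (κ/2) * (2 + δ T) + 2 ≤ LT := by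
    have h1 : LT * (1 - κ * (1 + δ T)) = 2 := by
      rw [hLT]; field_simp
    nlinarith [mul_nonneg (mul_nonneg hLT0.le hκ0.le) hd0]
  -- Davie's estimate at partition points
  have davie : ∀ n i j : ℕ, i ≤ j → j ≤ 2 ^ n →
      ‖sch φ r (T / 2 ^ n) a j -
        φ (pt r (T / 2 ^ n) j) (pt r (T / 2 ^ n) i) (sch φ r (T / 2 ^ n) a i)‖ ≤
      LT * Nsup * ϖ (ω (pt r (T / 2 ^ n) i) (pt r (T / 2 ^ n) j)) := by
    intro n
    set τ := T / 2 ^ n with hτdef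
    have hτ : 0 < τ := hτ0 n
    set t := pt r τ with htdef
    set b := sch φ r τ a with hbdef
    suffices H : ∀ dd i j : ℕ, i ≤ j → j ≤ 2 ^ n → j - i ≤ dd →
        ‖b j - φ (t j) (t i) (b i)‖ ≤ LT * Nsup * ϖ (ω (t i) (t j)) by
      intro i j h1 h2; exact H (j - i) i j h1 h2 le_rfl
    intro dd
    induction dd with
    | zero =>
      intro i j h1 h2 h3
      have hij : i = j := by omega
      subst hij
      rw [hφ.flow_id (pt0le n i h2) (b i), sub_self, norm_zero]
      exact mul_nonneg hC0.le (hϖnn _ (hω0 _ _ (pt_mem n i h2).1 le_rfl (pt_mem n i h2).2))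
    | succ dd ih =>
      intro i j h1 h2 h3
      by_cases hji : j - i ≤ dd
      · exact ih i j h1 h2 hji
      rcases Nat.lt_or_ge (j - i) 2 with hcase | hcase
      · have hij : j = i + 1 := by omega
        subst hij
        have hb1 : b (i + 1) = φ (t (i + 1)) (t i) (b i) := rfl
        rw [hb1, sub_self, norm_zero]
        exact mul_nonneg hC0.le (hϖnn _ (hω0 _ _ (pt_mem n i (by omega)).1
          (pt_mono hτ.le r (Nat.le_succ i)) (pt_mem n (i+1) h2).2))
      · -- main case : j ≥ i + 2
        have hij2 : i + 2 ≤ j := by omega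
        set W := ω (t i) (t j) with hWdef
        have himem := pt_mem n i (h1.trans h2)
        have hjmem := pt_mem n j h2
        have htij : t i ≤ t j := pt_mono hτ.le r h1
        have hWnn : 0 ≤ W := hω0 _ _ himem.1 htij hjmem.2
        set P : ℕ → Prop := fun m => i ≤ m ∧ ω (t i) (t m) ≤ W/2 with hPdef
        have hPi : P i := by
          refine ⟨le_rfl, ?_⟩
          rw [hc.diag (pt0le n i (h1.trans h2)) himem.2]
          linarith
        have hij1 : i ≤ j - 1 := by omega
        set l := Nat.findGreatest P (j - 1) with hldef
        have hPl : P l := Nat.findGreatest_spec hij1 hPi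
        have hil : i ≤ l := hPl.1
        have hlj : l ≤ j - 1 := Nat.findGreatest_le _
        have hlj' : l < j := by omega
        have hl1j : l + 1 ≤ j := hlj'
        have half1 : ω (t i) (t l) ≤ W/2 := hPl.2
        have half2 : ω (t (l+1)) (t j) ≤ W/2 := by
          rcases eq_or_lt_of_le hl1j with he | hlt
          · rw [he, hc.diag (pt0le n j h2) hjmem.2]; linarith
          · have hnP : ¬ P (l+1) :=
              Nat.findGreatest_is_greatest (Nat.lt_succ_self l) (by omega)
            have hgt : W/2 < ω (t i) (t (l+1)) := by
              by_contra hle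
              exact hnP ⟨by omega, le_of_not_gt hle⟩
            have hsup := hc.superadd (pt0le n i (h1.trans h2))
              (pt_mono hτ.le r (by omega : i ≤ l + 1))
              (pt_mono hτ.le r hl1j) hjmem.2
            linarith
        have o1 : t i ≤ t l := pt_mono hτ.le r hil
        have o2 : t l ≤ t (l+1) := pt_mono hτ.le r (Nat.le_succ l)
        have o3 : t (l+1) ≤ t j := pt_mono hτ.le r hl1j
        have hl2 : l ≤ 2 ^ n := by omega
        have hl12 : l + 1 ≤ 2 ^ n := by omega
        have hlmem := pt_mem n l hl2
        have hl1mem := pt_mem n (l+1) hl12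
        have hb1 : b (l + 1) = φ (t (l + 1)) (t l) (b l) := rfl
        have key : b j - φ (t j) (t i) (b i) =
            (b j - φ (t j) (t (l+1)) (b (l+1)))
            + (φ (t j) (t (l+1)) (φ (t (l+1)) (t l) (b l)) - φ (t j) (t l) (b l))
            + (φ (t j) (t l) (b l) - φ (t j) (t l) (φ (t l) (t i) (b i)))
            + (φ (t j) (t l) (φ (t l) (t i) (b i)) - φ (t j) (t i) (b i)) := by
          rw [hb1]; abel
        have hωa : 0 ≤ ω (t (l+1)) (t j) := hω0 _ _ hl1mem.1 o3 hjmem.2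
        have hωb : 0 ≤ ω (t l) (t j) := hω0 _ _ hlmem.1 (o2.trans o3) hjmem.2
        have hωc : 0 ≤ ω (t i) (t l) := hω0 _ _ himem.1 o1 hlmem.2
        have B1 : ‖b j - φ (t j) (t (l+1)) (b (l+1))‖ ≤ LT * Nsup * ϖ (W/2) := by
          refine (ih (l+1) j hl1j h2 (by omega)).trans ?_
          exact mul_le_mul_of_nonneg_left (hϖmono _ _ hωa half2) hC0.le
        have B2 : ‖φ (t j) (t (l+1)) (φ (t (l+1)) (t l) (b l)) - φ (t j) (t l) (b l)‖ ≤
            Nsup * ϖ W := by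
          refine (hφ.almost (pt0le n l hl2) o2 o3 (b l)).trans ?_
          have m1 : ϖ (ω (t l) (t j)) ≤ ϖ W :=
            hϖmono _ _ hωb (hωmono _ _ _ _ himem.1 o1 (o2.trans o3) le_rfl hjmem.2)
          calc N (b l) * ϖ (ω (t l) (t j)) ≤ Nsup * ϖ (ω (t l) (t j)) :=
                mul_le_mul_of_nonneg_right (hNle _) (hϖnn _ hωb)
            _ ≤ Nsup * ϖ W := mul_le_mul_of_nonneg_left m1 (by linarith)
        have B3 : ‖φ (t j) (t l) (b l) - φ (t j) (t l) (φ (t l) (t i) (b i))‖ ≤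
            (1 + δ T) * (LT * Nsup * ϖ (W/2)) := by
          refine (hφ.lip (pt0le n l hl2) (o2.trans o3) (b l)
            (φ (t l) (t i) (b i))).trans ?_
          have h5 : ‖b l - φ (t l) (t i) (b i)‖ ≤ LT * Nsup * ϖ (W/2) := by
            refine (ih i l hil hl2 (by omega)).trans ?_
            exact mul_le_mul_of_nonneg_left (hϖmono _ _ hωc half1) hC0.le
          exact mul_le_mul_of_nonneg_left h5 (by linarith)
        have B4 : ‖φ (t j) (t l) (φ (t l) (t i) (b i)) - φ (t j) (t i) (b i)‖ ≤
            Nsup * ϖ W := by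
          refine (hφ.almost (pt0le n i (h1.trans h2)) o1 (o2.trans o3) (b i)).trans ?_
          exact mul_le_mul_of_nonneg_right (hNle _) (hϖnn _ hWnn)
        have tri : ‖b j - φ (t j) (t i) (b i)‖ ≤
            ‖b j - φ (t j) (t (l+1)) (b (l+1))‖
            + ‖φ (t j) (t (l+1)) (φ (t (l+1)) (t l) (b l)) - φ (t j) (t l) (b l)‖
            + ‖φ (t j) (t l) (b l) - φ (t j) (t l) (φ (t l) (t i) (b i))‖
            + ‖φ (t j) (t l) (φ (t l) (t i) (b i)) - φ (t j) (t i) (b i)‖ := by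
          rw [key]
          refine (norm_add_le _ _).trans (add_le_add ?_ le_rfl)
          refine (norm_add_le _ _).trans (add_le_add ?_ le_rfl)
          exact norm_add_le _ _
        have hhalf : ϖ (W/2) ≤ κ/2 * ϖ W := hϖhalf W hWnn
        have hϖW : 0 ≤ ϖ W := hϖnn W hWnn
        have hϖW2 : 0 ≤ ϖ (W/2) := hϖnn _ (by linarith)
        have g1 : (2 + δ T) * (LT * Nsup) * ϖ (W/2) ≤
            (2 + δ T) * (LT * Nsup) * (κ/2 * ϖ W) := by
          refine mul_le_mul_of_nonneg_left hhalf ?_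
          positivity
        have g2 : Nsup * ϖ W * (LT * (κ/2) * (2 + δ T) + 2) ≤ Nsup * ϖ W * LT :=
          mul_le_mul_of_nonneg_left hcoef (mul_nonneg (by linarith) hϖW)
        refine tri.trans ?_
        refine le_trans (add_le_add (add_le_add (add_le_add B1 B2) B3) B4) ?_
        have e1 : LT * Nsup * ϖ (W/2) + Nsup * ϖ W + (1 + δ T) * (LT * Nsup * ϖ (W/2))
            + Nsup * ϖ W = (2 + δ T) * (LT * Nsup) * ϖ (W/2) + 2 * (Nsup * ϖ W) := by ring
        have e2 : (2 + δ T) * (LT * Nsup) * (κ/2 * ϖ W) + 2 * (Nsup * ϖ W)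
            = Nsup * ϖ W * (LT * (κ/2) * (2 + δ T) + 2) := by ring
        linarith [g1, g2]
    -- the compact ball K containing all relevant values
  have hωrT : 0 ≤ ω r (r + T) := hω0 r (r + T) le_rfl hrT le_rfl
  have hϖrT0 : 0 ≤ ϖ (ω r (r + T)) := hϖnn _ hωrT
  set R₀ := LT * Nsup * ϖ (ω r (r + T)) + δ T * Nsup with hR₀
  have hR₀0 : 0 ≤ R₀ :=
    add_nonneg (mul_nonneg hC0.le hϖrT0) (mul_nonneg hd0 (by linarith))
  set K := Metric.closedBall a R₀ with hKdef
  have hKcomp : IsCompact K := isCompact_closedBall a R₀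
  have memKOf : ∀ (w : ℝ) (x : V), w ∈ Icc r (r + T) →
      ‖x - φ w r a‖ ≤ LT * Nsup * ϖ (ω r w) → x ∈ K := by
    intro w x hw hx
    rw [hKdef, Metric.mem_closedBall, dist_eq_norm]
    have h2 : ‖φ w r a - a‖ ≤ δ T * N a := hφ.close hr hw.1 a
    have h3 : ϖ (ω r w) ≤ ϖ (ω r (r + T)) :=
      hϖmono _ _ (hω0 _ _ le_rfl hw.1 hw.2) (hωmono r r w (r+T) le_rfl le_rfl hw.1 hw.2 le_rfl)
    have h4 : LT * Nsup * ϖ (ω r w) ≤ LT * Nsup * ϖ (ω r (r + T)) :=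
      mul_le_mul_of_nonneg_left h3 hC0.le
    have h5 : δ T * N a ≤ δ T * Nsup := mul_le_mul_of_nonneg_left (hNle a) hd0
    calc ‖x - a‖ ≤ ‖x - φ w r a‖ + ‖φ w r a - a‖ :=
          norm_sub_le_norm_sub_add_norm_sub _ _ _
      _ ≤ LT * Nsup * ϖ (ω r w) + δ T * N a := add_le_add hx h2
      _ ≤ R₀ := by rw [hR₀]; linarith
  have bmem : ∀ n k : ℕ, k ≤ 2 ^ n → sch φ r (T / 2 ^ n) a k ∈ K := by
    intro n k hk
    have h1 := davie n 0 k (Nat.zero_le k) hk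
    rw [pt_zero] at h1
    exact memKOf _ _ (pt_mem n k hk) h1
  -- locating a point in the dyadic grid
  have idxP : ∀ (n : ℕ) (u : ℝ), u ∈ Icc r (r + T) →
      min (⌊(u - r) / (T / 2 ^ n)⌋₊) (2 ^ n - 1) < 2 ^ n ∧
      pt r (T / 2 ^ n) (min (⌊(u - r) / (T / 2 ^ n)⌋₊) (2 ^ n - 1)) ≤ u ∧
      u ≤ pt r (T / 2 ^ n) (min (⌊(u - r) / (T / 2 ^ n)⌋₊) (2 ^ n - 1) + 1) := by
    intro n u hu
    have hτ : 0 < T / 2 ^ n := hτ0 n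
    set q := (u - r) / (T / 2 ^ n) with hq
    have hq0 : 0 ≤ q := div_nonneg (by linarith [hu.1]) hτ.le
    have hqτ : q * (T / 2 ^ n) = u - r := div_mul_cancel₀ _ (ne_of_gt hτ)
    have h2n : 1 ≤ 2 ^ n := Nat.one_le_two_pow
    refine ⟨lt_of_le_of_lt (min_le_right _ _) (by omega), ?_, ?_⟩
    · have h1 : ((min ⌊q⌋₊ (2 ^ n - 1) : ℕ) : ℝ) ≤ q := by
        have hm : ((min ⌊q⌋₊ (2 ^ n - 1) : ℕ) : ℝ) ≤ (⌊q⌋₊ : ℝ) :=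
          Nat.cast_le.mpr (min_le_left _ _)
        exact hm.trans (Nat.floor_le hq0)
      have h2 := mul_le_mul_of_nonneg_right h1 hτ.le
      rw [hqτ] at h2
      unfold pt
      linarith
    · by_cases hcase : ⌊q⌋₊ ≤ 2 ^ n - 1
      · rw [min_eq_left hcase]
        have h1 : q < (⌊q⌋₊ : ℝ) + 1 := Nat.lt_floor_add_one q
        have h2 : q * (T / 2 ^ n) ≤ ((⌊q⌋₊ : ℝ) + 1) * (T / 2 ^ n) :=
          mul_le_mul_of_nonneg_right h1.le hτ.le
        rw [hqτ] at h2
        unfold pt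
        push_cast
        linarith
      · push_neg at hcase
        rw [min_eq_right (by omega : 2 ^ n - 1 ≤ ⌊q⌋₊), (by omega : 2 ^ n - 1 + 1 = 2 ^ n)]
        unfold pt
        have hcast : ((2 ^ n : ℕ) : ℝ) * (T / 2 ^ n) = T := by
          push_cast; exact hτT n
        rw [hcast]
        exact hu.2
  -- interpolated paths stay in K
  have zmem : ∀ (n : ℕ) (u : ℝ), u ∈ Icc r (r + T) →
      lint r (T / 2 ^ n) (sch φ r (T / 2 ^ n) a) (2 ^ n) u ∈ K := by
    intro n u hu
    obtain ⟨hlt, hl, hr'⟩ := idxP n u hu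
    set i := min (⌊(u - r) / (T / 2 ^ n)⌋₊) (2 ^ n - 1) with hidef
    rw [lint_eval (hτ0 n) _ hlt hl hr']
    set c := (u - pt r (T / 2 ^ n) i) / (T / 2 ^ n) with hcdef
    have hc0 : 0 ≤ c := div_nonneg (by linarith) (hτ0 n).le
    have hc1 : c ≤ 1 := by
      rw [hcdef, div_le_one (hτ0 n)]
      have := pt_succ r (T / 2 ^ n) i
      linarith
    have hbi : ‖sch φ r (T / 2 ^ n) a i - a‖ ≤ R₀ := by
      have := bmem n i (by omega)
      rwa [hKdef, Metric.mem_closedBall, dist_eq_norm] at this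
    have hbi1 : ‖sch φ r (T / 2 ^ n) a (i + 1) - a‖ ≤ R₀ := by
      have := bmem n (i + 1) (by omega)
      rwa [hKdef, Metric.mem_closedBall, dist_eq_norm] at this
    rw [hKdef, Metric.mem_closedBall, dist_eq_norm]
    have key : sch φ r (T / 2 ^ n) a i
        + c • (sch φ r (T / 2 ^ n) a (i + 1) - sch φ r (T / 2 ^ n) a i) - a
        = (1 - c) • (sch φ r (T / 2 ^ n) a i - a)
          + c • (sch φ r (T / 2 ^ n) a (i + 1) - a) := by module
    rw [key]
    calc ‖(1 - c) • (sch φ r (T / 2 ^ n) a i - a)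
          + c • (sch φ r (T / 2 ^ n) a (i + 1) - a)‖
        ≤ ‖(1 - c) • (sch φ r (T / 2 ^ n) a i - a)‖
          + ‖c • (sch φ r (T / 2 ^ n) a (i + 1) - a)‖ := norm_add_le _ _
      _ = (1 - c) * ‖sch φ r (T / 2 ^ n) a i - a‖
          + c * ‖sch φ r (T / 2 ^ n) a (i + 1) - a‖ := by
          rw [norm_smul, norm_smul, Real.norm_eq_abs, Real.norm_eq_abs,
            abs_of_nonneg (by linarith), abs_of_nonneg hc0]
      _ ≤ (1 - c) * R₀ + c * R₀ := add_le_add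
          (mul_le_mul_of_nonneg_left hbi (by linarith))
          (mul_le_mul_of_nonneg_left hbi1 hc0)
      _ = R₀ := by ring
    -- uniform continuity of the flow on a compact set of parameters and values
  set D : Set (ℝ × ℝ) := (Icc r (r + T) ×ˢ Icc r (r + T)) ∩ {p : ℝ × ℝ | p.1 ≤ p.2}
    with hDdef
  have hDcomp : IsCompact D :=
    (isCompact_Icc.prod isCompact_Icc).inter_right
      (isClosed_le continuous_fst continuous_snd)
  have ΦcontOn : ContinuousOn (fun q : (ℝ × ℝ) × V => φ q.1.2 q.1.1 q.2) (D ×ˢ K) := by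
    intro x hx
    rw [Metric.continuousWithinAt_iff]
    intro ε hε
    have hx1 : x.1 ∈ {p : ℝ × ℝ | 0 ≤ p.1 ∧ p.1 ≤ p.2} :=
      ⟨hr.trans hx.1.1.1.1, hx.1.2⟩
    have hcw := hφ.cont x.2 x.1 hx1
    rw [Metric.continuousWithinAt_iff] at hcw
    obtain ⟨δ₁, hδ₁, hcw⟩ := hcw (ε / 2) (by linarith)
    have h2d : (0:ℝ) < 2 + δ T := by linarith
    refine ⟨min δ₁ (ε / 2 / (2 + δ T)), by positivity, ?_⟩
    intro q hq hdq
    have hq1 : q.1 ∈ {p : ℝ × ℝ | 0 ≤ p.1 ∧ p.1 ≤ p.2} :=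
      ⟨hr.trans hq.1.1.1.1, hq.1.2⟩
    have hd1 : dist q.1 x.1 < δ₁ := by
      have : dist q.1 x.1 ≤ dist q x := by
        rw [Prod.dist_eq]; exact le_max_left _ _
      exact lt_of_le_of_lt this (lt_of_lt_of_le hdq (min_le_left _ _))
    have hd2 : dist q.2 x.2 < ε / 2 / (2 + δ T) := by
      have : dist q.2 x.2 ≤ dist q x := by
        rw [Prod.dist_eq]; exact le_max_right _ _
      exact lt_of_le_of_lt this (lt_of_lt_of_le hdq (min_le_right _ _))
    have t1 : dist (φ q.1.2 q.1.1 q.2) (φ q.1.2 q.1.1 x.2) ≤ (1 + δ T) * dist q.2 x.2 := by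
      rw [dist_eq_norm, dist_eq_norm]
      exact hφ.lip hq1.1 hq1.2 _ _
    have t2 : dist (φ q.1.2 q.1.1 x.2) (φ x.1.2 x.1.1 x.2) < ε / 2 := hcw hq1 hd1
    have t3 : (1 + δ T) * dist q.2 x.2 ≤ ε / 2 := by
      have h6 : (1 + δ T) * dist q.2 x.2 ≤ (1 + δ T) * (ε / 2 / (2 + δ T)) :=
        mul_le_mul_of_nonneg_left hd2.le (by linarith)
      have h7 : (1 + δ T) * (ε / 2 / (2 + δ T)) ≤ ε / 2 := by
        rw [mul_div_assoc', div_le_iff₀ h2d]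
        nlinarith [mul_nonneg hd0 hε.le]
      linarith
    calc dist (φ q.1.2 q.1.1 q.2) (φ x.1.2 x.1.1 x.2)
        ≤ dist (φ q.1.2 q.1.1 q.2) (φ q.1.2 q.1.1 x.2)
          + dist (φ q.1.2 q.1.1 x.2) (φ x.1.2 x.1.1 x.2) := dist_triangle _ _ _
      _ < ε := by linarith
  have Φunif := (hDcomp.prod hKcomp).uniformContinuousOn_of_continuous ΦcontOn
  rw [Metric.uniformContinuousOn_iff] at Φunif
  have Φosc : ∀ ε : ℝ, 0 < ε → ∃ h : ℝ, 0 < h ∧ ∀ s t s' t' : ℝ, ∀ bb : V,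
      r ≤ s → s ≤ t → t ≤ r + T → r ≤ s' → s' ≤ t' → t' ≤ r + T →
      |s' - s| ≤ h → |t' - t| ≤ h → bb ∈ K →
      ‖φ t' s' bb - φ t s bb‖ ≤ ε := by
    intro ε hε
    obtain ⟨δ₀, hδ₀, HH⟩ := Φunif ε hε
    refine ⟨δ₀ / 2, by linarith, ?_⟩
    intro s t s' t' bb h1 h2 h3 h1' h2' h3' e1 e2 hbb
    have m1 : ((s, t), bb) ∈ D ×ˢ K :=
      ⟨⟨⟨⟨h1, h2.trans h3⟩, ⟨h1.trans h2, h3⟩⟩, h2⟩, hbb⟩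
    have m2 : ((s', t'), bb) ∈ D ×ˢ K :=
      ⟨⟨⟨⟨h1', h2'.trans h3'⟩, ⟨h1'.trans h2', h3'⟩⟩, h2'⟩, hbb⟩
    have hdist : dist ((s', t'), bb) ((s, t), bb) < δ₀ := by
      rw [Prod.dist_eq, Prod.dist_eq, dist_self]
      have d1 : dist s' s < δ₀ := by
        rw [Real.dist_eq]; linarith
      have d2 : dist t' t < δ₀ := by
        rw [Real.dist_eq]; linarith
      simp only [max_lt_iff]
      exact ⟨⟨d1, d2⟩, hδ₀⟩
    have := HH _ m2 _ m1 hdist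
    rw [dist_eq_norm] at this
    exact this.le
  -- smallness of ϖ ∘ ω near the diagonal
  have ϖωsmall : ∀ ε : ℝ, 0 < ε → ∃ h : ℝ, 0 < h ∧ ∀ s t : ℝ,
      r ≤ s → s ≤ t → t ≤ r + T → t - s ≤ h → LT * Nsup * ϖ (ω s t) ≤ ε := by
    intro ε hε
    have hcw : Filter.Tendsto ϖ (nhdsWithin 0 (Ici 0)) (nhds 0) := by
      have := hϖ.contOn 0 Set.self_mem_Ici
      rwa [ContinuousWithinAt, hϖ0] at this
    rw [Metric.tendsto_nhdsWithin_nhds] at hcw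
    obtain ⟨ρ, hρ, hcw⟩ := hcw (ε / (LT * Nsup)) (by positivity)
    obtain ⟨h, hh, hsm⟩ := hc.small ρ hρ
    refine ⟨h, hh, ?_⟩
    intro s t h1 h2 h3 h4
    have hωlt : ω s t < ρ := hsm (hr.trans h1) h2 h3 h4
    have hωnn : 0 ≤ ω s t := hω0 s t h1 h2 h3
    have := hcw (Set.mem_Ici.mpr hωnn) (by rw [Real.dist_eq]; rw [abs_of_nonneg (by linarith)]; linarith)
    rw [Real.dist_eq, sub_zero, abs_of_nonneg (hϖnn _ hωnn)] at this
    have h5 : LT * Nsup * ϖ (ω s t) ≤ LT * Nsup * (ε / (LT * Nsup)) :=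
      mul_le_mul_of_nonneg_left this.le hC0.le
    rwa [mul_div_cancel₀ _ (ne_of_gt hC0)] at h5
  -- a combined modulus for D-solutions
  have modS : ∀ ε : ℝ, 0 < ε → ∃ h : ℝ, 0 < h ∧ ∀ s t : ℝ, ∀ bb : V,
      r ≤ s → s ≤ t → t ≤ r + T → t - s ≤ h → bb ∈ K →
      LT * Nsup * ϖ (ω s t) + ‖φ t s bb - bb‖ ≤ ε := by
    intro ε hε
    obtain ⟨h1, h10, ho⟩ := Φosc (ε / 2) (by linarith)
    obtain ⟨h2, h20, hs⟩ := ϖωsmall (ε / 2) (by linarith)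
    refine ⟨min h1 h2, lt_min h10 h20, ?_⟩
    intro s t bb hs1 hs2 hs3 hs4 hbb
    have e1 : LT * Nsup * ϖ (ω s t) ≤ ε / 2 :=
      hs s t hs1 hs2 hs3 (hs4.trans (min_le_right _ _))
    have e2 : ‖φ t s bb - bb‖ ≤ ε / 2 := by
      have h5 := ho s s s t bb hs1 le_rfl (by linarith) hs1 hs2 hs3
        (by rw [sub_self, abs_zero]; linarith)
        (by rw [abs_of_nonneg (by linarith)]; exact hs4.trans (min_le_left _ _))
        hbb
      rwa [hφ.flow_id (hr.trans hs1) bb] at h5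
    linarith
  -- one-step increments of the scheme
  have ΔbM : ∀ (n k : ℕ), k + 1 ≤ 2 ^ n →
      ‖sch φ r (T/2^n) a (k+1) - sch φ r (T/2^n) a k‖ ≤ δ T * Nsup := by
    intro n k hk
    have h1 : sch φ r (T/2^n) a (k+1)
        = φ (pt r (T/2^n) (k+1)) (pt r (T/2^n) k) (sch φ r (T/2^n) a k) := rfl
    rw [h1]
    refine (hφ.close (pt0le n k (by omega)) (pt_mono (hτ0 n).le r (Nat.le_succ k)) _).trans ?_
    exact mul_le_mul_of_nonneg_left (hNle _) hd0
  -- equicontinuity of the interpolated scheme paths, uniformly in n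
  have equiz : ∀ ε : ℝ, 0 < ε → ∃ h : ℝ, 0 < h ∧ ∀ (n : ℕ) (u v : ℝ),
      u ∈ Icc r (r+T) → v ∈ Icc r (r+T) → u ≤ v → v - u ≤ h →
      ‖lint r (T/2^n) (sch φ r (T/2^n) a) (2^n) v
        - lint r (T/2^n) (sch φ r (T/2^n) a) (2^n) u‖ ≤ ε := by
    intro ε hε
    obtain ⟨h₁, h₁0, ho⟩ := Φosc (ε/4) (by linarith)
    obtain ⟨h₂, h₂0, hsm⟩ := ϖωsmall (ε/4) (by linarith)
    have hdN : 0 ≤ δ T * Nsup := mul_nonneg hd0 (by linarith)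
    have hM0 : (0:ℝ) < δ T * Nsup + 1 := by linarith
    refine ⟨min h₁ (min h₂ (h₁ * (ε/4) / (δ T * Nsup + 1))), lt_min h₁0 (lt_min h₂0 (by positivity)), ?_⟩
    intro n u v hu hv huv hvu
    have hτ : (0:ℝ) < T / 2 ^ n := hτ0 n
    have hvu1 : v - u ≤ h₁ := hvu.trans (min_le_left _ _)
    have hvu2 : v - u ≤ h₂ := hvu.trans ((min_le_right _ _).trans (min_le_left _ _))
    have hΔsmall : ∀ k : ℕ, k < 2 ^ n → T/2^n ≤ h₁ →
        ‖sch φ r (T/2^n) a (k+1) - sch φ r (T/2^n) a k‖ ≤ ε/4 := by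
      intro k hk hτh
      have hkm := pt_mem n k (by omega)
      have hk1m := pt_mem n (k+1) hk
      have h5 := ho (pt r (T/2^n) k) (pt r (T/2^n) k) (pt r (T/2^n) k)
        (pt r (T/2^n) (k+1)) (sch φ r (T/2^n) a k) hkm.1 le_rfl hkm.2 hkm.1
        (pt_mono hτ.le r (Nat.le_succ k)) hk1m.2
        (by rw [sub_self, abs_zero]; linarith)
        (by rw [pt_succ, add_sub_cancel_left, abs_of_nonneg hτ.le]; exact hτh)
        (bmem n k (by omega))
      have h6 : sch φ r (T/2^n) a (k+1)
          = φ (pt r (T/2^n) (k+1)) (pt r (T/2^n) k) (sch φ r (T/2^n) a k) := rfl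
      rw [hφ.flow_id (pt0le n k (by omega)) _] at h5
      rw [h6]
      exact h5
    have endp : ∀ (k : ℕ) (c : ℝ), k < 2 ^ n → 0 ≤ c → c ≤ T/2^n → c ≤ v - u →
        c / (T/2^n) * ‖sch φ r (T/2^n) a (k+1) - sch φ r (T/2^n) a k‖ ≤ ε/4 := by
      intro k c hk hc0 hcτ hcvu
      by_cases hτh : T/2^n ≤ h₁
      · have hΔ := hΔsmall k hk hτh
        calc c / (T/2^n) * ‖sch φ r (T/2^n) a (k+1) - sch φ r (T/2^n) a k‖
            ≤ 1 * (ε/4) :=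
              mul_le_mul (by rw [div_le_one hτ]; exact hcτ) hΔ (norm_nonneg _) zero_le_one
          _ = ε/4 := one_mul _
      · push_neg at hτh
        have hΔM : ‖sch φ r (T/2^n) a (k+1) - sch φ r (T/2^n) a k‖ ≤ δ T * Nsup + 1 :=
          (ΔbM n k hk).trans (by linarith)
        have hch' : c ≤ h₁ * (ε/4) / (δ T * Nsup + 1) :=
          (hcvu.trans hvu).trans ((min_le_right _ _).trans (min_le_right _ _))
        calc c / (T/2^n) * ‖sch φ r (T/2^n) a (k+1) - sch φ r (T/2^n) a k‖
            ≤ c / h₁ * (δ T * Nsup + 1) := by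
              refine mul_le_mul ?_ hΔM (norm_nonneg _) (by positivity)
              gcongr
          _ ≤ (h₁ * (ε/4) / (δ T * Nsup + 1)) / h₁ * (δ T * Nsup + 1) := by
              refine mul_le_mul_of_nonneg_right ?_ hM0.le
              gcongr
          _ = ε/4 := by field_simp
    obtain ⟨hiu, hiu1, hiu2⟩ := idxP n u hu
    obtain ⟨hjv, hjv1, hjv2⟩ := idxP n v hv
    have hij : min (⌊(u - r) / (T/2^n)⌋₊) (2 ^ n - 1) ≤ min (⌊(v - r) / (T/2^n)⌋₊) (2 ^ n - 1) := by
      refine min_le_min (Nat.floor_mono ?_) le_rfl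
      gcongr
    rw [lint_eval hτ _ hjv hjv1 hjv2, lint_eval hτ _ hiu hiu1 hiu2]
    rcases eq_or_lt_of_le hij with heq | hlt
    · -- u and v lie in the same grid interval
      rw [← heq] at hjv1 hjv2 ⊢
      set i := min (⌊(u - r) / (T/2^n)⌋₊) (2 ^ n - 1) with hidef
      have hco : (v - pt r (T/2^n) i)/(T/2^n) - (u - pt r (T/2^n) i)/(T/2^n)
          = (v - u)/(T/2^n) := by ring
      have hd1 : (sch φ r (T/2^n) a i
            + ((v - pt r (T/2^n) i)/(T/2^n)) • (sch φ r (T/2^n) a (i+1) - sch φ r (T/2^n) a i))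
          - (sch φ r (T/2^n) a i
            + ((u - pt r (T/2^n) i)/(T/2^n)) • (sch φ r (T/2^n) a (i+1) - sch φ r (T/2^n) a i))
          = ((v - u)/(T/2^n)) • (sch φ r (T/2^n) a (i+1) - sch φ r (T/2^n) a i) := by
        rw [← hco, sub_smul]; abel
      rw [hd1, norm_smul, Real.norm_eq_abs, abs_of_nonneg (div_nonneg (by linarith) hτ.le)]
      have hvuτ : v - u ≤ T/2^n := by
        have := pt_succ r (T/2^n) i
        linarith
      have := endp i (v - u) hiu (by linarith) hvuτ le_rfl
      linarith
    · -- u and v lie in different grid intervals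
      set i := min (⌊(u - r) / (T/2^n)⌋₊) (2 ^ n - 1) with hidef
      set j := min (⌊(v - r) / (T/2^n)⌋₊) (2 ^ n - 1) with hjdef
      have hi1j : i + 1 ≤ j := hlt
      have hptij : pt r (T/2^n) (i+1) ≤ pt r (T/2^n) j := pt_mono hτ.le r hi1j
      have hptv : pt r (T/2^n) j ≤ v := hjv1
      have hptu : u ≤ pt r (T/2^n) (i+1) := hiu2
      have decomp : (sch φ r (T/2^n) a j
            + ((v - pt r (T/2^n) j)/(T/2^n)) • (sch φ r (T/2^n) a (j+1) - sch φ r (T/2^n) a j))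
          - (sch φ r (T/2^n) a i
            + ((u - pt r (T/2^n) i)/(T/2^n)) • (sch φ r (T/2^n) a (i+1) - sch φ r (T/2^n) a i))
          = ((v - pt r (T/2^n) j)/(T/2^n)) • (sch φ r (T/2^n) a (j+1) - sch φ r (T/2^n) a j)
            + (sch φ r (T/2^n) a j - sch φ r (T/2^n) a (i+1))
            + (1 - (u - pt r (T/2^n) i)/(T/2^n)) • (sch φ r (T/2^n) a (i+1) - sch φ r (T/2^n) a i) := by
        module
      rw [decomp]
      have P1 : ‖((v - pt r (T/2^n) j)/(T/2^n)) • (sch φ r (T/2^n) a (j+1) - sch φ r (T/2^n) a j)‖ ≤ ε/4 := by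
        rw [norm_smul, Real.norm_eq_abs, abs_of_nonneg (div_nonneg (by linarith) hτ.le)]
        exact endp j (v - pt r (T/2^n) j) hjv (by linarith)
          (by have := pt_succ r (T/2^n) j; linarith) (by linarith)
      have P3 : ‖(1 - (u - pt r (T/2^n) i)/(T/2^n)) • (sch φ r (T/2^n) a (i+1) - sch φ r (T/2^n) a i)‖ ≤ ε/4 := by
        have hco : 1 - (u - pt r (T/2^n) i)/(T/2^n) = (pt r (T/2^n) (i+1) - u)/(T/2^n) := by
          rw [pt_succ]
          field_simp
          ring
        rw [hco, norm_smul, Real.norm_eq_abs, abs_of_nonneg (div_nonneg (by linarith) hτ.le)]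
        exact endp i (pt r (T/2^n) (i+1) - u) (by omega) (by linarith)
          (by have := pt_succ r (T/2^n) i; linarith) (by linarith)
      have P2 : ‖sch φ r (T/2^n) a j - sch φ r (T/2^n) a (i+1)‖ ≤ ε/4 + ε/4 := by
        have hi1m := pt_mem n (i+1) (by omega)
        have hjm := pt_mem n j (by omega)
        have e1 : ‖sch φ r (T/2^n) a j
            - φ (pt r (T/2^n) j) (pt r (T/2^n) (i+1)) (sch φ r (T/2^n) a (i+1))‖ ≤ ε/4 := by
          refine (davie n (i+1) j hi1j (by omega)).trans ?_
          exact hsm _ _ hi1m.1 hptij hjm.2 (by linarith)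
        have e2 : ‖φ (pt r (T/2^n) j) (pt r (T/2^n) (i+1)) (sch φ r (T/2^n) a (i+1))
            - sch φ r (T/2^n) a (i+1)‖ ≤ ε/4 := by
          have h5 := ho (pt r (T/2^n) (i+1)) (pt r (T/2^n) (i+1)) (pt r (T/2^n) (i+1))
            (pt r (T/2^n) j) (sch φ r (T/2^n) a (i+1)) hi1m.1 le_rfl hi1m.2 hi1m.1 hptij hjm.2
            (by rw [sub_self, abs_zero]; linarith)
            (by rw [abs_of_nonneg (by linarith)]; linarith)
            (bmem n (i+1) (by omega))
          rwa [hφ.flow_id (hr.trans hi1m.1) _] at h5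
        calc ‖sch φ r (T/2^n) a j - sch φ r (T/2^n) a (i+1)‖
            ≤ ‖sch φ r (T/2^n) a j
                - φ (pt r (T/2^n) j) (pt r (T/2^n) (i+1)) (sch φ r (T/2^n) a (i+1))‖
              + ‖φ (pt r (T/2^n) j) (pt r (T/2^n) (i+1)) (sch φ r (T/2^n) a (i+1))
                - sch φ r (T/2^n) a (i+1)‖ := norm_sub_le_norm_sub_add_norm_sub _ _ _
          _ ≤ ε/4 + ε/4 := add_le_add e1 e2
      calc ‖((v - pt r (T/2^n) j)/(T/2^n)) • (sch φ r (T/2^n) a (j+1) - sch φ r (T/2^n) a j)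
            + (sch φ r (T/2^n) a j - sch φ r (T/2^n) a (i+1))
            + (1 - (u - pt r (T/2^n) i)/(T/2^n)) • (sch φ r (T/2^n) a (i+1) - sch φ r (T/2^n) a i)‖
          ≤ ‖((v - pt r (T/2^n) j)/(T/2^n)) • (sch φ r (T/2^n) a (j+1) - sch φ r (T/2^n) a j)
            + (sch φ r (T/2^n) a j - sch φ r (T/2^n) a (i+1))‖
            + ‖(1 - (u - pt r (T/2^n) i)/(T/2^n)) • (sch φ r (T/2^n) a (i+1) - sch φ r (T/2^n) a i)‖ :=
            norm_add_le _ _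
        _ ≤ ‖((v - pt r (T/2^n) j)/(T/2^n)) • (sch φ r (T/2^n) a (j+1) - sch φ r (T/2^n) a j)‖
            + ‖sch φ r (T/2^n) a j - sch φ r (T/2^n) a (i+1)‖
            + ‖(1 - (u - pt r (T/2^n) i)/(T/2^n)) • (sch φ r (T/2^n) a (i+1) - sch φ r (T/2^n) a i)‖ := by
            have := norm_add_le
              (((v - pt r (T/2^n) j)/(T/2^n)) • (sch φ r (T/2^n) a (j+1) - sch φ r (T/2^n) a j))
              (sch φ r (T/2^n) a j - sch φ r (T/2^n) a (i+1))
            linarith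
        _ ≤ ε/4 + (ε/4 + ε/4) + ε/4 := add_le_add (add_le_add P1 P2) P3
        _ = ε := by ring
  -- choose the moduli for the uniform continuity conditions
  have hhex : ∀ k : ℕ, ∃ h : ℝ, 0 < h ∧ ∀ (n : ℕ) (u v : ℝ),
      u ∈ Icc r (r+T) → v ∈ Icc r (r+T) → u ≤ v → v - u ≤ h →
      ‖lint r (T/2^n) (sch φ r (T/2^n) a) (2^n) v
        - lint r (T/2^n) (sch φ r (T/2^n) a) (2^n) u‖ ≤ 1/(k+1) :=
    fun k => equiz (1/(k+1)) (by positivity)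
  choose hh hh0 hhz using hhex
  -- the nested family of constraint sets
  set AN : ℕ → Set (↥(Icc r (r + T)) → V) := fun n =>
    {f | f ⟨r, hrmem⟩ = a ∧
      (∀ i j : ℕ, i ≤ j → ∀ hj : j ≤ 2 ^ n,
        ‖f (Set.projIcc r (r+T) hrT (pt r (T/2^n) j))
          - φ (pt r (T/2^n) j) (pt r (T/2^n) i)
            (f (Set.projIcc r (r+T) hrT (pt r (T/2^n) i)))‖
          ≤ LT * Nsup * ϖ (ω (pt r (T/2^n) i) (pt r (T/2^n) j))) ∧
      (∀ u : ↥(Icc r (r + T)), f u ∈ K) ∧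
      (∀ k : ℕ, ∀ u v : ↥(Icc r (r + T)), (u:ℝ) ≤ v → (v:ℝ) - u ≤ hh k →
        ‖f v - f u‖ ≤ 1/(k+1))} with hANdef
  have ANclosed : ∀ n, IsClosed (AN n) := by
    intro n
    have heq : AN n = ({f : ↥(Icc r (r + T)) → V | f ⟨r, hrmem⟩ = a}
        ∩ ((⋂ (i : ℕ), ⋂ (j : ℕ), ⋂ (_ : i ≤ j), ⋂ (_ : j ≤ 2 ^ n),
            {f : ↥(Icc r (r + T)) → V | ‖f (Set.projIcc r (r+T) hrT (pt r (T/2^n) j))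
              - φ (pt r (T/2^n) j) (pt r (T/2^n) i)
                (f (Set.projIcc r (r+T) hrT (pt r (T/2^n) i)))‖
              ≤ LT * Nsup * ϖ (ω (pt r (T/2^n) i) (pt r (T/2^n) j))})
          ∩ ((⋂ u : ↥(Icc r (r+T)), {f : ↥(Icc r (r + T)) → V | f u ∈ K})
            ∩ (⋂ (k : ℕ), ⋂ (u : ↥(Icc r (r+T))), ⋂ (v : ↥(Icc r (r+T))),
                ⋂ (_ : (u:ℝ) ≤ v), ⋂ (_ : (v:ℝ) - u ≤ hh k),
                {f : ↥(Icc r (r + T)) → V | ‖f v - f u‖ ≤ 1/(k+1)})))) := by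
      ext f
      simp only [hANdef, Set.mem_setOf_eq, Set.mem_inter_iff, Set.mem_iInter]
    rw [heq]
    refine (isClosed_eq (continuous_apply _) continuous_const).inter
      (IsClosed.inter ?_ (IsClosed.inter ?_ ?_))
    · refine isClosed_iInter fun i => isClosed_iInter fun j =>
        isClosed_iInter fun hij => isClosed_iInter fun hj => ?_
      exact isClosed_le (Continuous.norm ((continuous_apply _).sub
        ((contφ _ _ (pt0le n i (hij.trans hj)) (pt_mono (hτ0 n).le r hij)).comp
          (continuous_apply _)))) continuous_const
    · exact isClosed_iInter fun u =>
        IsClosed.preimage (continuous_apply u) (hKdef ▸ Metric.isClosed_closedBall)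
    · refine isClosed_iInter fun k => isClosed_iInter fun u => isClosed_iInter fun v =>
        isClosed_iInter fun h1 => isClosed_iInter fun h2 => ?_
      exact isClosed_le (Continuous.norm ((continuous_apply _).sub
        (continuous_apply _))) continuous_const
  have ANne : ∀ n, (AN n).Nonempty := by
    intro n
    refine ⟨fun u => lint r (T/2^n) (sch φ r (T/2^n) a) (2^n) u, ?_, ?_, ?_, ?_⟩
    · show lint r (T/2^n) (sch φ r (T/2^n) a) (2^n) r = a
      have h0 := lint_pt (r := r) (hτ0 n) (sch φ r (T/2^n) a) (Nat.zero_le (2^n))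
      rw [pt_zero] at h0
      exact h0
    · intro i j hij hj
      rw [Set.projIcc_of_mem hrT (pt_mem n j hj),
        Set.projIcc_of_mem hrT (pt_mem n i (hij.trans hj))]
      show ‖lint r (T/2^n) (sch φ r (T/2^n) a) (2^n) (pt r (T/2^n) j)
        - φ (pt r (T/2^n) j) (pt r (T/2^n) i)
          (lint r (T/2^n) (sch φ r (T/2^n) a) (2^n) (pt r (T/2^n) i))‖ ≤ _
      rw [lint_pt (r := r) (hτ0 n) _ hj, lint_pt (r := r) (hτ0 n) _ (hij.trans hj)]
      exact davie n i j hij hj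
    · intro u
      exact zmem n u u.2
    · intro k u v h1 h2
      exact hhz k n u v u.2 v.2 h1 h2
  have ANmono : ∀ n, AN (n+1) ⊆ AN n := by
    intro n f hf
    obtain ⟨hf1, hf2, hf3, hf4⟩ := hf
    refine ⟨hf1, ?_, hf3, hf4⟩
    intro i j hij hj
    have hpt : ∀ k : ℕ, pt r (T/2^n) k = pt r (T/2^(n+1)) (2*k) := by
      intro k; unfold pt; push_cast; rw [pow_succ]; ring
    have hps : (2:ℕ)^(n+1) = 2 * 2^n := by ring
    have h2j : 2*j ≤ 2^(n+1) := by omega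
    have h2ij : 2*i ≤ 2*j := by omega
    have h5 := hf2 (2*i) (2*j) h2ij h2j
    rw [hpt i, hpt j]
    exact h5
  have ANcomp0 : IsCompact (AN 0) :=
    IsCompact.of_isClosed_subset (isCompact_univ_pi fun _ => hKcomp) (ANclosed 0)
      (fun f hf => Set.mem_univ_pi.mpr hf.2.2.1)
  obtain ⟨f, hfint⟩ := IsCompact.nonempty_iInter_of_sequence_nonempty_isCompact_isClosed
    AN ANmono ANne ANcomp0 ANclosed
  simp only [Set.mem_iInter] at hfint
  have hfr : f ⟨r, hrmem⟩ = a := (hfint 0).1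
  have hfK : ∀ u : ↥(Icc r (r + T)), f u ∈ K := (hfint 0).2.2.1
  have hfmod : ∀ k : ℕ, ∀ u v : ↥(Icc r (r + T)), (u:ℝ) ≤ v → (v:ℝ) - u ≤ hh k →
      ‖f v - f u‖ ≤ 1/(k+1) := (hfint 0).2.2.2
  have hfdy : ∀ n, ∀ i j : ℕ, i ≤ j → ∀ hj : j ≤ 2 ^ n,
      ‖f (Set.projIcc r (r+T) hrT (pt r (T/2^n) j))
        - φ (pt r (T/2^n) j) (pt r (T/2^n) i)
          (f (Set.projIcc r (r+T) hrT (pt r (T/2^n) i)))‖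
        ≤ LT * Nsup * ϖ (ω (pt r (T/2^n) i) (pt r (T/2^n) j)) :=
    fun n => (hfint n).2.1
  have hfc : Continuous f := by
    rw [Metric.continuous_iff]
    intro x ε hε
    obtain ⟨k, hk⟩ := exists_nat_one_div_lt (half_pos hε)
    refine ⟨hh k, hh0 k, ?_⟩
    intro y hxy
    have hxy' : |(y:ℝ) - x| < hh k := by rwa [Subtype.dist_eq, Real.dist_eq] at hxy
    obtain ⟨ha1, ha2⟩ := abs_lt.mp hxy'
    rcases le_total (x:ℝ) (y:ℝ) with hcmp | hcmp
    · have h5 := hfmod k x y hcmp (by linarith)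
      calc dist (f y) (f x) = ‖f y - f x‖ := dist_eq_norm _ _
        _ ≤ 1/(k+1) := h5
        _ < ε := by push_cast at hk ⊢; linarith
    · have h5 := hfmod k y x hcmp (by linarith)
      calc dist (f y) (f x) = ‖f x - f y‖ := by rw [dist_eq_norm, norm_sub_rev]
        _ ≤ 1/(k+1) := h5
        _ < ε := by push_cast at hk ⊢; linarith
  -- the defect estimate for the limit function, at all pairs of times
  have hfdefect : ∀ u v : ↥(Icc r (r + T)), (u:ℝ) ≤ v →
      ‖f v - φ v u (f u)‖ ≤ LT * Nsup * ϖ (ω u v) := by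
    intro u v huv
    rcases eq_or_lt_of_le huv with he | hlt
    · have hue : u = v := Subtype.ext he
      subst hue
      rw [hφ.flow_id (hr.trans u.2.1) (f u), sub_self, norm_zero]
      exact mul_nonneg hC0.le (hϖnn _ (hω0 _ _ u.2.1 le_rfl u.2.2))
    · set s : ℝ := (u:ℝ) with hsdef
      set t : ℝ := (v:ℝ) with htdef
      have hsmem : s ∈ Icc r (r+T) := u.2
      have htmem : t ∈ Icc r (r+T) := v.2
      -- dyadic approximating points
      set sn : ℕ → ℝ := fun n => pt r (T/2^n) (⌈(s - r)/(T/2^n)⌉₊) with hsndef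
      set tn : ℕ → ℝ := fun n => pt r (T/2^n) (⌊(t - r)/(T/2^n)⌋₊) with htndef
      have hq0 : ∀ n : ℕ, (0:ℝ) ≤ (s - r)/(T/2^n) :=
        fun n => div_nonneg (by linarith [hsmem.1]) (hτ0 n).le
      have hsn_ge : ∀ n : ℕ, s ≤ sn n := by
        intro n
        have hq : (s - r)/(T/2^n) ≤ (⌈(s - r)/(T/2^n)⌉₊ : ℝ) := Nat.le_ceil _
        have h5 := mul_le_mul_of_nonneg_right hq (hτ0 n).le
        rw [div_mul_cancel₀ _ (ne_of_gt (hτ0 n))] at h5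
        show s ≤ pt r (T/2^n) (⌈(s - r)/(T/2^n)⌉₊)
        unfold pt
        linarith
      have hsn_le : ∀ n : ℕ, sn n ≤ s + T/2^n := by
        intro n
        have hq : (⌈(s - r)/(T/2^n)⌉₊ : ℝ) < (s - r)/(T/2^n) + 1 :=
          Nat.ceil_lt_add_one (hq0 n)
        have h5 := mul_le_mul_of_nonneg_right hq.le (hτ0 n).le
        rw [add_mul, div_mul_cancel₀ _ (ne_of_gt (hτ0 n)), one_mul] at h5
        show pt r (T/2^n) (⌈(s - r)/(T/2^n)⌉₊) ≤ s + T/2^n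
        unfold pt
        linarith
      have htn_le : ∀ n : ℕ, tn n ≤ t := by
        intro n
        have hq : ((⌊(t - r)/(T/2^n)⌋₊ : ℕ) : ℝ) ≤ (t - r)/(T/2^n) :=
          Nat.floor_le (div_nonneg (by linarith [htmem.1]) (hτ0 n).le)
        have h5 := mul_le_mul_of_nonneg_right hq (hτ0 n).le
        rw [div_mul_cancel₀ _ (ne_of_gt (hτ0 n))] at h5
        show pt r (T/2^n) (⌊(t - r)/(T/2^n)⌋₊) ≤ t
        unfold pt
        linarith
      have htn_ge : ∀ n : ℕ, t - T/2^n ≤ tn n := by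
        intro n
        have hq : (t - r)/(T/2^n) < (⌊(t - r)/(T/2^n)⌋₊ : ℝ) + 1 :=
          Nat.lt_floor_add_one _
        have h5 := mul_le_mul_of_nonneg_right hq.le (hτ0 n).le
        rw [add_mul, div_mul_cancel₀ _ (ne_of_gt (hτ0 n)), one_mul] at h5
        show t - T/2^n ≤ pt r (T/2^n) (⌊(t - r)/(T/2^n)⌋₊)
        unfold pt
        linarith
      have hm2n : ∀ n : ℕ, ⌊(t - r)/(T/2^n)⌋₊ ≤ 2^n := by
        intro n
        have hple : (t - r)/(T/2^n) ≤ (((2:ℕ)^n : ℕ) : ℝ) := by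
          rw [div_le_iff₀ (hτ0 n)]
          push_cast
          rw [hτT n]
          linarith [htmem.2]
        have h5 := Nat.floor_mono hple
        rwa [Nat.floor_natCast] at h5
      have hsnr : ∀ n : ℕ, r ≤ sn n := by
        intro n
        show r ≤ pt r (T/2^n) (⌈(s - r)/(T/2^n)⌉₊)
        unfold pt
        have : (0:ℝ) ≤ (⌈(s - r)/(T/2^n)⌉₊ : ℝ) * (T/2^n) := by positivity
        linarith
      have htnr : ∀ n : ℕ, r ≤ tn n := by
        intro n
        show r ≤ pt r (T/2^n) (⌊(t - r)/(T/2^n)⌋₊)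
        unfold pt
        have : (0:ℝ) ≤ (⌊(t - r)/(T/2^n)⌋₊ : ℝ) * (T/2^n) := by positivity
        linarith
      have hτto : Filter.Tendsto (fun n : ℕ => T/2^n) Filter.atTop (nhds 0) := by
        have h1 : (fun n : ℕ => T/2^n) = fun n : ℕ => T * (1/2:ℝ)^n := by
          funext n
          rw [one_div, inv_pow, div_eq_mul_inv]
        rw [h1]
        simpa using (tendsto_pow_atTop_nhds_zero_of_lt_one
          (by norm_num : (0:ℝ) ≤ 1/2) (by norm_num : (1:ℝ)/2 < 1)).const_mul T
      have hev : ∀ᶠ n in Filter.atTop, T/2^n < (t - s)/2 :=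
        hτto.eventually_lt_const (by linarith)
      -- memberships and the dyadic estimate, eventually in n
      have hgood : ∀ n : ℕ, T/2^n < (t - s)/2 →
          (sn n ∈ Icc r (r+T) ∧ tn n ∈ Icc r (r+T) ∧ sn n ≤ tn n) := by
        intro n hn
        have e1 := hsn_ge n
        have e2 := hsn_le n
        have e3 := htn_le n
        have e4 := htn_ge n
        have e5 : sn n ≤ tn n := by linarith
        exact ⟨⟨hsnr n, by linarith [htmem.2]⟩, ⟨htnr n, by linarith [htmem.2]⟩, e5⟩
      have hbnd : ∀ᶠ n in Filter.atTop,
          ‖f (Set.projIcc r (r+T) hrT (tn n))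
            - φ (tn n) (sn n) (f (Set.projIcc r (r+T) hrT (sn n)))‖
            ≤ LT * Nsup * ϖ (ω s t) := by
        filter_upwards [hev] with n hn
        obtain ⟨hmems, hmemt, hsleq⟩ := hgood n hn
        have hkm : ⌈(s - r)/(T/2^n)⌉₊ ≤ ⌊(t - r)/(T/2^n)⌋₊ := by
          have h5 : (⌈(s - r)/(T/2^n)⌉₊ : ℝ) * (T/2^n) ≤ (⌊(t - r)/(T/2^n)⌋₊ : ℝ) * (T/2^n) := by
            have := hsleq
            show _ ≤ _
            have h6 : pt r (T/2^n) (⌈(s - r)/(T/2^n)⌉₊) ≤ pt r (T/2^n) (⌊(t - r)/(T/2^n)⌋₊) := hsleq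
            unfold pt at h6
            linarith
          have h7 := le_of_mul_le_mul_right h5 (hτ0 n)
          exact_mod_cast h7
        have h8 := hfdy n _ _ hkm (hm2n n)
        refine h8.trans ?_
        refine mul_le_mul_of_nonneg_left ?_ hC0.le
        refine hϖmono _ _ (hω0 _ _ hmems.1 hsleq hmemt.2) ?_
        exact hωmono s (sn n) (tn n) t hsmem.1 (hsn_ge n) hsleq (htn_le n) htmem.2
      -- convergence of the approximating quantities
      have hsto : Filter.Tendsto sn Filter.atTop (nhds s) := by
        refine tendsto_of_tendsto_of_tendsto_of_le_of_le' tendsto_const_nhds ?_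
          (Filter.Eventually.of_forall hsn_ge) (Filter.Eventually.of_forall hsn_le)
        simpa using tendsto_const_nhds.add hτto
      have htto : Filter.Tendsto tn Filter.atTop (nhds t) := by
        refine tendsto_of_tendsto_of_tendsto_of_le_of_le' ?_ tendsto_const_nhds
          (Filter.Eventually.of_forall htn_ge) (Filter.Eventually.of_forall htn_le)
        have h5 : Filter.Tendsto (fun n : ℕ => t - T/2^n) Filter.atTop (nhds (t - 0)) :=
          tendsto_const_nhds.sub hτto
        simpa using h5
      have hprojs : ∀ᶠ n in Filter.atTop,
          ((Set.projIcc r (r+T) hrT (sn n) : ℝ)) = sn n := by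
        filter_upwards [hev] with n hn
        rw [Set.projIcc_of_mem hrT (hgood n hn).1]
      have hprojt : ∀ᶠ n in Filter.atTop,
          ((Set.projIcc r (r+T) hrT (tn n) : ℝ)) = tn n := by
        filter_upwards [hev] with n hn
        rw [Set.projIcc_of_mem hrT (hgood n hn).2.1]
      have hsto' : Filter.Tendsto (fun n => Set.projIcc r (r+T) hrT (sn n))
          Filter.atTop (nhds u) := by
        rw [tendsto_subtype_rng]
        refine Filter.Tendsto.congr' ?_ hsto
        filter_upwards [hprojs] with n hn
        exact hn.symm
      have htto' : Filter.Tendsto (fun n => Set.projIcc r (r+T) hrT (tn n))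
          Filter.atTop (nhds v) := by
        rw [tendsto_subtype_rng]
        refine Filter.Tendsto.congr' ?_ htto
        filter_upwards [hprojt] with n hn
        exact hn.symm
      have hfu : Filter.Tendsto (fun n => f (Set.projIcc r (r+T) hrT (sn n)))
          Filter.atTop (nhds (f u)) := (hfc.tendsto u).comp hsto'
      have hfv : Filter.Tendsto (fun n => f (Set.projIcc r (r+T) hrT (tn n)))
          Filter.atTop (nhds (f v)) := (hfc.tendsto v).comp htto'
      have hΦpt : ((s, t), f u) ∈ D ×ˢ K := ⟨⟨⟨hsmem, htmem⟩, hlt.le⟩, hfK u⟩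
      have hcwa := ΦcontOn ((s, t), f u) hΦpt
      have hseq : Filter.Tendsto
          (fun n => ((sn n, tn n), f (Set.projIcc r (r+T) hrT (sn n))))
          Filter.atTop (nhdsWithin ((s, t), f u) (D ×ˢ K)) := by
        rw [tendsto_nhdsWithin_iff]
        constructor
        · exact (hsto.prodMk_nhds htto).prodMk_nhds hfu
        · filter_upwards [hev] with n hn
          obtain ⟨hmems, hmemt, hsleq⟩ := hgood n hn
          exact ⟨⟨⟨hmems, hmemt⟩, hsleq⟩, hfK _⟩
      have hφto : Filter.Tendsto
          (fun n => φ (tn n) (sn n) (f (Set.projIcc r (r+T) hrT (sn n))))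
          Filter.atTop (nhds (φ t s (f u))) := by
        have h5 := Filter.Tendsto.comp hcwa hseq
        simpa [Function.comp_def] using h5
      have hnorm : Filter.Tendsto
          (fun n => ‖f (Set.projIcc r (r+T) hrT (tn n))
            - φ (tn n) (sn n) (f (Set.projIcc r (r+T) hrT (sn n)))‖)
          Filter.atTop (nhds ‖f v - φ t s (f u)‖) := (hfv.sub hφto).norm
      exact le_of_tendsto hnorm hbnd
  refine ⟨⟨fun w => f (Set.projIcc r (r+T) hrT w), ?_, ?_, ?_⟩, ?_⟩
  · exact (hfc.comp continuous_projIcc).continuousOn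
  · show f (Set.projIcc r (r+T) hrT r) = a
    rw [Set.projIcc_left]
    exact hfr
  · intro s t h1 h2 h3
    show ‖f (Set.projIcc r (r+T) hrT t) - φ t s (f (Set.projIcc r (r+T) hrT s))‖
      ≤ LT * Nsup * ϖ (ω s t)
    rw [Set.projIcc_of_mem hrT (⟨h1.trans h2, h3⟩ : t ∈ Icc r (r+T)),
      Set.projIcc_of_mem hrT (⟨h1, h2.trans h3⟩ : s ∈ Icc r (r+T))]
    exact hfdefect ⟨s, ⟨h1, h2.trans h3⟩⟩ ⟨t, ⟨h1.trans h2, h3⟩⟩ h2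
  -- Part 2 : compactness via Arzelà–Ascoli
  set SM : Set C(↥(Icc r (r + T)), V) :=
    {g | g ⟨r, hrmem⟩ = a ∧ ∀ u v : ↥(Icc r (r + T)), (u:ℝ) ≤ v →
      ‖g v - φ v u (g u)‖ ≤ LT * Nsup * ϖ (ω u v)} with hSMdef
  have hTSeq : {g : C(Set.Icc r (r + T), V) |
      ∃ y ∈ Gpaths φ ω ϖ (LT * Nsup) T r a, ∀ t : Set.Icc r (r + T), g t = y t} = SM := by
    ext g
    constructor
    · rintro ⟨y, ⟨hyc, hyr, hyd⟩, hgy⟩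
      constructor
      · rw [hgy ⟨r, hrmem⟩]; exact hyr
      · intro u v huv
        rw [hgy u, hgy v]
        exact hyd u.2.1 huv v.2.2
    · intro hg
      refine ⟨fun w => g (Set.projIcc r (r+T) hrT w), ⟨?_, ?_, ?_⟩, ?_⟩
      · exact (g.continuous.comp continuous_projIcc).continuousOn
      · show g (Set.projIcc r (r+T) hrT r) = a
        rw [Set.projIcc_left]; exact hg.1
      · intro s t h1 h2 h3
        show ‖g (Set.projIcc r (r+T) hrT t) - φ t s (g (Set.projIcc r (r+T) hrT s))‖
          ≤ LT * Nsup * ϖ (ω s t)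
        rw [Set.projIcc_of_mem hrT (⟨h1.trans h2, h3⟩ : t ∈ Icc r (r+T)),
          Set.projIcc_of_mem hrT (⟨h1, h2.trans h3⟩ : s ∈ Icc r (r+T))]
        exact hg.2 ⟨s, ⟨h1, h2.trans h3⟩⟩ ⟨t, ⟨h1.trans h2, h3⟩⟩ h2
      · intro w
        show g w = g (Set.projIcc r (r+T) hrT w)
        rw [Set.projIcc_val]
  rw [hTSeq]
  have memSMK : ∀ g : ↥(Icc r (r + T)) → V, g ⟨r, hrmem⟩ = a →
      (∀ u v : ↥(Icc r (r + T)), (u:ℝ) ≤ v →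
        ‖g v - φ v u (g u)‖ ≤ LT * Nsup * ϖ (ω u v)) →
      ∀ w : ↥(Icc r (r + T)), g w ∈ K := by
    intro g h1 h2 w
    have h3 := h2 ⟨r, hrmem⟩ w w.2.1
    rw [h1] at h3
    exact memKOf w (g w) w.2 h3
  have modSM : ∀ ε : ℝ, 0 < ε → ∃ h : ℝ, 0 < h ∧
      ∀ g : ↥(Icc r (r + T)) → V, g ⟨r, hrmem⟩ = a →
      (∀ u v : ↥(Icc r (r + T)), (u:ℝ) ≤ v →
        ‖g v - φ v u (g u)‖ ≤ LT * Nsup * ϖ (ω u v)) →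
      ∀ u v : ↥(Icc r (r + T)), (u:ℝ) ≤ v → (v:ℝ) - u ≤ h → ‖g v - g u‖ ≤ ε := by
    intro ε hε
    obtain ⟨h, hh', hm⟩ := modS ε hε
    refine ⟨h, hh', ?_⟩
    intro g h1 h2 u v huv hvu
    have h3 := h2 u v huv
    have h4 := hm u v (g u) u.2.1 huv v.2.2 hvu (memSMK g h1 h2 u)
    calc ‖g v - g u‖ ≤ ‖g v - φ v u (g u)‖ + ‖φ v u (g u) - g u‖ :=
          norm_sub_le_norm_sub_add_norm_sub _ _ _
      _ ≤ ε := by linarith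
  set AM : Set (↥(Icc r (r + T)) → V) :=
    {g | g ⟨r, hrmem⟩ = a ∧ ∀ u v : ↥(Icc r (r + T)), (u:ℝ) ≤ v →
      ‖g v - φ v u (g u)‖ ≤ LT * Nsup * ϖ (ω u v)} with hAMdef
  have hcontAM : ∀ g ∈ AM, Continuous g := by
    intro g hg
    rw [Metric.continuous_iff]
    intro x ε hε
    obtain ⟨h, hh', hm⟩ := modSM (ε/2) (by linarith)
    refine ⟨h, hh', ?_⟩
    intro y hxy
    have hxy' : |(y:ℝ) - x| < h := by rwa [Subtype.dist_eq, Real.dist_eq] at hxy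
    obtain ⟨ha1, ha2⟩ := abs_lt.mp hxy'
    rcases le_total ((x:ℝ)) ((y:ℝ)) with hcmp | hcmp
    · have h5 := hm g hg.1 hg.2 x y hcmp (by linarith)
      calc dist (g y) (g x) = ‖g y - g x‖ := dist_eq_norm _ _
        _ ≤ ε/2 := h5
        _ < ε := by linarith
    · have h5 := hm g hg.1 hg.2 y x hcmp (by linarith)
      calc dist (g y) (g x) = ‖g x - g y‖ := by rw [dist_eq_norm, norm_sub_rev]
        _ ≤ ε/2 := h5
        _ < ε := by linarith
  have himg : ContinuousMap.toFun '' SM = AM := by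
    ext g
    constructor
    · rintro ⟨g0, hg0, rfl⟩
      exact hg0
    · intro hg
      exact ⟨⟨g, hcontAM g hg⟩, hg, rfl⟩
  have hAMclosed : IsClosed AM := by
    have heq2 : AM = ({g : ↥(Icc r (r + T)) → V | g ⟨r, hrmem⟩ = a}
        ∩ ⋂ (u : ↥(Icc r (r+T))), ⋂ (v : ↥(Icc r (r+T))), ⋂ (_ : (u:ℝ) ≤ v),
          {g : ↥(Icc r (r + T)) → V |
            ‖g v - φ v u (g u)‖ ≤ LT * Nsup * ϖ (ω u v)}) := by
      ext g
      simp only [hAMdef, Set.mem_setOf_eq, Set.mem_inter_iff, Set.mem_iInter]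
    rw [heq2]
    refine (isClosed_eq (continuous_apply _) continuous_const).inter ?_
    refine isClosed_iInter fun u => isClosed_iInter fun v => isClosed_iInter fun huv => ?_
    exact isClosed_le (Continuous.norm ((continuous_apply _).sub
      ((contφ _ _ (hr.trans u.2.1) huv).comp (continuous_apply _)))) continuous_const
  have hAMcomp : IsCompact AM :=
    IsCompact.of_isClosed_subset (isCompact_univ_pi fun _ => hKcomp) hAMclosed
      (fun g hg => Set.mem_univ_pi.mpr (memSMK g hg.1 hg.2))
  apply ArzelaAscoli.isCompact_of_equicontinuous
  · rw [himg]
    exact hAMcomp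
  · intro x
    rw [Metric.equicontinuousAt_iff]
    intro ε hε
    obtain ⟨h, hh', hm⟩ := modSM (ε/2) (by linarith)
    refine ⟨h, hh', ?_⟩
    intro y hxy i
    have hmem : (i : C(↥(Icc r (r + T)), V)) ∈ SM := i.2
    have hxy' : |(y:ℝ) - x| < h := by rwa [Subtype.dist_eq, Real.dist_eq] at hxy
    obtain ⟨ha1, ha2⟩ := abs_lt.mp hxy'
    rcases le_total ((x:ℝ)) ((y:ℝ)) with hcmp | hcmp
    · have h5 := hm (⇑(i : C(↥(Icc r (r + T)), V))) hmem.1 hmem.2 x y hcmp (by linarith)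
      calc dist ((i : C(↥(Icc r (r + T)), V)) x) ((i : C(↥(Icc r (r + T)), V)) y)
          = ‖(i : C(↥(Icc r (r + T)), V)) y - (i : C(↥(Icc r (r + T)), V)) x‖ := by
            rw [dist_comm, dist_eq_norm]
        _ ≤ ε/2 := h5
        _ < ε := by linarith
    · have h5 := hm (⇑(i : C(↥(Icc r (r + T)), V))) hmem.1 hmem.2 y x hcmp (by linarith)
      calc dist ((i : C(↥(Icc r (r + T)), V)) x) ((i : C(↥(Icc r (r + T)), V)) y)
          = ‖(i : C(↥(Icc r (r + T)), V)) x - (i : C(↥(Icc r (r + T)), V)) y‖ := by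
            rw [dist_eq_norm]
        _ ≤ ε/2 := h5
        _ < ε := by linarith

end
end

section
/- Under Hypothesis 1, fix r ≥ 0, and for a path y ∈ C([r,r+T],V) let ỹ ∈ C([0,1],V) denote its reparametrization ỹ_t := y_{r+tT}. Then for every closed subset K of C([0,1],V) (uniform norm), the set {a ∈ V : there exists y ∈ G^{L_T}_φ(r,a) with ỹ ∈ K} is closed in V; in particular it is a Borel set. -/
open Set BoundedContinuousFunction

noncomputable section

/-- Uniform smallness of `‖φ t s b - b‖` near the diagonal, on a compact set. -/
lemma phi_unif_small {V : Type*} [NormedAddCommGroup V] [NormedSpace ℝ V]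
    [FiniteDimensional ℝ V] (φ : ℝ → ℝ → V → V) (δT : ℝ) (hδT : 0 ≤ δT)
    (hcont : ∀ a : V, ContinuousOn (fun p : ℝ × ℝ => φ p.2 p.1 a)
      {p : ℝ × ℝ | 0 ≤ p.1 ∧ p.1 ≤ p.2})
    (hid : ∀ ⦃t : ℝ⦄, 0 ≤ t → ∀ a, φ t t a = a)
    (hlip : ∀ ⦃s t : ℝ⦄, 0 ≤ s → s ≤ t → ∀ a b, ‖φ t s a - φ t s b‖ ≤ (1 + δT) * ‖a - b‖)
    (r T R : ℝ) (hr : 0 ≤ r) (ε : ℝ) (hε : 0 < ε) :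
    ∃ h > (0:ℝ), ∀ s t (b : V), r ≤ s → s ≤ t → t ≤ r + T → ‖b‖ ≤ R → t - s ≤ h →
      ‖φ t s b - b‖ ≤ ε := by
  classical
  set D : Set (ℝ × ℝ) := {p : ℝ × ℝ | 0 ≤ p.1 ∧ p.1 ≤ p.2} with hD
  have hDclosed : IsClosed D :=
    (isClosed_le continuous_const continuous_fst).inter (isClosed_le continuous_fst continuous_snd)
  set G : (ℝ × ℝ) × V → ℝ := fun q => ‖φ q.1.2 q.1.1 q.2 - q.2‖ with hG
  -- joint continuity of G on D ×ˢ univ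
  have hGcont : ContinuousOn G (D ×ˢ (univ : Set V)) := by
    have h1 : ContinuousOn (fun q : (ℝ × ℝ) × V => φ q.1.2 q.1.1 q.2) (D ×ˢ (univ : Set V)) := by
      intro q hq
      rw [Metric.continuousWithinAt_iff]
      intro ε' hε'
      have h1 := hcont q.2 q.1 hq.1
      rw [Metric.continuousWithinAt_iff] at h1
      obtain ⟨d₁, hd₁, h1⟩ := h1 (ε' / 2) (by positivity)
      refine ⟨min d₁ (ε' / (2 * (2 + δT))), by positivity, ?_⟩
      intro p hp hd
      have hp1 : p.1 ∈ D := hp.1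
      have hdist1 : dist p.1 q.1 < d₁ :=
        lt_of_le_of_lt (le_trans (le_max_left _ _) (le_of_eq (Prod.dist_eq).symm))
          (lt_of_lt_of_le hd (min_le_left _ _))
      have hdist2 : dist p.2 q.2 < ε' / (2 * (2 + δT)) :=
        lt_of_le_of_lt (le_trans (le_max_right _ _) (le_of_eq (Prod.dist_eq).symm))
          (lt_of_lt_of_le hd (min_le_right _ _))
      calc dist (φ p.1.2 p.1.1 p.2) (φ q.1.2 q.1.1 q.2)
          ≤ dist (φ p.1.2 p.1.1 p.2) (φ p.1.2 p.1.1 q.2)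
            + dist (φ p.1.2 p.1.1 q.2) (φ q.1.2 q.1.1 q.2) := dist_triangle _ _ _
        _ < ε' / 2 + ε' / 2 := by
            refine add_lt_add_of_le_of_lt ?_ (h1 hp1 hdist1)
            rw [dist_eq_norm]
            calc ‖φ p.1.2 p.1.1 p.2 - φ p.1.2 p.1.1 q.2‖ ≤ (1 + δT) * ‖p.2 - q.2‖ :=
              hlip hp1.1 hp1.2 _ _
            _ ≤ (1 + δT) * (ε' / (2 * (2 + δT))) := by
                refine mul_le_mul_of_nonneg_left ?_ (by linarith)
                rw [← dist_eq_norm]; exact hdist2.le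
            _ ≤ (2 + δT) * (ε' / (2 * (2 + δT))) := by
                have : (0:ℝ) ≤ ε' / (2 * (2 + δT)) := by positivity
                nlinarith
            _ = ε' / 2 := by field_simp
        _ = ε' := by ring
    exact (h1.sub continuous_snd.continuousOn).norm
  set Kc : Set ((ℝ × ℝ) × V) :=
    ((Icc r (r + T) ×ˢ Icc r (r + T)) ∩ {p : ℝ × ℝ | p.1 ≤ p.2}) ×ˢ Metric.closedBall 0 R
    with hKc
  have hKcD : Kc ⊆ D ×ˢ (univ : Set V) := by
    rintro ⟨p, b⟩ ⟨⟨hpI, hple⟩, -⟩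
    exact ⟨⟨le_trans hr hpI.1.1, hple⟩, mem_univ _⟩
  have hKcclosed : IsClosed Kc :=
    (((isClosed_Icc.prod isClosed_Icc).inter
      (isClosed_le continuous_fst continuous_snd)).prod Metric.isClosed_closedBall)
  have hKccpt : IsCompact Kc := by
    apply Metric.isCompact_of_isClosed_isBounded hKcclosed
    exact (((Metric.isBounded_Icc _ _).prod (Metric.isBounded_Icc _ _)).subset
      inter_subset_left).prod Metric.isBounded_closedBall
  set S' : Set ((ℝ × ℝ) × V) := Kc ∩ ((D ×ˢ (univ : Set V)) ∩ G ⁻¹' Ici ε) with hS'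
  have hS'closed : IsClosed S' :=
    hKcclosed.inter (hGcont.preimage_isClosed_of_isClosed (hDclosed.prod isClosed_univ)
      isClosed_Ici)
  have hS'cpt : IsCompact S' := hKccpt.of_isClosed_subset hS'closed inter_subset_left
  rcases S'.eq_empty_or_nonempty with hemp | hne
  · refine ⟨1, one_pos, fun s t b hs hst ht hb _ => ?_⟩
    by_contra hcon
    push_neg at hcon
    have hmem : ((s, t), b) ∈ S' := by
      refine ⟨⟨⟨⟨⟨hs, le_trans hst ht⟩, le_trans hs hst, ht⟩, hst⟩,
        Metric.mem_closedBall.2 ?_⟩, ⟨⟨le_trans hr hs, hst⟩, mem_univ _⟩, le_of_lt hcon⟩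
      rwa [dist_zero_right]
    rw [hemp] at hmem; exact hmem
  · obtain ⟨q₀, hq₀S, hq₀min⟩ := hS'cpt.exists_isMinOn hne
      (((continuous_snd.comp continuous_fst).sub
        (continuous_fst.comp continuous_fst)).continuousOn :
        ContinuousOn (fun q : (ℝ × ℝ) × V => q.1.2 - q.1.1) S')
    set m := q₀.1.2 - q₀.1.1 with hm
    have hm0 : 0 < m := by
      have hle12 : q₀.1.1 ≤ q₀.1.2 := hq₀S.1.1.2
      rcases lt_or_eq_of_le hle12 with h | h
      · simpa [hm] using sub_pos.2 h
      · exfalso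
        have h0 : 0 ≤ q₀.1.1 := le_trans hr (hq₀S.1.1.1 : q₀.1 ∈ Icc r (r+T) ×ˢ Icc r (r+T)).1.1
        have : G q₀ = 0 := by
          simp only [hG, ← h, hid h0, sub_self, norm_zero]
        have h2 : ε ≤ G q₀ := hq₀S.2.2
        rw [this] at h2
        linarith
    refine ⟨m / 2, by positivity, fun s t b hs hst ht hb hgap => ?_⟩
    by_contra hcon
    push_neg at hcon
    have hmem : ((s, t), b) ∈ S' := by
      refine ⟨⟨⟨⟨⟨hs, le_trans hst ht⟩, le_trans hs hst, ht⟩, hst⟩,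
        Metric.mem_closedBall.2 ?_⟩, ⟨⟨le_trans hr hs, hst⟩, mem_univ _⟩, le_of_lt hcon⟩
      rwa [dist_zero_right]
    have h3 : q₀.1.2 - q₀.1.1 ≤ t - s := hq₀min hmem
    simp only [hm] at hm0 hgap
    linarith


set_option maxHeartbeats 2000000 in
/-- Lemma: measurability of `a ↦ G^{L_T}_φ(r,a)`.
Under Hypothesis 1, fix `r ≥ 0`; for a path `y` on `[r,r+T]` let `ỹ : [0,1] → V`,
`ỹ_t = y_{r+tT}`, be its reparametrization. For every closed `K ⊆ C([0,1],V)` (uniform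
norm), the set `{a ∈ V : ∃ y ∈ G^{L_T}_φ(r,a), ỹ ∈ K}` is closed in `V`, hence Borel. -/
theorem statement6 {V : Type*} [NormedAddCommGroup V] [NormedSpace ℝ V]
    [FiniteDimensional ℝ V] [MeasurableSpace V] [BorelSpace V]
    (T : ℝ)
    (ω : ℝ → ℝ → ℝ) (hω : ∀ S > (0:ℝ), IsControl S ω)
    (κ : ℝ) (hκ : κ ∈ Set.Ioo (0:ℝ) 1)
    (ϖ : ℝ → ℝ) (hϖ : IsRemainder κ ϖ)
    (δ : ℝ → ℝ) (hδ0 : ∀ S, 0 ≤ δ S) (hδmono : Monotone δ)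
    (hδlim : Filter.Tendsto δ (nhdsWithin 0 (Set.Ioi 0)) (nhds 0))
    (N : V → ℝ) (hN1 : ∀ a, 1 ≤ N a)
    (CN : NNReal) (hNlip : LipschitzWith CN N)
    (hNbdd : BddAbove (Set.range N))
    (φ : ℝ → ℝ → V → V) (hφ : IsLipAlmostFlow ω ϖ N (δ T) φ)
    (hT : 0 < T) (hsmall : κ * (1 + δ T) < 1)
    (LT : ℝ) (hLT : LT = 2 / (1 - κ * (1 + δ T)))
    (Nsup : ℝ) (hNsup : Nsup = sSup (Set.range N))
    (r : ℝ) (hr : 0 ≤ r)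
    (K : Set C(Set.Icc (0:ℝ) 1, V)) (hK : IsClosed K) :
    IsClosed {a : V | ∃ y ∈ Gpaths φ ω ϖ (LT * Nsup) T r a,
      ∃ g ∈ K, ∀ t : Set.Icc (0:ℝ) 1, g t = y (r + t * T)} ∧
    MeasurableSet {a : V | ∃ y ∈ Gpaths φ ω ϖ (LT * Nsup) T r a,
      ∃ g ∈ K, ∀ t : Set.Icc (0:ℝ) 1, g t = y (r + t * T)} := by
  obtain ⟨hκ0, hκ1⟩ := hκ
  have hδT : 0 ≤ δ T := hδ0 T
  have hden : 0 < 1 - κ * (1 + δ T) := by linarith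
  have hLT0 : 0 < LT := by rw [hLT]; positivity
  have hNs1 : (1:ℝ) ≤ Nsup := by
    rw [hNsup]; exact le_trans (hN1 0) (le_csSup hNbdd ⟨0, rfl⟩)
  have hNle : ∀ b : V, N b ≤ Nsup := fun b => by
    rw [hNsup]; exact le_csSup hNbdd ⟨b, rfl⟩
  have hCc0 : 0 < LT * Nsup := mul_pos hLT0 (by linarith)
  set Cc := LT * Nsup with hCc
  have hrT : (0:ℝ) < r + T := by linarith
  have hctrl := hω (r + T) hrT
  have hmono := hϖ.strictMonoOn.monotoneOn
  have hc0 : ContinuousWithinAt ϖ (Ici 0) 0 := hϖ.contOn 0 (by simp)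
  -- ϖ 0 = 0
  have hϖ0 : ϖ 0 = 0 := by
    have h2 : Filter.Tendsto (fun x : ℝ => x / 2) (nhdsWithin 0 (Ioi 0))
        (nhdsWithin 0 (Ici 0)) := by
      apply Filter.Tendsto.mono_right _ (nhdsWithin_mono _ Ioi_subset_Ici_self)
      apply tendsto_nhdsWithin_of_tendsto_nhds_of_eventually_within
      · have := ((continuous_id.div_const (2:ℝ)).tendsto (0:ℝ)).mono_left
          (nhdsWithin_le_nhds (s := Ioi (0:ℝ)))
        simpa using this
      · filter_upwards [self_mem_nhdsWithin] with x hx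
        exact mem_Ioi.2 (half_pos hx)
    have t1 : Filter.Tendsto (fun x : ℝ => 2 * ϖ (x / 2)) (nhdsWithin 0 (Ioi 0))
        (nhds (2 * ϖ 0)) := Filter.Tendsto.const_mul 2 (hc0.tendsto.comp h2)
    have t2 : Filter.Tendsto (fun x : ℝ => κ * ϖ x) (nhdsWithin 0 (Ioi 0))
        (nhds (κ * ϖ 0)) := Filter.Tendsto.const_mul κ
        (hc0.tendsto.mono_left (nhdsWithin_mono _ Ioi_subset_Ici_self))
    have hle : 2 * ϖ 0 ≤ κ * ϖ 0 := by
      refine le_of_tendsto_of_tendsto t1 t2 ?_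
      filter_upwards [self_mem_nhdsWithin] with x hx
      exact hϖ.doubling x hx
    have hn0 := hϖ.nonneg 0 le_rfl
    nlinarith
  have hϖsmall : ∀ ε > (0:ℝ), ∃ x₀ > (0:ℝ), ∀ x, 0 ≤ x → x < x₀ → ϖ x < ε := by
    intro ε hε
    have hc := hc0
    rw [Metric.continuousWithinAt_iff] at hc
    obtain ⟨d, hd, hcd⟩ := hc ε hε
    refine ⟨d, hd, fun x hx hxd => ?_⟩
    have := hcd (show x ∈ Ici 0 from hx)
      (by rwa [Real.dist_eq, sub_zero, abs_of_nonneg hx])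
    rwa [hϖ0, Real.dist_eq, sub_zero, abs_of_nonneg (hϖ.nonneg x hx)] at this
  -- reduce to sequential closedness
  suffices hcl : IsClosed {a : V | ∃ y ∈ Gpaths φ ω ϖ (LT * Nsup) T r a,
      ∃ g ∈ K, ∀ t : Set.Icc (0:ℝ) 1, g t = y (r + t * T)} by
    exact ⟨hcl, hcl.measurableSet⟩
  rw [← isSeqClosed_iff_isClosed]
  intro A a hA hlim
  simp only [mem_setOf_eq] at hA ⊢
  choose y hy g hgK hrep using hA
  obtain ⟨R₀, hR₀⟩ : ∃ R₀ : ℝ, ∀ n, ‖A n‖ ≤ R₀ := by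
    obtain ⟨R₀, hR₀⟩ := (Metric.isBounded_range_of_tendsto A hlim).exists_norm_le
    exact ⟨R₀, fun n => hR₀ _ (mem_range_self n)⟩
  set R : ℝ := R₀ + (Cc * ϖ (ω r (r + T)) + δ T * Nsup) with hR
  -- control facts
  have hω0 : ∀ s t : ℝ, r ≤ s → s ≤ t → t ≤ r + T → 0 ≤ ω s t := fun s t hs hst ht =>
    hctrl.nonneg (hr.trans hs) hst ht
  have hωle : ∀ s t : ℝ, r ≤ s → s ≤ t → t ≤ r + T → ω s t ≤ ω r (r + T) := by
    intro s t hs hst ht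
    have h1 := hctrl.superadd hr hs hst ht
    have h2 := hctrl.superadd hr (hs.trans hst) ht le_rfl
    have h3 := hctrl.nonneg hr hs ((hst.trans ht))
    have h4 := hctrl.nonneg (hr.trans (hs.trans hst)) ht le_rfl
    linarith
  -- uniform bound on paths
  have hbound : ∀ n, ∀ t : ℝ, r ≤ t → t ≤ r + T → ‖y n t‖ ≤ R := by
    intro n t h1 h2
    obtain ⟨-, hy0, hineq⟩ := hy n
    have e1 : ‖y n t - φ t r (y n r)‖ ≤ Cc * ϖ (ω r t) := hineq le_rfl h1 h2
    have e2 : ‖φ t r (A n) - A n‖ ≤ δ T * N (A n) := hφ.close hr h1 (A n)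
    rw [hy0] at e1
    have e3 : ϖ (ω r t) ≤ ϖ (ω r (r + T)) :=
      hmono (hω0 r t le_rfl h1 h2) (hω0 r (r + T) le_rfl (by linarith) le_rfl)
        (hωle r t le_rfl h1 h2)
    have e4 : Cc * ϖ (ω r t) ≤ Cc * ϖ (ω r (r + T)) :=
      mul_le_mul_of_nonneg_left e3 hCc0.le
    have e5 : δ T * N (A n) ≤ δ T * Nsup := mul_le_mul_of_nonneg_left (hNle _) hδT
    have k0 := norm_add_le (y n t - φ t r (A n)) (φ t r (A n))
    rw [sub_add_cancel] at k0
    have k1 := norm_add_le (φ t r (A n) - A n) (A n)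
    rw [sub_add_cancel] at k1
    rw [hR]
    linarith [hR₀ n]
  -- uniform oscillation
  have hosc : ∀ ε > (0:ℝ), ∃ h > (0:ℝ), ∀ n, ∀ s t : ℝ, r ≤ s → s ≤ t → t ≤ r + T →
      t - s ≤ h → ‖y n t - y n s‖ ≤ ε := by
    intro ε hε
    obtain ⟨x₀, hx₀, hϖs⟩ := hϖsmall (ε / (2 * Cc)) (by positivity)
    obtain ⟨h₁, hh₁, hsm⟩ := hctrl.small x₀ hx₀
    obtain ⟨h₂, hh₂, hφs⟩ := phi_unif_small φ (δ T) hδT hφ.cont hφ.flow_id hφ.lip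
      r T R hr (ε / 2) (by positivity)
    refine ⟨min h₁ h₂, lt_min hh₁ hh₂, fun n s t hs hst ht hgap => ?_⟩
    obtain ⟨-, -, hineq⟩ := hy n
    have e1 : ‖y n t - φ t s (y n s)‖ ≤ Cc * ϖ (ω s t) := hineq hs hst ht
    have e2 : ‖φ t s (y n s) - y n s‖ ≤ ε / 2 :=
      hφs s t (y n s) hs hst ht (hbound n s hs (hst.trans ht))
        (hgap.trans (min_le_right _ _))
    have e3 : ω s t < x₀ := hsm (hr.trans hs) hst ht (hgap.trans (min_le_left _ _))
    have e4 : ϖ (ω s t) < ε / (2 * Cc) := hϖs _ (hω0 s t hs hst ht) e3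
    have e5 : Cc * ϖ (ω s t) ≤ ε / 2 := by
      calc Cc * ϖ (ω s t) ≤ Cc * (ε / (2 * Cc)) :=
            mul_le_mul_of_nonneg_left e4.le hCc0.le
        _ = ε / 2 := by field_simp
    have e6 : y n t - y n s = (y n t - φ t s (y n s)) + (φ t s (y n s) - y n s) := by abel
    calc ‖y n t - y n s‖ ≤ ‖y n t - φ t s (y n s)‖ + ‖φ t s (y n s) - y n s‖ := by
          rw [e6]; exact norm_add_le _ _
      _ ≤ ε := by linarith
  -- bounded continuous reformulation
  set gB : ℕ → (↥(Set.Icc (0:ℝ) 1) →ᵇ V) :=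
    fun n => BoundedContinuousFunction.mkOfCompact (g n) with hgB
  have hgBcoe : ∀ n (u : Set.Icc (0:ℝ) 1), gB n u = g n u := fun n u => rfl
  have huec : UniformEquicontinuous (fun n (u : Set.Icc (0:ℝ) 1) => gB n u) := by
    rw [Metric.uniformEquicontinuous_iff]
    intro ε hε
    obtain ⟨h, hh, ho⟩ := hosc (ε / 2) (by positivity)
    refine ⟨h / T, by positivity, fun u v huv n => ?_⟩
    have key : ∀ u v : Set.Icc (0:ℝ) 1, (u:ℝ) ≤ (v:ℝ) → dist u v < h / T →
        dist (gB n u) (gB n v) ≤ ε / 2 := by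
      intro u v huv hd
      have hu0 : (0:ℝ) ≤ u := u.2.1
      have hv1 : (v:ℝ) ≤ 1 := v.2.2
      have hs : r ≤ r + (u:ℝ) * T := by nlinarith
      have hst : r + (u:ℝ) * T ≤ r + (v:ℝ) * T := by nlinarith
      have ht : r + (v:ℝ) * T ≤ r + T := by nlinarith
      have hdd : (v:ℝ) - (u:ℝ) < h / T := by
        have : dist u v = |(u:ℝ) - (v:ℝ)| := by rw [Subtype.dist_eq, Real.dist_eq]
        rw [this] at hd
        calc (v:ℝ) - (u:ℝ) ≤ |(u:ℝ) - (v:ℝ)| := by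
              rw [abs_sub_comm]; exact le_abs_self _
          _ < h / T := hd
      have hgap : (r + (v:ℝ) * T) - (r + (u:ℝ) * T) ≤ h := by
        have : ((v:ℝ) - (u:ℝ)) * T < (h / T) * T := by
          exact mul_lt_mul_of_pos_right hdd hT
        rw [div_mul_cancel₀ _ (ne_of_gt hT)] at this
        nlinarith
      have := ho n (r + (u:ℝ) * T) (r + (v:ℝ) * T) hs hst ht hgap
      rw [hgBcoe, hgBcoe, hrep n u, hrep n v, dist_eq_norm, norm_sub_rev]
      exact this
    rcases le_total (u:ℝ) (v:ℝ) with hle | hle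
    · exact lt_of_le_of_lt (key u v hle huv) (by linarith)
    · rw [dist_comm]
      exact lt_of_le_of_lt (key v u hle (by rwa [dist_comm])) (by linarith)
  have hec : Equicontinuous ((↑) : (Set.range gB) → Set.Icc (0:ℝ) 1 → V) := by
    have h0 : UniformEquicontinuous (fun f : Set.range gB => ⇑(f.1)) := by
      have hfe : (fun f : Set.range gB => ⇑(f.1)) =
          (fun n (u : Set.Icc (0:ℝ) 1) => gB n u) ∘ (fun f : Set.range gB => f.2.choose) := by
        funext f
        exact congrArg (fun b : ↥(Set.Icc (0:ℝ) 1) →ᵇ V => ⇑b) f.2.choose_spec.symm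
      rw [hfe]
      exact huec.comp _
    exact h0.equicontinuous
  have hin : ∀ (f : ↥(Set.Icc (0:ℝ) 1) →ᵇ V) (x : Set.Icc (0:ℝ) 1), f ∈ Set.range gB →
      f x ∈ Metric.closedBall (0:V) R := by
    rintro f x ⟨n, rfl⟩
    rw [Metric.mem_closedBall, dist_zero_right, hgBcoe, hrep n x]
    have hx0 : (0:ℝ) ≤ x := x.2.1
    have hx1 : (x:ℝ) ≤ 1 := x.2.2
    exact hbound n _ (by nlinarith) (by nlinarith)
  have hAA : IsCompact (closure (Set.range gB)) :=
    BoundedContinuousFunction.arzela_ascoli (Metric.closedBall (0:V) R)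
      (isCompact_closedBall _ _) (Set.range gB) hin hec
  obtain ⟨gBl, hgBlmem, σ, hσ, hconv⟩ :=
    hAA.tendsto_subseq (fun n => subset_closure (mem_range_self (f := gB) n))
  set gl : C(Set.Icc (0:ℝ) 1, V) := gBl.toContinuousMap with hgl
  have hconv' : Filter.Tendsto (fun k => g (σ k)) Filter.atTop (nhds gl) := by
    rw [tendsto_iff_dist_tendsto_zero]
    have h1 := tendsto_iff_dist_tendsto_zero.1 hconv
    have h2 : ∀ k, dist (g (σ k)) gl = dist (gB (σ k)) gBl := fun k => rfl
    simpa only [h2, Function.comp_apply] using h1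
  have hglK : gl ∈ K := hK.mem_of_tendsto hconv'
    (Filter.Eventually.of_forall fun k => hgK (σ k))
  have hpt : ∀ u : Set.Icc (0:ℝ) 1,
      Filter.Tendsto (fun k => g (σ k) u) Filter.atTop (nhds (gl u)) := fun u =>
    ((continuous_eval_const u).tendsto gl).comp hconv'
  -- the limit path
  set yl : ℝ → V := fun t => gl (Set.projIcc (0:ℝ) 1 zero_le_one ((t - r) / T)) with hyl
  have hylcont : Continuous yl :=
    gl.continuous.comp (continuous_projIcc.comp
      ((continuous_id.sub continuous_const).div_const T))
  have hmemI : ∀ t : ℝ, r ≤ t → t ≤ r + T → (t - r) / T ∈ Set.Icc (0:ℝ) 1 := by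
    intro t h1 h2
    exact ⟨div_nonneg (by linarith) hT.le, (div_le_one hT).2 (by linarith)⟩
  have hptℝ : ∀ t : ℝ, r ≤ t → t ≤ r + T →
      Filter.Tendsto (fun k => y (σ k) t) Filter.atTop (nhds (yl t)) := by
    intro t h1 h2
    have hmemt := hmemI t h1 h2
    have hteq : r + ((t - r) / T) * T = t := by field_simp; ring
    have hyg : ∀ n, y n t = g n ⟨(t - r) / T, hmemt⟩ := by
      intro n
      have h3 := hrep n ⟨(t - r) / T, hmemt⟩
      rw [h3]
      congr 1
      exact hteq.symm
    have hylt : yl t = gl ⟨(t - r) / T, hmemt⟩ := by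
      rw [hyl]
      simp only
      rw [projIcc_of_mem zero_le_one hmemt]
    rw [hylt]
    simp only [hyg]
    exact hpt ⟨(t - r) / T, hmemt⟩
  have hyl0 : yl r = a := by
    have h1 := hptℝ r le_rfl (by linarith)
    have h2 : ∀ n, y n r = A n := fun n => (hy n).2.1
    have h3 : Filter.Tendsto (fun k => A (σ k)) Filter.atTop (nhds a) :=
      hlim.comp hσ.tendsto_atTop
    exact tendsto_nhds_unique (by simpa [h2] using h1) h3
  refine ⟨yl, ⟨hylcont.continuousOn, hyl0, ?_⟩, gl, hglK, ?_⟩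
  · intro s t hs hst ht
    have hs0 : (0:ℝ) ≤ s := hr.trans hs
    have hL : LipschitzWith (Real.toNNReal (1 + δ T)) (φ t s) := by
      apply LipschitzWith.of_dist_le_mul
      intro a' b'
      rw [dist_eq_norm, dist_eq_norm, Real.coe_toNNReal _ (by linarith)]
      exact hφ.lip hs0 hst a' b'
    have h1 := hptℝ t (hs.trans hst) ht
    have h2 := hptℝ s hs (hst.trans ht)
    have h3 : Filter.Tendsto (fun k => ‖y (σ k) t - φ t s (y (σ k) s)‖)
        Filter.atTop (nhds ‖yl t - φ t s (yl s)‖) :=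
      (h1.sub ((hL.continuous.tendsto _).comp h2)).norm
    exact le_of_tendsto h3 (Filter.Eventually.of_forall fun k => (hy (σ k)).2.2 hs hst ht)
  · intro u
    have hueq : ((r + (u:ℝ) * T) - r) / T = (u:ℝ) := by field_simp; ring
    rw [hyl]
    simp only
    rw [hueq, projIcc_of_mem zero_le_one u.2]


end
end

section
/- Under Hypothesis 1, let r ≥ 0, r' ∈ [0,T] and set s := r + r'. Let y ∈ G^{L_T}_φ(r,a) (defined on [r,r+T]) and let z ∈ G^{L_T}_φ(s, y_s) (defined on [s,s+T]). Define the spliced path x on [r,r+T] by x_t := y_t for r ≤ t ≤ s and x_t := z_t for s ≤ t ≤ r+T. Then x ∈ G^{L_T}_φ(r,a), i.e. x is continuous, x_r = a, and ‖x_t − φ_{t,τ}(x_τ)‖ ≤ L_T·‖N‖_∞·ϖ(ω_{τ,t}) for all r ≤ τ ≤ t ≤ r+T. -/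
open Set

noncomputable section

lemma remainder_zero {κ : ℝ} {ϖ : ℝ → ℝ} (hκ : κ < 2) (hϖ : IsRemainder κ ϖ) : ϖ 0 = 0 := by
  have hcw : ContinuousWithinAt ϖ (Ici 0) 0 := hϖ.contOn 0 (by simp)
  have h1 : Filter.Tendsto ϖ (nhdsWithin 0 (Set.Ioi 0)) (nhds (ϖ 0)) :=
    hcw.mono_left (nhdsWithin_mono _ Ioi_subset_Ici_self)
  have hhalf : Filter.Tendsto (fun x : ℝ => x / 2) (nhdsWithin 0 (Set.Ioi 0))
      (nhdsWithin 0 (Set.Ioi 0)) := by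
    apply tendsto_nhdsWithin_of_tendsto_nhds_of_eventually_within
    · have : Filter.Tendsto (fun x : ℝ => x / 2) (nhds (0:ℝ)) (nhds ((0:ℝ)/2)) :=
        (continuous_id.div_const 2).tendsto 0
      simpa using this.mono_left nhdsWithin_le_nhds
    · exact Filter.eventually_of_mem self_mem_nhdsWithin fun x hx => mem_Ioi.2 (half_pos hx)
  have h2 : Filter.Tendsto (fun x : ℝ => ϖ (x / 2)) (nhdsWithin 0 (Set.Ioi 0)) (nhds (ϖ 0)) :=
    h1.comp hhalf
  have hlim : 2 * ϖ 0 ≤ κ * ϖ 0 := by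
    refine le_of_tendsto_of_tendsto (h2.const_mul 2) (h1.const_mul κ) ?_
    exact Filter.eventually_of_mem self_mem_nhdsWithin fun x hx => hϖ.doubling x hx
  have := hϖ.nonneg 0 le_rfl
  nlinarith

lemma contPhiAlong {V : Type*} [NormedAddCommGroup V] {ω : ℝ → ℝ → ℝ} {ϖ : ℝ → ℝ}
    {N : V → ℝ} {δT : ℝ} {φ : ℝ → ℝ → V → V} (hφ : IsLipAlmostFlow ω ϖ N δT φ)
    {x : ℝ → V} {τ t : ℝ} (hτ : 0 ≤ τ) (hx : ContinuousOn x (Icc τ t)) :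
    ContinuousOn (fun u => φ t u (x u)) (Icc τ t) := by
  intro u₀ hu₀
  have hmaps : MapsTo (fun u : ℝ => ((u, t) : ℝ × ℝ)) (Icc τ t)
      {p : ℝ × ℝ | 0 ≤ p.1 ∧ p.1 ≤ p.2} := fun u hu => ⟨hτ.trans hu.1, hu.2⟩
  have hφu : ContinuousOn (fun u => φ t u (x u₀)) (Icc τ t) :=
    (hφ.cont (x u₀)).comp ((continuous_id.prodMk continuous_const).continuousOn) hmaps
  have hxa : Filter.Tendsto (fun u => ‖x u - x u₀‖) (nhdsWithin u₀ (Icc τ t)) (nhds 0) :=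
    tendsto_iff_norm_sub_tendsto_zero.1 (hx u₀ hu₀)
  have hφb : Filter.Tendsto (fun u => ‖φ t u (x u₀) - φ t u₀ (x u₀)‖)
      (nhdsWithin u₀ (Icc τ t)) (nhds 0) :=
    tendsto_iff_norm_sub_tendsto_zero.1 (hφu u₀ hu₀)
  rw [ContinuousWithinAt, tendsto_iff_norm_sub_tendsto_zero]
  apply squeeze_zero' (Filter.Eventually.of_forall fun u => norm_nonneg _)
    (g := fun u => (1 + δT) * ‖x u - x u₀‖ + ‖φ t u (x u₀) - φ t u₀ (x u₀)‖)
  · refine Filter.eventually_of_mem self_mem_nhdsWithin fun u hu => ?_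
    have htri := dist_triangle (φ t u (x u)) (φ t u (x u₀)) (φ t u₀ (x u₀))
    simp only [dist_eq_norm] at htri
    have hlip := hφ.lip (hτ.trans hu.1) hu.2 (x u) (x u₀)
    linarith
  · have := (hxa.const_mul (1 + δT)).add hφb
    simpa using this

/-- Lemma: stability of D-solutions under splicing.
Under Hypothesis 1, let `r ≥ 0`, `r' ∈ [0,T]`, `s := r + r'`. If `y ∈ G^{L_T}_φ(r,a)`
and `z ∈ G^{L_T}_φ(s, y_s)`, then the spliced path `x` (equal to `y` on `[r,s]` and to
`z` on `[s, r+T]`) belongs to `G^{L_T}_φ(r,a)`. -/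
theorem statement7 {V : Type*} [NormedAddCommGroup V] [NormedSpace ℝ V]
    [FiniteDimensional ℝ V]
    (T : ℝ)
    (ω : ℝ → ℝ → ℝ) (hω : ∀ S > (0:ℝ), IsControl S ω)
    (κ : ℝ) (hκ : κ ∈ Set.Ioo (0:ℝ) 1)
    (ϖ : ℝ → ℝ) (hϖ : IsRemainder κ ϖ)
    (δ : ℝ → ℝ) (hδ0 : ∀ S, 0 ≤ δ S) (hδmono : Monotone δ)
    (hδlim : Filter.Tendsto δ (nhdsWithin 0 (Set.Ioi 0)) (nhds 0))
    (N : V → ℝ) (hN1 : ∀ a, 1 ≤ N a)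
    (CN : NNReal) (hNlip : LipschitzWith CN N)
    (hNbdd : BddAbove (Set.range N))
    (φ : ℝ → ℝ → V → V) (hφ : IsLipAlmostFlow ω ϖ N (δ T) φ)
    (hT : 0 < T) (hsmall : κ * (1 + δ T) < 1)
    (LT : ℝ) (hLT : LT = 2 / (1 - κ * (1 + δ T)))
    (Nsup : ℝ) (hNsup : Nsup = sSup (Set.range N))
    (r r' : ℝ) (hr : 0 ≤ r) (hr' : r' ∈ Set.Icc (0:ℝ) T) (a : V)
    (y z : ℝ → V)
    (hy : y ∈ Gpaths φ ω ϖ (LT * Nsup) T r a)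
    (hz : z ∈ Gpaths φ ω ϖ (LT * Nsup) T (r + r') (y (r + r'))) :
    (fun t : ℝ => if t ≤ r + r' then y t else z t) ∈ Gpaths φ ω ϖ (LT * Nsup) T r a := by
  obtain ⟨hκ0, hκ1⟩ := hκ
  obtain ⟨hr'0, hr'T⟩ := hr'
  obtain ⟨hycont, hyr, hyD⟩ := hy
  obtain ⟨hzcont, hzs, hzD⟩ := hz
  have hδ0T : 0 ≤ δ T := hδ0 T
  set s := r + r' with hs
  set x : ℝ → V := fun t => if t ≤ s then y t else z t with hxdef
  have hrs : r ≤ s := le_add_of_nonneg_right hr'0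
  have hs0 : 0 ≤ s := hr.trans hrs
  have hsT : s ≤ r + T := by simp only [hs]; linarith
  have hTT : r + T ≤ s + T := by linarith
  have hxy : ∀ u, u ≤ s → x u = y u := fun u hu => if_pos hu
  have hxz : ∀ u, s ≤ u → x u = z u := by
    intro u hu
    by_cases h : u ≤ s
    · have hus : u = s := le_antisymm h hu
      simp only [hxdef, hus, if_pos (le_refl s)]
      exact hzs.symm
    · simp only [hxdef, if_neg h]
  have hzD' : ∀ ⦃τ t : ℝ⦄, s ≤ τ → τ ≤ t → t ≤ r + T →
      ‖z t - φ t τ (z τ)‖ ≤ LT * Nsup * ϖ (ω τ t) :=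
    fun τ t h1 h2 h3 => hzD h1 h2 (h3.trans hTT)
  -- control facts
  have hctrl := hω (r + T) (by linarith)
  have hωnn : ∀ ⦃u v : ℝ⦄, r ≤ u → u ≤ v → v ≤ r + T → 0 ≤ ω u v :=
    fun u v h1 h2 h3 => hctrl.nonneg (hr.trans h1) h2 h3
  have hωmono1 : ∀ ⦃τ u v : ℝ⦄, r ≤ τ → τ ≤ u → u ≤ v → v ≤ r + T → ω τ u ≤ ω τ v := by
    intro τ u v h1 h2 h3 h4
    have hsa := hctrl.superadd (hr.trans h1) h2 h3 h4
    have hnn := hctrl.nonneg (hr.trans (h1.trans h2)) h3 h4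
    linarith
  have hωmono2 : ∀ ⦃τ u v : ℝ⦄, r ≤ τ → τ ≤ u → u ≤ v → v ≤ r + T → ω u v ≤ ω τ v := by
    intro τ u v h1 h2 h3 h4
    have hsa := hctrl.superadd (hr.trans h1) h2 h3 h4
    have hnn := hctrl.nonneg (hr.trans h1) h2 (h3.trans h4)
    linarith
  -- remainder facts
  have hϖ0 : ϖ 0 = 0 := remainder_zero (by linarith) hϖ
  have hϖmono : MonotoneOn ϖ (Ici 0) := hϖ.strictMonoOn.monotoneOn
  have hϖnn := hϖ.nonneg
  -- N facts
  have hNle : ∀ b : V, N b ≤ Nsup := fun b => hNsup ▸ le_csSup hNbdd ⟨b, rfl⟩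
  have hNsup1 : (1:ℝ) ≤ Nsup := (hN1 0).trans (hNle 0)
  have hNsup0 : (0:ℝ) ≤ Nsup := by linarith
  have hLT0 : 0 < LT := by
    rw [hLT]; apply div_pos two_pos; linarith
  -- continuity of the spliced path
  have hxcont : ContinuousOn x (Icc r (r + T)) := by
    intro t₀ ht₀
    have hsplit : nhdsWithin t₀ (Icc r (r + T)) =
        nhdsWithin t₀ (Icc r (r + T) ∩ Iic s) ⊔ nhdsWithin t₀ (Icc r (r + T) ∩ Ioi s) := by
      rw [← nhdsWithin_union, ← inter_union_distrib_left, Iic_union_Ioi, inter_univ]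
    rw [ContinuousWithinAt, hsplit, Filter.tendsto_sup]
    constructor
    · by_cases h : t₀ ≤ s
      · have hy' : Filter.Tendsto y (nhdsWithin t₀ (Icc r (r + T) ∩ Iic s)) (nhds (y t₀)) :=
          (hycont t₀ ht₀).mono inter_subset_left
        rw [hxy t₀ h]
        exact hy'.congr' (Filter.eventually_of_mem self_mem_nhdsWithin
          fun u hu => (hxy u hu.2).symm)
      · have hbot : nhdsWithin t₀ (Icc r (r + T) ∩ Iic s) = ⊥ := by
          rw [← Filter.not_neBot, ← mem_closure_iff_nhdsWithin_neBot]
          intro hmem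
          exact h (closure_minimal inter_subset_right isClosed_Iic hmem)
        rw [hbot]; exact Filter.tendsto_bot
    · by_cases h : s ≤ t₀
      · have hsub : Icc r (r + T) ∩ Ioi s ⊆ Icc s (s + T) :=
          fun u hu => ⟨le_of_lt hu.2, hu.1.2.trans hTT⟩
        have hz' : Filter.Tendsto z (nhdsWithin t₀ (Icc r (r + T) ∩ Ioi s)) (nhds (z t₀)) :=
          (hzcont t₀ ⟨h, ht₀.2.trans hTT⟩).mono hsub
        rw [hxz t₀ h]
        exact hz'.congr' (Filter.eventually_of_mem self_mem_nhdsWithin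
          fun u hu => (hxz u (le_of_lt hu.2)).symm)
      · have hbot : nhdsWithin t₀ (Icc r (r + T) ∩ Ioi s) = ⊥ := by
          rw [← Filter.not_neBot, ← mem_closure_iff_nhdsWithin_neBot]
          intro hmem
          exact h (closure_minimal (fun u hu => Ioi_subset_Ici_self hu.2) isClosed_Ici hmem)
        rw [hbot]; exact Filter.tendsto_bot
  -- triangle-type decomposition
  have chasles : ∀ ⦃τ u t : ℝ⦄, r ≤ τ → τ ≤ u → u ≤ t → t ≤ r + T →
      ‖x t - φ t τ (x τ)‖ ≤ ‖x t - φ t u (x u)‖ + (1 + δ T) * ‖x u - φ u τ (x τ)‖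
        + Nsup * ϖ (ω τ t) := by
    intro τ u t h1 h2 h3 h4
    have e1 : ‖x t - φ t τ (x τ)‖ ≤ ‖x t - φ t u (x u)‖
        + ‖φ t u (x u) - φ t u (φ u τ (x τ))‖ + ‖φ t u (φ u τ (x τ)) - φ t τ (x τ)‖ := by
      have d1 := dist_triangle4 (x t) (φ t u (x u)) (φ t u (φ u τ (x τ))) (φ t τ (x τ))
      simpa [dist_eq_norm] using d1
    have e2 := hφ.lip (hr.trans (h1.trans h2)) h3 (x u) (φ u τ (x τ))
    have e3 := hφ.almost (hr.trans h1) h2 h3 (x τ)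
    have e4 : N (x τ) * ϖ (ω τ t) ≤ Nsup * ϖ (ω τ t) :=
      mul_le_mul_of_nonneg_right (hNle _) (hϖnn _ (hωnn h1 (h2.trans h3) h4))
    linarith
  -- base estimate with a crude constant
  have base : ∀ ⦃τ t : ℝ⦄, r ≤ τ → τ ≤ t → t ≤ r + T →
      ‖x t - φ t τ (x τ)‖ ≤ ((2 + δ T) * LT + 1) * Nsup * ϖ (ω τ t) := by
    intro τ t h1 h2 h3
    have hϖc : 0 ≤ ϖ (ω τ t) := hϖnn _ (hωnn h1 h2 h3)
    by_cases hts : t ≤ s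
    · have hb := hyD h1 h2 h3
      rw [hxy t hts, hxy τ (h2.trans hts)]
      have e1 : 0 ≤ LT * (Nsup * ϖ (ω τ t)) := mul_nonneg hLT0.le (mul_nonneg hNsup0 hϖc)
      have e2 : 0 ≤ δ T * (LT * (Nsup * ϖ (ω τ t))) := mul_nonneg hδ0T e1
      have e3 : 0 ≤ Nsup * ϖ (ω τ t) := mul_nonneg hNsup0 hϖc
      linarith
    · push_neg at hts
      by_cases hst : s ≤ τ
      · have hb := hzD' hst h2 h3
        rw [hxz t (hst.trans h2), hxz τ hst]
        have e1 : 0 ≤ LT * (Nsup * ϖ (ω τ t)) := mul_nonneg hLT0.le (mul_nonneg hNsup0 hϖc)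
        have e2 : 0 ≤ δ T * (LT * (Nsup * ϖ (ω τ t))) := mul_nonneg hδ0T e1
        have e3 : 0 ≤ Nsup * ϖ (ω τ t) := mul_nonneg hNsup0 hϖc
        linarith
      · push_neg at hst
        have h5 := chasles h1 hst.le hts.le h3
        have p1 : ‖x t - φ t s (x s)‖ ≤ LT * Nsup * ϖ (ω s t) := by
          rw [hxz t hts.le, hxz s le_rfl]
          exact hzD' le_rfl hts.le h3
        have p2 : ‖x s - φ s τ (x τ)‖ ≤ LT * Nsup * ϖ (ω τ s) := by
          rw [hxy s le_rfl, hxy τ hst.le]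
          exact hyD h1 hst.le hsT
        have q1 : ϖ (ω s t) ≤ ϖ (ω τ t) :=
          hϖmono (hωnn hrs hts.le h3) (hωnn h1 h2 h3) (hωmono2 h1 hst.le hts.le h3)
        have q2 : ϖ (ω τ s) ≤ ϖ (ω τ t) :=
          hϖmono (hωnn h1 hst.le hsT) (hωnn h1 h2 h3) (hωmono1 h1 hst.le hts.le h3)
        have hLN : 0 ≤ LT * Nsup := mul_nonneg hLT0.le hNsup0
        have q1' : LT * Nsup * ϖ (ω s t) ≤ LT * Nsup * ϖ (ω τ t) :=
          mul_le_mul_of_nonneg_left q1 hLN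
        have q2' : LT * Nsup * ϖ (ω τ s) ≤ LT * Nsup * ϖ (ω τ t) :=
          mul_le_mul_of_nonneg_left q2 hLN
        have p2' : (1 + δ T) * ‖x s - φ s τ (x τ)‖
            ≤ (1 + δ T) * (LT * Nsup * ϖ (ω τ t)) :=
          mul_le_mul_of_nonneg_left (p2.trans q2') (by linarith)
        linarith [h5, p1.trans q1', p2']
  -- the improvement step
  have hstep : ∀ C : ℝ, 0 ≤ C →
      (∀ ⦃τ t : ℝ⦄, r ≤ τ → τ ≤ t → t ≤ r + T →
        ‖x t - φ t τ (x τ)‖ ≤ C * Nsup * ϖ (ω τ t)) →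
      ∀ ⦃τ t : ℝ⦄, r ≤ τ → τ ≤ t → t ≤ r + T →
        ‖x t - φ t τ (x τ)‖ ≤ (κ * (2 + δ T) / 2 * C + 1) * Nsup * ϖ (ω τ t) := by
    intro C hC hIH τ t h1 h2 h3
    have hτ0 : 0 ≤ τ := hr.trans h1
    have hc0 : 0 ≤ ω τ t := hωnn h1 h2 h3
    rcases eq_or_lt_of_le hc0 with hc0' | hc0'
    · have hb := hIH h1 h2 h3
      rw [← hc0', hϖ0, mul_zero] at hb ⊢
      exact hb
    · set c := ω τ t with hc
      have hKne : (τ : ℝ) ∈ {u : ℝ | u ∈ Icc τ t ∧ ω τ u ≤ c / 2} := by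
        refine ⟨left_mem_Icc.2 h2, ?_⟩
        rw [hctrl.diag hτ0 (h2.trans h3)]
        linarith
      have hKbdd : BddAbove {u : ℝ | u ∈ Icc τ t ∧ ω τ u ≤ c / 2} :=
        ⟨t, fun u hu => hu.1.2⟩
      set u₀ := sSup {u : ℝ | u ∈ Icc τ t ∧ ω τ u ≤ c / 2} with hu₀
      have hτu : τ ≤ u₀ := le_csSup hKbdd hKne
      have hut : u₀ ≤ t := csSup_le ⟨τ, hKne⟩ (fun u hu => hu.1.2)
      have hu₀mem : u₀ ∈ Icc τ t := ⟨hτu, hut⟩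
      have hleft : ∀ u, u ∈ Ico τ u₀ → ω τ u ≤ c / 2 := by
        intro u hu
        obtain ⟨v, hvK, hv⟩ := exists_lt_of_lt_csSup ⟨τ, hKne⟩ hu.2
        exact le_trans (hωmono1 h1 hu.1 hv.le (hvK.1.2.trans h3)) hvK.2
      have hright : ∀ u, u ∈ Ioc u₀ t → ω u t ≤ c / 2 := by
        intro u hu
        have humem : u ∈ Icc τ t := ⟨hτu.trans hu.1.le, hu.2⟩
        have hnK : ¬ (ω τ u ≤ c / 2) := by
          intro hcon
          exact absurd (le_csSup hKbdd ⟨humem, hcon⟩) (not_le.2 hu.1)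
        push_neg at hnK
        have hsa := hctrl.superadd hτ0 humem.1 hu.2 h3
        linarith
      have hxconts : ContinuousOn x (Icc τ t) := hxcont.mono (Icc_subset_Icc h1 h3)
      have hB : 0 ≤ C * Nsup * ϖ (c / 2) :=
        mul_nonneg (mul_nonneg hC hNsup0) (hϖnn _ (by linarith))
      have hCN : 0 ≤ C * Nsup := mul_nonneg hC hNsup0
      have hbound2 : ‖x u₀ - φ u₀ τ (x τ)‖ ≤ C * Nsup * ϖ (c / 2) := by
        rcases eq_or_lt_of_le hτu with he | hlt
        · rw [← he, hφ.flow_id hτ0, sub_self, norm_zero]; exact hB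
        · have hg2cont : ContinuousOn (fun u => ‖x u - φ u τ (x τ)‖) (Icc τ t) := by
            have hcφ : ContinuousOn (fun u => φ u τ (x τ)) (Icc τ t) :=
              (hφ.cont (x τ)).comp ((continuous_const.prodMk continuous_id).continuousOn)
                (fun u hu => ⟨hτ0, hu.1⟩)
            exact (hxconts.sub hcφ).norm
          have hne : (nhdsWithin u₀ (Ico τ u₀)).NeBot := by
            rw [← mem_closure_iff_nhdsWithin_neBot, closure_Ico hlt.ne]
            exact right_mem_Icc.2 hlt.le
          have htd : Filter.Tendsto (fun u => ‖x u - φ u τ (x τ)‖)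
              (nhdsWithin u₀ (Ico τ u₀)) (nhds (‖x u₀ - φ u₀ τ (x τ)‖)) :=
            (hg2cont u₀ hu₀mem).mono (fun u hu => ⟨hu.1, hu.2.le.trans hut⟩)
          refine le_of_tendsto htd (Filter.eventually_of_mem self_mem_nhdsWithin
            fun u hu => ?_)
          have hiu := hIH h1 hu.1 ((hu.2.le.trans hut).trans h3)
          refine hiu.trans (mul_le_mul_of_nonneg_left
            (hϖmono (hωnn h1 hu.1 ((hu.2.le.trans hut).trans h3)) (by simp; linarith)
              (hleft u hu)) hCN)
      have hbound1 : ‖x t - φ t u₀ (x u₀)‖ ≤ C * Nsup * ϖ (c / 2) := by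
        rcases eq_or_lt_of_le hut with he | hlt
        · rw [he, hφ.flow_id (hτ0.trans h2), sub_self, norm_zero]; exact hB
        · have hg1cont : ContinuousOn (fun u => ‖x t - φ t u (x u)‖) (Icc τ t) :=
            (continuousOn_const.sub (contPhiAlong hφ hτ0 hxconts)).norm
          have hne : (nhdsWithin u₀ (Ioc u₀ t)).NeBot := by
            rw [← mem_closure_iff_nhdsWithin_neBot, closure_Ioc hlt.ne]
            exact left_mem_Icc.2 hlt.le
          have htd : Filter.Tendsto (fun u => ‖x t - φ t u (x u)‖)
              (nhdsWithin u₀ (Ioc u₀ t)) (nhds (‖x t - φ t u₀ (x u₀)‖)) :=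
            (hg1cont u₀ hu₀mem).mono (fun u hu => ⟨hτu.trans hu.1.le, hu.2⟩)
          refine le_of_tendsto htd (Filter.eventually_of_mem self_mem_nhdsWithin
            fun u hu => ?_)
          have hiu := hIH (h1.trans (hτu.trans hu.1.le)) hu.2 h3
          refine hiu.trans (mul_le_mul_of_nonneg_left
            (hϖmono (hωnn (h1.trans (hτu.trans hu.1.le)) hu.2 h3) (by simp; linarith)
              (hright u hu)) hCN)
      have hch := chasles h1 hτu hut h3
      have hdou : ϖ (c / 2) ≤ κ / 2 * ϖ c := by
        have := hϖ.doubling c hc0'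
        linarith
      have hϖc : 0 ≤ ϖ c := hϖnn c hc0
      have h1' : C * Nsup * ϖ (c / 2) ≤ C * Nsup * (κ / 2 * ϖ c) :=
        mul_le_mul_of_nonneg_left hdou hCN
      have h2' : (1 + δ T) * ‖x u₀ - φ u₀ τ (x τ)‖
          ≤ (1 + δ T) * (C * Nsup * (κ / 2 * ϖ c)) :=
        mul_le_mul_of_nonneg_left (hbound2.trans h1') (by linarith)
      linarith [hch, hbound1.trans h1', h2']
  -- iterate the improvement
  have hκδ : κ * (2 + δ T) = κ * (1 + δ T) + κ := by ring
  have hden : 0 < 2 - κ * (2 + δ T) := by rw [hκδ]; linarith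
  have hCstar0 : 0 < 2 / (2 - κ * (2 + δ T)) := div_pos two_pos hden
  have hCstarLT : 2 / (2 - κ * (2 + δ T)) ≤ LT := by
    rw [hLT, div_le_div_iff₀ hden (by linarith)]
    rw [hκδ] at *
    nlinarith
  have hC0LT : LT ≤ (2 + δ T) * LT + 1 := by
    have := mul_nonneg hδ0T hLT0.le
    nlinarith
  have ha0 : 0 ≤ κ * (2 + δ T) / 2 := by positivity
  have ha1 : κ * (2 + δ T) / 2 < 1 := by rw [hκδ]; linarith
  have hXnn : 0 ≤ (2 + δ T) * LT + 1 - 2 / (2 - κ * (2 + δ T)) := by linarith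
  have key : ∀ n : ℕ, ∀ ⦃τ t : ℝ⦄, r ≤ τ → τ ≤ t → t ≤ r + T →
      ‖x t - φ t τ (x τ)‖ ≤ ((κ * (2 + δ T) / 2) ^ n
        * ((2 + δ T) * LT + 1 - 2 / (2 - κ * (2 + δ T))) + 2 / (2 - κ * (2 + δ T)))
        * Nsup * ϖ (ω τ t) := by
    intro n
    induction n with
    | zero =>
      intro τ t h1 h2 h3
      have hb := base h1 h2 h3
      have : ((κ * (2 + δ T) / 2) ^ 0
          * ((2 + δ T) * LT + 1 - 2 / (2 - κ * (2 + δ T))) + 2 / (2 - κ * (2 + δ T)))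
          = (2 + δ T) * LT + 1 := by rw [pow_zero]; ring
      rw [this]
      exact hb
    | succ n ih =>
      have hCn0 : 0 ≤ (κ * (2 + δ T) / 2) ^ n
          * ((2 + δ T) * LT + 1 - 2 / (2 - κ * (2 + δ T))) + 2 / (2 - κ * (2 + δ T)) := by
        have := mul_nonneg (pow_nonneg ha0 n) hXnn
        linarith
      intro τ t h1 h2 h3
      have hb := hstep _ hCn0 ih h1 h2 h3
      have heq : κ * (2 + δ T) / 2 * ((κ * (2 + δ T) / 2) ^ n
          * ((2 + δ T) * LT + 1 - 2 / (2 - κ * (2 + δ T))) + 2 / (2 - κ * (2 + δ T))) + 1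
          = (κ * (2 + δ T) / 2) ^ (n + 1)
          * ((2 + δ T) * LT + 1 - 2 / (2 - κ * (2 + δ T))) + 2 / (2 - κ * (2 + δ T)) := by
        rw [pow_succ]
        have hfix : κ * (2 + δ T) / 2 * (2 / (2 - κ * (2 + δ T))) + 1
            = 2 / (2 - κ * (2 + δ T)) := by
          field_simp
          ring
        linear_combination hfix
      rw [heq] at hb
      exact hb
  -- conclude
  refine ⟨hxcont, ?_, ?_⟩
  · rw [hxy r hrs]; exact hyr
  · intro τ t h1 h2 h3
    have hϖc : 0 ≤ Nsup * ϖ (ω τ t) := mul_nonneg hNsup0 (hϖnn _ (hωnn h1 h2 h3))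
    have hl : Filter.Tendsto (fun n : ℕ => ((κ * (2 + δ T) / 2) ^ n
        * ((2 + δ T) * LT + 1 - 2 / (2 - κ * (2 + δ T))) + 2 / (2 - κ * (2 + δ T)))
        * Nsup * ϖ (ω τ t)) Filter.atTop
        (nhds (((0:ℝ) * ((2 + δ T) * LT + 1 - 2 / (2 - κ * (2 + δ T)))
          + 2 / (2 - κ * (2 + δ T))) * Nsup * ϖ (ω τ t))) := by
      apply Filter.Tendsto.mul_const
      apply Filter.Tendsto.mul_const
      exact ((tendsto_pow_atTop_nhds_zero_of_lt_one ha0 ha1).mul_const _).add_const _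
    have hle : ‖x t - φ t τ (x τ)‖ ≤ ((0:ℝ) * ((2 + δ T) * LT + 1
        - 2 / (2 - κ * (2 + δ T))) + 2 / (2 - κ * (2 + δ T))) * Nsup * ϖ (ω τ t) :=
      ge_of_tendsto hl (Filter.Eventually.of_forall fun n => key n h1 h2 h3)
    calc ‖x t - φ t τ (x τ)‖
        ≤ ((0:ℝ) * ((2 + δ T) * LT + 1 - 2 / (2 - κ * (2 + δ T)))
          + 2 / (2 - κ * (2 + δ T))) * Nsup * ϖ (ω τ t) := hle
      _ = 2 / (2 - κ * (2 + δ T)) * (Nsup * ϖ (ω τ t)) := by ring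
      _ ≤ LT * (Nsup * ϖ (ω τ t)) := mul_le_mul_of_nonneg_right hCstarLT hϖc
      _ = LT * Nsup * ϖ (ω τ t) := by ring

end
end
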